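/- arXiv:2509.02200 — 7 statements merged into one kernel-verified Lean document; each statement's English description precedes it below -/
import Mathlib

section
/- Let Z ~ MS(1, ν), σ > 0, and let f : E₀* → [0, ∞] be measurable. Then for every x ∈ E₀*: E[f(x ⊕ σZ)] = e^{−σ μ[0,x]^c} f(x) + e^{−σ μ[0,x]^c} ∑_{n=1}^∞ (σⁿ / n!) ∫_{([0,x]^c)ⁿ} f(x ⊕ y₁ ⊕ ⋯ ⊕ yₙ) dμ(y₁)⋯dμ(yₙ), where [0,x]^c := {y ∈ E₀ : y ≰ x} and the equality holds in [0, ∞]. -/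
open MeasureTheory Filter

/-- Iterated `n`-fold integral `∫ ⋯ ∫ f (x ⊔ y₁ ⊔ ⋯ ⊔ yₙ) dκ(y₁) ⋯ dκ(yₙ)`. -/
noncomputable def iterMaxLintegral {d : ℕ} (κ : Measure (Fin d → ℝ))
    (f : (Fin d → ℝ) → ENNReal) : ℕ → (Fin d → ℝ) → ENNReal
  | 0, x => f x
  | n + 1, x => ∫⁻ y, iterMaxLintegral κ f n (x ⊔ y) ∂κ

section Aux

/-- `∫_a^∞ r^{-2} dr = a⁻¹` (lower Lebesgue integral version). -/
lemma lint_inv_sq {a : ℝ} (ha : 0 < a) :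
    ∫⁻ r in Set.Ioi a, ENNReal.ofReal ((r ^ 2)⁻¹) = ENNReal.ofReal a⁻¹ := by
  have hint : IntegrableOn (fun r : ℝ => (r ^ 2)⁻¹) (Set.Ioi a) := by
    refine (integrableOn_Ioi_rpow_of_lt (by norm_num : (-2:ℝ) < -1) ha).congr_fun
      (fun r hr => ?_) measurableSet_Ioi
    have hr0 : 0 < r := lt_trans ha hr
    dsimp only
    rw [Real.rpow_neg hr0.le, show ((2:ℝ) : ℝ) = ((2:ℕ) : ℝ) by norm_num,
      Real.rpow_natCast]
  have hval : ∫ r in Set.Ioi a, (r ^ 2)⁻¹ = a⁻¹ := by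
    have hderiv : ∀ r ∈ Set.Ioi a, HasDerivAt (fun s : ℝ => -s⁻¹) ((r ^ 2)⁻¹) r := by
      intro r hr
      have hr0 : r ≠ 0 := (lt_trans ha hr).ne'
      simpa using (hasDerivAt_inv hr0).fun_neg
    have hcont : ContinuousWithinAt (fun s : ℝ => -s⁻¹) (Set.Ici a) a :=
      ((continuousAt_inv₀ ha.ne').neg).continuousWithinAt
    have htend : Tendsto (fun s : ℝ => -s⁻¹) atTop (nhds 0) := by
      simpa using (tendsto_inv_atTop_zero (𝕜 := ℝ)).neg
    have := integral_Ioi_of_hasDerivAt_of_tendsto hcont hderiv hint htend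
    simpa using this
  rw [← hval, ← ofReal_integral_eq_lintegral_ofReal hint]
  exact Filter.Eventually.of_forall fun r => inv_nonneg.2 (sq_nonneg r)

/-- The Borel σ-algebra on `Fin d → ℝ` is generated by the lower boxes `Iic t`. -/
lemma gen_Iic (d : ℕ) :
    (inferInstance : MeasurableSpace (Fin d → ℝ)) =
      MeasurableSpace.generateFrom {s : Set (Fin d → ℝ) | ∃ t, s = Set.Iic t} := by
  set C := {s : Set (Fin d → ℝ) | ∃ t, s = Set.Iic t} with hC
  refine le_antisymm ?_ (MeasurableSpace.generateFrom_le ?_)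
  · have key : ∀ j : Fin d, @Measurable _ _ (MeasurableSpace.generateFrom C) _
        (fun y : Fin d → ℝ => y j) := by
      intro j
      letI m : MeasurableSpace (Fin d → ℝ) := MeasurableSpace.generateFrom C
      apply measurable_of_Iic
      intro a
      have hset : (fun y : Fin d → ℝ => y j) ⁻¹' Set.Iic a
          = ⋃ m : ℕ, Set.Iic (fun k => if k = j then a else (m : ℝ)) := by
        ext y
        simp only [Set.mem_preimage, Set.mem_Iic, Set.mem_iUnion]
        constructor
        · intro hy
          obtain ⟨m, hm⟩ : ∃ m : ℕ, ∀ k, y k ≤ m :=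
            ⟨⌈∑ k, |y k|⌉₊, fun k =>
              le_trans (le_trans (le_abs_self _)
                (Finset.single_le_sum (fun i _ => abs_nonneg (y i)) (Finset.mem_univ k)))
                (Nat.le_ceil _)⟩
          refine ⟨m, fun k => ?_⟩
          by_cases hk : k = j
          · subst hk; simpa using hy
          · simpa [hk] using hm k
        · rintro ⟨m, hm⟩
          simpa using hm j
      rw [hset]
      exact MeasurableSet.iUnion fun m =>
        MeasurableSpace.measurableSet_generateFrom ⟨_, rfl⟩
    have hid : @Measurable _ _ (MeasurableSpace.generateFrom C) _
        (id : (Fin d → ℝ) → (Fin d → ℝ)) := by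
      refine (@measurable_pi_iff _ _ _ (MeasurableSpace.generateFrom C) _ _).mpr ?_
      exact key
    intro s hs
    simpa using hid hs
  · rintro s ⟨t, rfl⟩
    exact measurableSet_Iic


noncomputable def bindMax {d : ℕ} (κ : Measure (Fin d → ℝ)) (x : Fin d → ℝ) :
    ℕ → Measure (Fin d → ℝ)
  | 0 => Measure.dirac x
  | n + 1 => (bindMax κ x n).bind (fun z => Measure.map (fun y => z ⊔ y) κ)

lemma measurable_sup_pair {d : ℕ} :
    Measurable (fun p : (Fin d → ℝ) × (Fin d → ℝ) => p.1 ⊔ p.2) := by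
  apply measurable_pi_lambda
  intro j
  exact ((measurable_pi_apply j).comp measurable_fst).sup
    ((measurable_pi_apply j).comp measurable_snd)

lemma measurable_sup_left {d : ℕ} (z : Fin d → ℝ) :
    Measurable (fun y : Fin d → ℝ => z ⊔ y) :=
  measurable_sup_pair.comp measurable_prodMk_left

lemma measurable_bindMax_kernel {d : ℕ} (κ : Measure (Fin d → ℝ)) [SFinite κ] :
    Measurable fun z : Fin d → ℝ => Measure.map (fun y => z ⊔ y) κ := by
  apply Measure.measurable_of_measurable_coe
  intro s hs
  simp_rw [Measure.map_apply (measurable_sup_left _) hs]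
  exact measurable_measure_prodMk_left (measurable_sup_pair hs)

lemma iter_shift {d : ℕ} (κ : Measure (Fin d → ℝ)) (f : (Fin d → ℝ) → ENNReal) :
    ∀ (n : ℕ) (z : Fin d → ℝ),
      iterMaxLintegral κ (fun w => ∫⁻ y, f (w ⊔ y) ∂κ) n z = iterMaxLintegral κ f (n + 1) z
  | 0, z => by simp [iterMaxLintegral]
  | n + 1, z => by
      simp only [iterMaxLintegral]
      exact lintegral_congr fun y => iter_shift κ f n (z ⊔ y)

lemma lint_bindMax {d : ℕ} (κ : Measure (Fin d → ℝ)) [SFinite κ] (x : Fin d → ℝ) :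
    ∀ (n : ℕ) {f : (Fin d → ℝ) → ENNReal}, Measurable f →
      ∫⁻ y, f y ∂(bindMax κ x n) = iterMaxLintegral κ f n x
  | 0, f, hf => by
      simp [bindMax, iterMaxLintegral, lintegral_dirac' x hf]
  | n + 1, f, hf => by
      have hF : Measurable fun z : Fin d → ℝ => ∫⁻ y, f (z ⊔ y) ∂κ :=
        Measurable.lintegral_prod_right (hf.comp measurable_sup_pair)
      rw [bindMax, Measure.lintegral_bind (measurable_bindMax_kernel κ).aemeasurable hf.aemeasurable]
      have h1 : ∀ z : Fin d → ℝ,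
          ∫⁻ y, f y ∂(Measure.map (fun y => z ⊔ y) κ) = ∫⁻ y, f (z ⊔ y) ∂κ :=
        fun z => lintegral_map hf (measurable_sup_left z)
      rw [lintegral_congr h1, lint_bindMax κ x n hF, iter_shift]

lemma iter_indicator {d : ℕ} (κ : Measure (Fin d → ℝ)) (t : Fin d → ℝ) :
    ∀ (n : ℕ) (z : Fin d → ℝ),
      iterMaxLintegral κ ((Set.Iic t).indicator 1) n z
        = (Set.Iic t).indicator (fun _ => (κ (Set.Iic t)) ^ n) z
  | 0, z => by
      by_cases h : z ∈ Set.Iic t <;>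
        simp [iterMaxLintegral, Set.indicator_apply, h]
  | n + 1, z => by
      simp only [iterMaxLintegral]
      rw [lintegral_congr fun y => iter_indicator κ t n (z ⊔ y)]
      by_cases hz : z ≤ t
      · have h2 : ∀ y, (Set.Iic t).indicator (fun _ => (κ (Set.Iic t)) ^ n) (z ⊔ y)
            = (Set.Iic t).indicator (fun _ => (κ (Set.Iic t)) ^ n) y := by
          intro y
          by_cases hy : y ∈ Set.Iic t
          · rw [Set.indicator_of_mem hy,
              Set.indicator_of_mem (Set.mem_Iic.mpr (sup_le hz (Set.mem_Iic.mp hy)))]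
          · rw [Set.indicator_of_notMem hy, Set.indicator_of_notMem
              (fun h => hy (Set.mem_Iic.mpr (le_trans le_sup_right (Set.mem_Iic.mp h))))]
        rw [lintegral_congr h2, lintegral_indicator measurableSet_Iic, setLIntegral_const,
          Set.indicator_of_mem (Set.mem_Iic.mpr hz), pow_succ]
      · have h2 : ∀ y, (Set.Iic t).indicator (fun _ => (κ (Set.Iic t)) ^ n) (z ⊔ y)
            = (0 : ENNReal) := by
          intro y
          exact Set.indicator_of_notMem
            (fun h => hz (le_trans le_sup_left (Set.mem_Iic.mp h))) _
        rw [lintegral_congr h2, lintegral_zero,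
          Set.indicator_of_notMem (fun h => hz (Set.mem_Iic.mp h))]

lemma iter_one {d : ℕ} (κ : Measure (Fin d → ℝ)) :
    ∀ (n : ℕ) (z : Fin d → ℝ),
      iterMaxLintegral κ (fun _ => (1 : ENNReal)) n z = (κ Set.univ) ^ n
  | 0, z => by simp [iterMaxLintegral]
  | n + 1, z => by
      simp only [iterMaxLintegral]
      rw [lintegral_congr fun y => iter_one κ n (z ⊔ y), lintegral_const, pow_succ]

lemma rho_sum {σ L : ℝ} (hσ : 0 ≤ σ) {β : ENNReal} (hβ : β ≠ ⊤) :
    ENNReal.ofReal (Real.exp (-(σ * L)))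
      + ∑' n : ℕ, (ENNReal.ofReal (Real.exp (-(σ * L)))
          * ENNReal.ofReal (σ ^ (n + 1) / (Nat.factorial (n + 1) : ℝ))) * β ^ (n + 1)
      = ENNReal.ofReal (Real.exp (σ * β.toReal - σ * L)) := by
  set c := ENNReal.ofReal (Real.exp (-(σ * L))) with hc
  set b := β.toReal with hb
  have hb0 : 0 ≤ b := ENNReal.toReal_nonneg
  have hβb : β = ENNReal.ofReal b := (ENNReal.ofReal_toReal hβ).symm
  set a : ℕ → ENNReal := fun k => ENNReal.ofReal ((σ * b) ^ k / (Nat.factorial k : ℝ)) with ha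
  have key : ∀ n : ℕ,
      (c * ENNReal.ofReal (σ ^ (n + 1) / (Nat.factorial (n + 1) : ℝ))) * β ^ (n + 1)
        = c * a (n + 1) := by
    intro n
    rw [hβb, ← ENNReal.ofReal_pow hb0, mul_assoc,
      ← ENNReal.ofReal_mul (by positivity : (0:ℝ) ≤ σ ^ (n + 1) / (Nat.factorial (n + 1) : ℝ))]
    congr 2
    rw [mul_pow]
    ring
  rw [tsum_congr key, ENNReal.tsum_mul_left]
  have ha0 : a 0 = 1 := by simp [ha]
  have hsum : c + c * ∑' n : ℕ, a (n + 1) = c * ∑' k : ℕ, a k := by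
    rw [tsum_eq_zero_add' (f := a) ENNReal.summable, mul_add, ha0, mul_one]
  rw [hsum]
  have hexp : ∑' k : ℕ, a k = ENNReal.ofReal (Real.exp (σ * b)) := by
    rw [← ENNReal.ofReal_tsum_of_nonneg (fun n => by positivity)
      (Real.summable_pow_div_factorial (σ * b))]
    congr 1
    rw [Real.exp_eq_exp_ℝ, NormedSpace.exp_eq_tsum_div]
  rw [hexp, hc, ← ENNReal.ofReal_mul (Real.exp_nonneg _), ← Real.exp_add]
  congr 1
  ring



lemma nu_mom_lint {d : ℕ} (ν : Measure (Fin d → ℝ)) [IsFiniteMeasure ν]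
    (hae : ∀ᵐ u ∂ν, u ∈ Set.Icc (0 : Fin d → ℝ) 1)
    (hmom : ∀ j : Fin d, ∫ u, u j ∂ν = 1) (j : Fin d) :
    ∫⁻ u, ENNReal.ofReal (u j) ∂ν = 1 := by
  have hint : Integrable (fun u : Fin d → ℝ => u j) ν := by
    refine ⟨(measurable_pi_apply j).aestronglyMeasurable,
      HasFiniteIntegral.of_bounded (C := 1) ?_⟩
    filter_upwards [hae] with u hu
    rw [Real.norm_eq_abs, abs_of_nonneg (hu.1 j)]
    exact hu.2 j
  have hpos : 0 ≤ᶠ[ae ν] fun u : Fin d → ℝ => u j := by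
    filter_upwards [hae] with u hu using hu.1 j
  rw [← ofReal_integral_eq_lintegral_ofReal hint hpos, hmom j, ENNReal.ofReal_one]

lemma polar {d : ℕ} (hd : 1 ≤ d) (Splus : Set (Fin d → ℝ))
    (hS1 : ∀ u ∈ Splus, (∀ j, 0 ≤ u j) ∧ u ≠ 0 ∧ ∀ j, u j ≤ 1)
    (ν : Measure (Fin d → ℝ)) [IsFiniteMeasure ν] (hν_supp : ν Splusᶜ = 0)
    (t : Fin d → ℝ) (ht : ∀ j, 0 < t j) :
    Measure.map (fun p : ℝ × (Fin d → ℝ) => p.1 • p.2)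
        (((volume.restrict (Set.Ioi (0 : ℝ))).withDensity
            (fun r => ENNReal.ofReal ((r ^ 2)⁻¹))).prod ν) {y | ¬ y ≤ t}
      = ∫⁻ u, ⨆ j, ENNReal.ofReal (u j / t j) ∂ν := by
  haveI : Nonempty (Fin d) := Fin.pos_iff_nonempty.mp hd
  have hsm : Measurable fun p : ℝ × (Fin d → ℝ) => p.1 • p.2 :=
    (continuous_fst.smul continuous_snd).measurable
  have hBt : MeasurableSet {y : Fin d → ℝ | ¬ y ≤ t} := by
    have h : {y : Fin d → ℝ | ¬ y ≤ t} = (Set.Iic t)ᶜ := rfl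
    rw [h]; exact measurableSet_Iic.compl
  rw [Measure.map_apply hsm hBt, Measure.prod_apply_symm (hsm hBt)]
  have hae : ∀ᵐ u ∂ν, u ∈ Splus := by
    rw [ae_iff]
    exact hν_supp
  refine lintegral_congr_ae (hae.mono fun u hu => ?_)
  obtain ⟨hu0, hune, hu1⟩ := hS1 u hu
  obtain ⟨j0, hj0'⟩ := Function.ne_iff.mp hune
  have hj0 : 0 < u j0 := lt_of_le_of_ne (hu0 j0) (Ne.symm hj0')
  have Hne : (Finset.univ : Finset (Fin d)).Nonempty := Finset.univ_nonempty
  set b := Finset.univ.sup' Hne (fun j => u j / t j) with hbdef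
  have hb : 0 < b := by
    rw [hbdef]
    exact lt_of_lt_of_le (div_pos hj0 (ht j0))
      (Finset.le_sup' (fun j => u j / t j) (Finset.mem_univ j0))
  have hCmeas : MeasurableSet {r : ℝ | ¬ r • u ≤ t} := by
    have h : {r : ℝ | r • u ≤ t} = ⋂ j, {r : ℝ | r * u j ≤ t j} := by
      ext r
      simp only [Set.mem_setOf_eq, Set.mem_iInter, Pi.le_def, Pi.smul_apply, smul_eq_mul]
    have h2 : {r : ℝ | ¬ r • u ≤ t} = {r : ℝ | r • u ≤ t}ᶜ := rfl
    rw [h2, h]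
    exact (MeasurableSet.iInter fun j =>
      measurableSet_le (measurable_id.mul_const _) measurable_const).compl
  change ((volume.restrict (Set.Ioi 0)).withDensity fun r => ENNReal.ofReal ((r ^ 2)⁻¹))
      {r : ℝ | ¬ r • u ≤ t} = ⨆ j, ENNReal.ofReal (u j / t j)
  rw [withDensity_apply _ hCmeas, Measure.restrict_restrict hCmeas]
  have hiff : ∀ r : ℝ, 0 < r → ((¬ r • u ≤ t) ↔ r⁻¹ < b) := by
    intro r hr
    rw [hbdef, Finset.lt_sup'_iff]
    have hle : r • u ≤ t ↔ ∀ j, r * u j ≤ t j := by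
      simp only [Pi.le_def, Pi.smul_apply, smul_eq_mul]
    rw [hle, not_forall]
    constructor
    · rintro ⟨j, hj⟩
      refine ⟨j, Finset.mem_univ j, ?_⟩
      rw [lt_div_iff₀ (ht j), inv_mul_eq_div, div_lt_iff₀ hr, mul_comm]
      exact lt_of_not_ge hj
    · rintro ⟨j, _, hj⟩
      refine ⟨j, not_le.mpr ?_⟩
      rw [lt_div_iff₀ (ht j), inv_mul_eq_div, div_lt_iff₀ hr, mul_comm] at hj
      exact hj
  have hset : {r : ℝ | ¬ r • u ≤ t} ∩ Set.Ioi 0 = Set.Ioi b⁻¹ := by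
    ext r
    simp only [Set.mem_inter_iff, Set.mem_setOf_eq, Set.mem_Ioi]
    constructor
    · rintro ⟨h1, h2⟩
      have h3 := (hiff r h2).mp h1
      have h4 := inv_strictAnti₀ (inv_pos.2 h2) h3
      rwa [inv_inv] at h4
    · intro h1
      have hr : 0 < r := lt_trans (inv_pos.2 hb) h1
      have h3 := inv_strictAnti₀ (inv_pos.2 hb) h1
      rw [inv_inv] at h3
      exact ⟨(hiff r hr).mpr h3, hr⟩
  rw [hset, lint_inv_sq (inv_pos.2 hb), inv_inv]
  have hmono : Monotone ENNReal.ofReal := fun p q h => ENNReal.ofReal_le_ofReal h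
  rw [hbdef, Finset.comp_sup'_eq_sup'_comp Hne ENNReal.ofReal
    (fun p q => hmono.map_sup p q)]
  apply le_antisymm
  · exact Finset.sup'_le _ _ fun j _ => le_iSup (fun j => ENNReal.ofReal (u j / t j)) j
  · exact iSup_le fun j =>
      Finset.le_sup' (ENNReal.ofReal ∘ fun j => u j / t j) (Finset.mem_univ j)


end Aux

theorem stmt4
    {d : ℕ} (hd : 1 ≤ d)
    (N : (Fin d → ℝ) → ℝ)
    (hN_zero : ∀ x : Fin d → ℝ, N x = 0 ↔ x = 0)
    (hN_smul : ∀ (a : ℝ) (x : Fin d → ℝ), N (a • x) = |a| * N x)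
    (hN_add : ∀ x y : Fin d → ℝ, N (x + y) ≤ N x + N y)
    (Splus : Set (Fin d → ℝ))
    (hSplus : Splus = {u : Fin d → ℝ | (∀ j, 0 ≤ u j) ∧ N u = 1})
    (hSsub : Splus ⊆ Set.Icc (0 : Fin d → ℝ) 1)
    (ν : Measure (Fin d → ℝ)) [IsFiniteMeasure ν]
    (hν_supp : ν Splusᶜ = 0)
    (hν_mom : ∀ j : Fin d, ∫ u, u j ∂ν = 1)
    (μ : Measure (Fin d → ℝ))
    (hμ : μ = Measure.map (fun p : ℝ × (Fin d → ℝ) => p.1 • p.2)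
        (((volume.restrict (Set.Ioi (0 : ℝ))).withDensity
            (fun r => ENNReal.ofReal ((r ^ 2)⁻¹))).prod ν))
    (Ω : Type) [MeasurableSpace Ω] (P : Measure Ω) [IsProbabilityMeasure P]
    (Z : Ω → (Fin d → ℝ)) (hZ_meas : Measurable Z)
    (hZ_pos : ∀ ω j, 0 < Z ω j)
    (hZ_law : ∀ x : Fin d → ℝ, (∀ j, 0 < x j) →
        P {ω | Z ω ≤ x} = ENNReal.ofReal (Real.exp (-(μ {y | ¬ y ≤ x}).toReal)))
    (σ : ℝ) (hσ : 0 < σ)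
    (f : (Fin d → ℝ) → ENNReal) (hf : Measurable f)
    (x : Fin d → ℝ) (hx : ∀ j, 0 < x j) :
    ∫⁻ ω, f (x ⊔ σ • Z ω) ∂P
      = ENNReal.ofReal (Real.exp (-(σ * (μ {y | ¬ y ≤ x}).toReal))) * f x
        + ENNReal.ofReal (Real.exp (-(σ * (μ {y | ¬ y ≤ x}).toReal))) *
          ∑' n : ℕ,
            ENNReal.ofReal (σ ^ (n + 1) / (Nat.factorial (n + 1) : ℝ)) *
              iterMaxLintegral (μ.restrict {y | ¬ y ≤ x}) f (n + 1) x := by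
  classical
  haveI : Nonempty (Fin d) := Fin.pos_iff_nonempty.mp hd
  have hS1 : ∀ u ∈ Splus, (∀ j, 0 ≤ u j) ∧ u ≠ 0 ∧ ∀ j, u j ≤ 1 := by
    intro u hu
    have h1 : (∀ j, 0 ≤ u j) ∧ N u = 1 := by rw [hSplus] at hu; exact hu
    have h2 := hSsub hu
    refine ⟨h1.1, ?_, fun j => h2.2 j⟩
    intro h0
    rw [h0] at h1
    rw [(hN_zero 0).mpr rfl] at h1
    exact one_ne_zero h1.2.symm
  have hpolar : ∀ t : Fin d → ℝ, (∀ j, 0 < t j) →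
      μ {y | ¬ y ≤ t} = ∫⁻ u, ⨆ j, ENNReal.ofReal (u j / t j) ∂ν := by
    intro t ht
    rw [hμ]
    exact polar hd Splus hS1 ν hν_supp t ht
  have haeIcc : ∀ᵐ u ∂ν, u ∈ Set.Icc (0 : Fin d → ℝ) 1 := by
    have hae : ∀ᵐ u ∂ν, u ∈ Splus := by rw [ae_iff]; exact hν_supp
    exact hae.mono fun u hu => hSsub hu
  have hfin : ∀ t : Fin d → ℝ, (∀ j, 0 < t j) → μ {y | ¬ y ≤ t} ≠ ⊤ := by
    intro t ht
    rw [hpolar t ht]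
    have hb : ∀ᵐ u ∂ν, (⨆ j, ENNReal.ofReal (u j / t j))
        ≤ ∑ j : Fin d, ENNReal.ofReal ((t j)⁻¹) := by
      filter_upwards [haeIcc] with u hu
      refine iSup_le fun j => ?_
      refine le_trans ?_ (Finset.single_le_sum
        (f := fun j : Fin d => ENNReal.ofReal ((t j)⁻¹))
        (fun i _ => zero_le) (Finset.mem_univ j))
      apply ENNReal.ofReal_le_ofReal
      rw [div_eq_mul_inv]
      calc u j * (t j)⁻¹ ≤ 1 * (t j)⁻¹ :=
            mul_le_mul_of_nonneg_right (hu.2 j) (inv_nonneg.2 (ht j).le)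
        _ = (t j)⁻¹ := one_mul _
    refine ne_top_of_le_ne_top ?_ (lintegral_mono_ae hb)
    rw [lintegral_const]
    exact ENNReal.mul_ne_top
      (ENNReal.sum_lt_top.mpr fun j _ => ENNReal.ofReal_lt_top).ne
      (measure_ne_top ν _)
  have hmeas_sup : ∀ t : Fin d → ℝ,
      Measurable fun u : Fin d → ℝ => ⨆ j, ENNReal.ofReal (u j / t j) :=
    fun t => Measurable.iSup fun j =>
      (by fun_prop : Measurable fun u : Fin d → ℝ => u j / t j).ennreal_ofReal
  have hhom : ∀ t : Fin d → ℝ, (∀ j, 0 < t j) →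
      μ {y | ¬ y ≤ σ⁻¹ • t} = ENNReal.ofReal σ * μ {y | ¬ y ≤ t} := by
    intro t ht
    have ht' : ∀ j, 0 < (σ⁻¹ • t) j := fun j => mul_pos (inv_pos.2 hσ) (ht j)
    rw [hpolar _ ht', hpolar t ht, ← lintegral_const_mul _ (hmeas_sup t)]
    refine lintegral_congr fun u => ?_
    have h1 : ∀ j, u j / ((σ⁻¹ • t) j) = σ * (u j / t j) := by
      intro j
      rw [Pi.smul_apply, smul_eq_mul]
      field_simp
    calc (⨆ j, ENNReal.ofReal (u j / (σ⁻¹ • t) j))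
        = ⨆ j, ENNReal.ofReal σ * ENNReal.ofReal (u j / t j) := by
          refine iSup_congr fun j => ?_
          rw [h1 j, ENNReal.ofReal_mul hσ.le]
      _ = ENNReal.ofReal σ * ⨆ j, ENNReal.ofReal (u j / t j) := by
          rw [ENNReal.mul_iSup]
  have hsmul_le : ∀ z a : Fin d → ℝ, σ • z ≤ a ↔ z ≤ σ⁻¹ • a := by
    intro z a
    constructor <;> intro h j <;> have hj := h j
    · rw [Pi.smul_apply, smul_eq_mul] at hj ⊢
      rw [inv_mul_eq_div, le_div_iff₀ hσ, mul_comm]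
      exact hj
    · rw [Pi.smul_apply, smul_eq_mul] at hj ⊢
      rw [inv_mul_eq_div, le_div_iff₀ hσ, mul_comm] at hj
      exact hj
  have hcdf : ∀ t : Fin d → ℝ, x ≤ t →
      P {ω | x ⊔ σ • Z ω ≤ t}
        = ENNReal.ofReal (Real.exp (-(σ * (μ {y | ¬ y ≤ t}).toReal))) := by
    intro t hxt
    have htpos : ∀ j, 0 < t j := fun j => lt_of_lt_of_le (hx j) (hxt j)
    have hσt : ∀ j, 0 < (σ⁻¹ • t) j := fun j => mul_pos (inv_pos.2 hσ) (htpos j)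
    have hseteq : {ω | x ⊔ σ • Z ω ≤ t} = {ω | Z ω ≤ σ⁻¹ • t} := by
      ext ω
      simp only [Set.mem_setOf_eq, sup_le_iff]
      exact ⟨fun h => (hsmul_le _ _).mp h.2, fun h => ⟨hxt, (hsmul_le _ _).mpr h⟩⟩
    rw [hseteq, hZ_law _ hσt, hhom t htpos, ENNReal.toReal_mul,
      ENNReal.toReal_ofReal hσ.le]
  have hmap : Measurable fun ω => x ⊔ σ • Z ω := by
    apply measurable_pi_lambda
    intro j
    exact measurable_const.sup
      (measurable_const.mul ((measurable_pi_apply j).comp hZ_meas))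
  set A := {y : Fin d → ℝ | ¬ y ≤ x} with hA
  set κ := μ.restrict A with hκ
  haveI hκfin : IsFiniteMeasure κ := by
    constructor
    rw [hκ, Measure.restrict_apply_univ]
    exact (hfin x hx).lt_top
  set L := (μ A).toReal with hL
  set c := ENNReal.ofReal (Real.exp (-(σ * L))) with hc
  set Q := Measure.map (fun ω => x ⊔ σ • Z ω) P with hQ
  haveI : IsProbabilityMeasure Q := Measure.isProbabilityMeasure_map hmap.aemeasurable
  set ρ : Measure (Fin d → ℝ) := c • Measure.dirac x
    + Measure.sum (fun n : ℕ =>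
        (c * ENNReal.ofReal (σ ^ (n + 1) / (Nat.factorial (n + 1) : ℝ)))
          • bindMax κ x (n + 1)) with hρ
  have hρ_apply : ∀ s : Set (Fin d → ℝ), MeasurableSet s →
      ρ s = c * s.indicator 1 x
        + ∑' n : ℕ, (c * ENNReal.ofReal (σ ^ (n + 1) / (Nat.factorial (n + 1) : ℝ)))
            * bindMax κ x (n + 1) s := by
    intro s hs
    rw [hρ, Measure.add_apply, Measure.smul_apply, Measure.sum_apply _ hs,
      Measure.dirac_apply' _ hs]
    simp only [Measure.smul_apply, smul_eq_mul]
  have hbind_Iic : ∀ (n : ℕ) (t : Fin d → ℝ), bindMax κ x n (Set.Iic t)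
      = (Set.Iic t).indicator (fun _ => (κ (Set.Iic t)) ^ n) x := by
    intro n t
    rw [← lintegral_indicator_one measurableSet_Iic,
      lint_bindMax κ x n (measurable_one.indicator measurableSet_Iic),
      iter_indicator]
  have hbind_univ : ∀ n : ℕ, bindMax κ x n Set.univ = (κ Set.univ) ^ n := by
    intro n
    rw [← lintegral_one, lint_bindMax κ x n measurable_const, iter_one]
  have hQρ : Q = ρ := by
    refine ext_of_generate_finite {s : Set (Fin d → ℝ) | ∃ t, s = Set.Iic t}
      (gen_Iic d) ?_ ?_ ?_
    · rintro s ⟨t1, rfl⟩ s' ⟨t2, rfl⟩ -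
      exact ⟨t1 ⊓ t2, Set.Iic_inter_Iic⟩
    · rintro s ⟨t, rfl⟩
      have hQt : Q (Set.Iic t) = P {ω | x ⊔ σ • Z ω ≤ t} := by
        rw [hQ, Measure.map_apply hmap measurableSet_Iic]
        rfl
      rw [hQt, hρ_apply _ measurableSet_Iic]
      by_cases hxt : x ≤ t
      · have hind : (Set.Iic t).indicator (1 : (Fin d → ℝ) → ENNReal) x = 1 :=
          Set.indicator_of_mem (Set.mem_Iic.mpr hxt) 1
        have hterm : ∀ n : ℕ,
            bindMax κ x (n + 1) (Set.Iic t) = (κ (Set.Iic t)) ^ (n + 1) := by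
          intro n
          rw [hbind_Iic, Set.indicator_of_mem (Set.mem_Iic.mpr hxt)]
        rw [hcdf t hxt, hind, mul_one, tsum_congr fun n => by rw [hterm n],
          rho_sum hσ.le (measure_ne_top κ _)]
        have hsplit : μ A = κ (Set.Iic t) + μ {y | ¬ y ≤ t} := by
          have hdiff : A \ Set.Iic t = {y | ¬ y ≤ t} := by
            ext y
            simp only [hA, Set.mem_diff, Set.mem_setOf_eq, Set.mem_Iic]
            exact ⟨fun h => h.2, fun h => ⟨fun hyx => h (le_trans hyx hxt), h⟩⟩
          rw [hκ, Measure.restrict_apply measurableSet_Iic, Set.inter_comm, ← hdiff]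
          exact (measure_inter_add_diff A measurableSet_Iic).symm
        have hLt_fin : μ {y | ¬ y ≤ t} ≠ ⊤ :=
          hfin t fun j => lt_of_lt_of_le (hx j) (hxt j)
        have hLeq : L = (κ (Set.Iic t)).toReal + (μ {y | ¬ y ≤ t}).toReal := by
          rw [hL, hsplit, ENNReal.toReal_add (measure_ne_top κ _) hLt_fin]
        congr 1
        rw [hLeq]
        ring
      · have hset0 : {ω | x ⊔ σ • Z ω ≤ t} = ∅ := by
          ext ω
          simp only [Set.mem_setOf_eq, Set.mem_empty_iff_false, iff_false]
          exact fun h => hxt (le_trans le_sup_left h)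
        have hind0 : (Set.Iic t).indicator (1 : (Fin d → ℝ) → ENNReal) x = 0 :=
          Set.indicator_of_notMem (fun h => hxt (Set.mem_Iic.mp h)) 1
        have hterm0 : ∀ n : ℕ, bindMax κ x (n + 1) (Set.Iic t) = 0 := by
          intro n
          rw [hbind_Iic, Set.indicator_of_notMem (fun h => hxt (Set.mem_Iic.mp h))]
        rw [hset0, measure_empty, hind0, mul_zero, zero_add,
          tsum_congr fun n => by rw [hterm0 n, mul_zero]]
        simp
    · have h1 : Q Set.univ = 1 := measure_univ
      rw [h1, hρ_apply _ MeasurableSet.univ, Set.indicator_univ, Pi.one_apply, mul_one,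
        tsum_congr fun n => by rw [hbind_univ (n + 1)],
        rho_sum hσ.le (measure_ne_top κ _)]
      have h2 : (κ Set.univ).toReal = L := by
        rw [hκ, Measure.restrict_apply_univ, hL]
      rw [h2, sub_self, Real.exp_zero, ENNReal.ofReal_one]
  calc ∫⁻ ω, f (x ⊔ σ • Z ω) ∂P = ∫⁻ y, f y ∂Q := (lintegral_map hf hmap).symm
    _ = ∫⁻ y, f y ∂ρ := by rw [hQρ]
    _ = c * f x + ∑' n : ℕ,
          (c * ENNReal.ofReal (σ ^ (n + 1) / (Nat.factorial (n + 1) : ℝ)))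
            * iterMaxLintegral κ f (n + 1) x := by
        rw [hρ, lintegral_add_measure, lintegral_smul_measure, lintegral_sum_measure,
          lintegral_dirac' x hf]
        congr 1
        refine tsum_congr fun n => ?_
        rw [lintegral_smul_measure, lint_bindMax κ x (n + 1) hf, smul_eq_mul]
    _ = c * f x + c * ∑' n : ℕ,
          ENNReal.ofReal (σ ^ (n + 1) / (Nat.factorial (n + 1) : ℝ))
            * iterMaxLintegral κ f (n + 1) x := by
        rw [← ENNReal.tsum_mul_left]
        congr 1
        exact tsum_congr fun n => by rw [mul_assoc]
end

section
/- For every bounded measurable f : E₀* → ℝ and all t, s ≥ 0, one has P_t(P_s f)(x) = P_{t+s} f(x) for every x ∈ E₀*. Moreover, for every p ∈ [1, ∞) and every measurable f with E[|f(Z)|^p] < ∞, the function P_t f is defined ℙ_Z-almost everywhere and E[|P_t f(Z)|^p] ≤ E[|f(Z)|^p]; and for integrable f, E[P_t f(Z)] = E[f(Z)] for all t ≥ 0. -/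
open MeasureTheory Filter

open scoped ENNReal

open scoped ENNReal

noncomputable def auxW : Measure ℝ :=
  (volume.restrict (Set.Ioi (0 : ℝ))).withDensity (fun r => ENNReal.ofReal ((r ^ 2)⁻¹))

lemma auxW_scale (k : ℝ) (hk : 0 < k) :
    Measure.map (k * ·) auxW = ENNReal.ofReal k • auxW := by
  have hmul : Measurable (k * · : ℝ → ℝ) := measurable_const_mul k
  have hk2 : (k : ℝ) ^ 2 ≠ 0 := by positivity
  have hg : Measurable (fun s : ℝ => ENNReal.ofReal (k ^ 2 * (s ^ 2)⁻¹)) := by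
    apply Measurable.ennreal_ofReal; fun_prop
  have hf : Measurable (fun r : ℝ => ENNReal.ofReal ((r ^ 2)⁻¹)) := by
    apply Measurable.ennreal_ofReal; fun_prop
  ext A hA
  rw [Measure.map_apply hmul hA, Measure.smul_apply, auxW,
    withDensity_apply _ (hmul hA), withDensity_apply _ hA,
    Measure.restrict_restrict (hmul hA), Measure.restrict_restrict hA]
  have hpre : (k * ·) ⁻¹' A ∩ Set.Ioi 0 = (k * ·) ⁻¹' (A ∩ Set.Ioi 0) := by
    ext r
    simp only [Set.mem_inter_iff, Set.mem_preimage, Set.mem_Ioi]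
    refine and_congr_right fun _ => ⟨fun h => mul_pos hk h, fun h => by nlinarith⟩
  set T := A ∩ Set.Ioi (0 : ℝ) with hT
  have hTm : MeasurableSet T := hA.inter measurableSet_Ioi
  have hcomp : ∀ r : ℝ, ENNReal.ofReal ((r ^ 2)⁻¹)
      = ENNReal.ofReal (k ^ 2 * ((k * r) ^ 2)⁻¹) := by
    intro r
    congr 1
    rw [mul_pow, mul_inv, ← mul_assoc, mul_inv_cancel₀ hk2, one_mul]
  rw [hpre]
  calc ∫⁻ r in (k * ·) ⁻¹' T, ENNReal.ofReal ((r ^ 2)⁻¹) ∂volume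
      = ∫⁻ r in (k * ·) ⁻¹' T, ENNReal.ofReal (k ^ 2 * ((k * r) ^ 2)⁻¹) ∂volume :=
        lintegral_congr fun r => hcomp r
    _ = ∫⁻ r, Set.indicator ((k * ·) ⁻¹' T)
          (fun r => ENNReal.ofReal (k ^ 2 * ((k * r) ^ 2)⁻¹)) r ∂volume := by
        rw [lintegral_indicator (hmul hTm) _]
    _ = ∫⁻ r, Set.indicator T (fun s => ENNReal.ofReal (k ^ 2 * (s ^ 2)⁻¹)) (k * r) ∂volume :=
        lintegral_congr fun r => by
          by_cases h : k * r ∈ T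
          · rw [Set.indicator_of_mem h, Set.indicator_of_mem (by exact h)]
          · rw [Set.indicator_of_notMem h, Set.indicator_of_notMem (by exact h)]
    _ = ∫⁻ s, Set.indicator T (fun s => ENNReal.ofReal (k ^ 2 * (s ^ 2)⁻¹)) s
          ∂(Measure.map (k * ·) volume) :=
        (lintegral_map (hg.indicator hTm) hmul).symm
    _ = ENNReal.ofReal k⁻¹ * ∫⁻ s in T, ENNReal.ofReal (k ^ 2 * (s ^ 2)⁻¹) ∂volume := by
        rw [Real.map_volume_mul_left hk.ne', abs_of_pos (inv_pos.mpr hk),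
          lintegral_smul_measure, lintegral_indicator hTm _, smul_eq_mul]
    _ = ENNReal.ofReal k * ∫⁻ r in T, ENNReal.ofReal ((r ^ 2)⁻¹) ∂volume := by
        rw [show (fun s : ℝ => ENNReal.ofReal (k ^ 2 * (s ^ 2)⁻¹))
            = fun s : ℝ => ENNReal.ofReal (k ^ 2) * ENNReal.ofReal ((s ^ 2)⁻¹) from
          funext fun s => ENNReal.ofReal_mul (by positivity)]
        rw [lintegral_const_mul _ hf, ← mul_assoc, ← ENNReal.ofReal_mul (by positivity)]
        congr 2
        field_simp

section
variable {d : ℕ} {Ω : Type} [MeasurableSpace Ω]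

lemma aux_meas_Iic_compl (x : Fin d → ℝ) : MeasurableSet {y : Fin d → ℝ | ¬ y ≤ x} := by
  have : {y : Fin d → ℝ | ¬ y ≤ x} = (Set.Iic x)ᶜ := rfl
  rw [this]
  exact measurableSet_Iic.compl

lemma aux_le_smul_iff {c : ℝ} (hc : 0 < c) (v w : Fin d → ℝ) :
    v ≤ c • w ↔ c⁻¹ • v ≤ w := by
  constructor <;> intro h j <;> have hj := h j <;>
    simp only [Pi.smul_apply, smul_eq_mul] at hj ⊢
  · rw [inv_mul_eq_div, div_le_iff₀ hc, mul_comm]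
    exact hj
  · rw [inv_mul_eq_div, div_le_iff₀ hc, mul_comm] at hj
    exact hj

lemma aux_smul_le_iff {c : ℝ} (hc : 0 < c) (v x : Fin d → ℝ) :
    c • v ≤ x ↔ v ≤ c⁻¹ • x := by
  constructor <;> intro h j <;> have hj := h j <;>
    simp only [Pi.smul_apply, smul_eq_mul] at hj ⊢
  · rw [inv_mul_eq_div, le_div_iff₀ hc, mul_comm]
    exact hj
  · rw [inv_mul_eq_div, le_div_iff₀ hc, mul_comm] at hj
    exact hj

lemma aux_smul_sup {c : ℝ} (hc : 0 ≤ c) (A B : Fin d → ℝ) :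
    c • (A ⊔ B) = c • A ⊔ c • B := by
  funext j
  simp only [Pi.smul_apply, Pi.sup_apply, smul_eq_mul]
  exact mul_max_of_nonneg _ _ hc

lemma aux_meas_pair {Z : Ω → Fin d → ℝ} (hZ : Measurable Z) (a b : ℝ) :
    Measurable (fun q : Ω × Ω => a • Z q.1 ⊔ b • Z q.2) := by
  rw [measurable_pi_iff]
  intro j
  simp only [Pi.sup_apply, Pi.smul_apply, smul_eq_mul]
  exact (measurable_const.mul ((measurable_pi_apply j).comp
    (hZ.comp measurable_fst))).max
    (measurable_const.mul ((measurable_pi_apply j).comp (hZ.comp measurable_snd)))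

lemma aux_sup_const_meas (c : Fin d → ℝ) :
    Measurable (fun w : Fin d → ℝ => c ⊔ w) := by
  rw [measurable_pi_iff]
  intro j
  simp only [Pi.sup_apply]
  exact measurable_const.max (measurable_pi_apply j)

lemma aux_mu_scale (ν : Measure (Fin d → ℝ)) [IsFiniteMeasure ν]
    (μ : Measure (Fin d → ℝ))
    (hμ : μ = Measure.map (fun p : ℝ × (Fin d → ℝ) => p.1 • p.2)
        (((volume.restrict (Set.Ioi (0 : ℝ))).withDensity
            (fun r => ENNReal.ofReal ((r ^ 2)⁻¹))).prod ν))
    (c : ℝ) (hc : 0 < c) (x : Fin d → ℝ) :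
    μ {y | ¬ y ≤ c • x} = ENNReal.ofReal c⁻¹ * μ {y | ¬ y ≤ x} := by
  set W : Measure ℝ :=
    (volume.restrict (Set.Ioi (0 : ℝ))).withDensity (fun r => ENNReal.ofReal ((r ^ 2)⁻¹)) with hW
  have hsm : Measurable (fun p : ℝ × (Fin d → ℝ) => p.1 • p.2) :=
    (continuous_fst.smul continuous_snd).measurable
  have hWs : Measure.map (c⁻¹ * ·) W = ENNReal.ofReal c⁻¹ • W := auxW_scale c⁻¹ (inv_pos.mpr hc)
  have hprodmap : Measure.map (Prod.map (c⁻¹ * ·) id) (W.prod ν)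
      = ENNReal.ofReal c⁻¹ • (W.prod ν) := by
    rw [← Measure.map_prod_map _ _ (measurable_const_mul c⁻¹) measurable_id, hWs,
      Measure.map_id]
    ext s hs
    rw [Measure.prod_apply hs, lintegral_smul_measure, Measure.smul_apply,
      Measure.prod_apply hs, smul_eq_mul]
  have hpre : (fun p : ℝ × (Fin d → ℝ) => p.1 • p.2) ⁻¹' {y | ¬ y ≤ c • x}
      = (Prod.map (c⁻¹ * ·) id) ⁻¹'
        ((fun p : ℝ × (Fin d → ℝ) => p.1 • p.2) ⁻¹' {y | ¬ y ≤ x}) := by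
    ext p
    simp only [Set.mem_preimage, Set.mem_setOf_eq, Prod.map_fst, Prod.map_snd, id_eq]
    rw [aux_le_smul_iff hc, smul_smul]
  rw [hμ, Measure.map_apply hsm (aux_meas_Iic_compl _),
    Measure.map_apply hsm (aux_meas_Iic_compl _), hpre,
    ← Measure.map_apply (Measurable.prodMap (measurable_const_mul c⁻¹) measurable_id)
      (hsm (aux_meas_Iic_compl _)), hprodmap]
  rfl

lemma aux_pi_gen : (inferInstance : MeasurableSpace (Fin d → ℝ))
    = MeasurableSpace.generateFrom {s : Set (Fin d → ℝ) | ∃ x, s = Set.Iic x} := by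
  apply le_antisymm
  · rw [show (inferInstance : MeasurableSpace (Fin d → ℝ)) = MeasurableSpace.pi from rfl,
      MeasurableSpace.pi]
    refine iSup_le fun j => ?_
    rw [← measurable_iff_comap_le]
    have hR : Real.measurableSpace
        = MeasurableSpace.generateFrom (Set.range Set.Iic) := by
      rw [BorelSpace.measurable_eq (α := ℝ), borel_eq_generateFrom_Iic ℝ]
    refine Measurable.mono (@measurable_generateFrom _ _
      (MeasurableSpace.generateFrom {s : Set (Fin d → ℝ) | ∃ x, s = Set.Iic x}) _ _ ?_)
      le_rfl hR.le
    rintro t ⟨c, rfl⟩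
    have : (fun y : Fin d → ℝ => y j) ⁻¹' Set.Iic c
        = ⋃ n : ℕ, Set.Iic (Function.update (fun _ : Fin d => (n : ℝ)) j c) := by
      ext y
      simp only [Set.mem_preimage, Set.mem_Iic, Set.mem_iUnion]
      constructor
      · intro hy
        obtain ⟨n, hn⟩ := exists_nat_ge (∑ i, |y i|)
        refine ⟨n, fun i => ?_⟩
        rcases eq_or_ne i j with rfl | hij
        · simpa using hy
        · rw [Function.update_of_ne hij]
          calc y i ≤ |y i| := le_abs_self _
            _ ≤ ∑ i, |y i| := Finset.single_le_sum (fun i _ => abs_nonneg (y i))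
                (Finset.mem_univ i)
            _ ≤ n := hn
      · intro ⟨n, hn⟩
        simpa using hn j
    rw [this]
    exact MeasurableSet.iUnion fun n =>
      MeasurableSpace.measurableSet_generateFrom ⟨_, rfl⟩
  · refine MeasurableSpace.generateFrom_le ?_
    rintro s ⟨x, rfl⟩
    exact measurableSet_Iic

lemma aux_law (ν : Measure (Fin d → ℝ)) [IsFiniteMeasure ν]
    (μ : Measure (Fin d → ℝ))
    (hμ : μ = Measure.map (fun p : ℝ × (Fin d → ℝ) => p.1 • p.2)
        (((volume.restrict (Set.Ioi (0 : ℝ))).withDensity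
            (fun r => ENNReal.ofReal ((r ^ 2)⁻¹))).prod ν))
    (P : Measure Ω) [IsProbabilityMeasure P]
    (Z : Ω → (Fin d → ℝ)) (hZ_meas : Measurable Z)
    (hZ_pos : ∀ ω j, 0 < Z ω j)
    (hZ_law : ∀ x : Fin d → ℝ, (∀ j, 0 < x j) →
        P {ω | Z ω ≤ x} = ENNReal.ofReal (Real.exp (-(μ {y | ¬ y ≤ x}).toReal)))
    (a b : ℝ) (ha : 0 ≤ a) (hb : 0 ≤ b) :
    Measure.map (fun q : Ω × Ω => a • Z q.1 ⊔ b • Z q.2) (P.prod P)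
      = Measure.map (fun ω => (a + b) • Z ω) P := by
  have hZnn : ∀ (c : ℝ), 0 ≤ c → ∀ ω, (0 : Fin d → ℝ) ≤ c • Z ω := by
    intro c hc ω j
    simpa using mul_nonneg hc (hZ_pos ω j).le
  have hmeas_pair := aux_meas_pair hZ_meas a b
  have hmeas_ab : Measurable (fun ω => (a + b) • Z ω) :=
    (measurable_const_smul (a + b)).comp hZ_meas
  rcases eq_or_lt_of_le ha with rfl | ha'
  · have hfe : (fun q : Ω × Ω => (0:ℝ) • Z q.1 ⊔ b • Z q.2)
        = (fun ω => ((0:ℝ) + b) • Z ω) ∘ Prod.snd := by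
      funext q
      simp only [Function.comp_apply, zero_smul, zero_add]
      exact sup_eq_right.mpr (hZnn b hb q.2)
    rw [hfe, ← Measure.map_map hmeas_ab measurable_snd, Measure.map_snd_prod, measure_univ,
      one_smul]
  rcases eq_or_lt_of_le hb with rfl | hb'
  · have hfe : (fun q : Ω × Ω => a • Z q.1 ⊔ (0:ℝ) • Z q.2)
        = (fun ω => (a + (0:ℝ)) • Z ω) ∘ Prod.fst := by
      funext q
      simp only [Function.comp_apply, zero_smul, add_zero]
      exact sup_eq_left.mpr (hZnn a ha q.1)
    rw [hfe, ← Measure.map_map hmeas_ab measurable_fst, Measure.map_fst_prod, measure_univ,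
      one_smul]
  have hab : 0 < a + b := by linarith
  haveI : IsProbabilityMeasure
      (Measure.map (fun q : Ω × Ω => a • Z q.1 ⊔ b • Z q.2) (P.prod P)) :=
    Measure.isProbabilityMeasure_map hmeas_pair.aemeasurable
  haveI : IsProbabilityMeasure (Measure.map (fun ω => (a + b) • Z ω) P) :=
    Measure.isProbabilityMeasure_map hmeas_ab.aemeasurable
  refine ext_of_generate_finite _ aux_pi_gen ?_ ?_ (by simp)
  · rintro s ⟨x, rfl⟩ t ⟨y, rfl⟩ -
    exact ⟨x ⊓ y, Set.Iic_inter_Iic⟩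
  rintro s ⟨x, rfl⟩
  rw [Measure.map_apply hmeas_pair measurableSet_Iic,
    Measure.map_apply hmeas_ab measurableSet_Iic]
  by_cases hx : ∀ j, 0 < x j
  · have hsetprod : (fun q : Ω × Ω => a • Z q.1 ⊔ b • Z q.2) ⁻¹' Set.Iic x
        = {ω | Z ω ≤ a⁻¹ • x} ×ˢ {ω | Z ω ≤ b⁻¹ • x} := by
      ext q
      simp only [Set.mem_preimage, Set.mem_Iic, Set.mem_prod, Set.mem_setOf_eq, sup_le_iff]
      rw [aux_smul_le_iff ha' _ x, aux_smul_le_iff hb' _ x]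
    have hsetab : (fun ω => (a + b) • Z ω) ⁻¹' Set.Iic x = {ω | Z ω ≤ (a + b)⁻¹ • x} := by
      ext ω
      simp only [Set.mem_preimage, Set.mem_Iic, Set.mem_setOf_eq]
      rw [aux_smul_le_iff hab _ x]
    have hxpos : ∀ (c : ℝ), 0 < c → ∀ j, 0 < (c⁻¹ • x) j := by
      intro c hc j
      simpa using mul_pos (inv_pos.mpr hc) (hx j)
    have hmsc : ∀ (c : ℝ), 0 < c →
        μ {y | ¬ y ≤ c⁻¹ • x} = ENNReal.ofReal c * μ {y | ¬ y ≤ x} := by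
      intro c hc
      have := aux_mu_scale ν μ hμ c⁻¹ (inv_pos.mpr hc) x
      rwa [inv_inv] at this
    rw [hsetprod, Measure.prod_prod, hsetab, hZ_law _ (hxpos a ha'), hZ_law _ (hxpos b hb'),
      hZ_law _ (hxpos _ hab), hmsc a ha', hmsc b hb', hmsc _ hab]
    set m := μ {y | ¬ y ≤ x} with hm
    rw [← ENNReal.ofReal_mul (Real.exp_nonneg _), ← Real.exp_add]
    congr 2
    rcases eq_or_ne m ⊤ with hmt | hmt
    · rw [hmt, ENNReal.mul_top (by simpa [ENNReal.ofReal_eq_zero, not_le] using ha'),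
        ENNReal.mul_top (by simpa [ENNReal.ofReal_eq_zero, not_le] using hb'),
        ENNReal.mul_top (by simpa [ENNReal.ofReal_eq_zero, not_le] using hab)]
      simp
    · rw [ENNReal.toReal_mul, ENNReal.toReal_mul, ENNReal.toReal_mul,
        ENNReal.toReal_ofReal ha, ENNReal.toReal_ofReal hb, ENNReal.toReal_ofReal hab.le]
      ring
  · push_neg at hx
    obtain ⟨j, hj⟩ := hx
    have h1 : (fun q : Ω × Ω => a • Z q.1 ⊔ b • Z q.2) ⁻¹' Set.Iic x = ∅ := by
      ext q
      simp only [Set.mem_preimage, Set.mem_Iic, Set.mem_empty_iff_false, iff_false]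
      intro h
      have := h j
      simp only [Pi.sup_apply, Pi.smul_apply, smul_eq_mul, sup_le_iff] at this
      nlinarith [hZ_pos q.1 j, this.1]
    have h2 : (fun ω => (a + b) • Z ω) ⁻¹' Set.Iic x = ∅ := by
      ext ω
      simp only [Set.mem_preimage, Set.mem_Iic, Set.mem_empty_iff_false, iff_false]
      intro h
      have := h j
      simp only [Pi.smul_apply, smul_eq_mul] at this
      nlinarith [hZ_pos ω j]
    rw [h1, h2, measure_empty, measure_empty]

lemma aux_jensen (P : Measure Ω) [IsProbabilityMeasure P]
    (p : ℝ) (hp : 1 ≤ p) (g : Ω → ℝ) (hg : Measurable g) :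
    ENNReal.ofReal (|∫ ω, g ω ∂P| ^ p) ≤ ∫⁻ ω, ENNReal.ofReal (|g ω| ^ p) ∂P := by
  have hp0 : 0 < p := lt_of_lt_of_le one_pos hp
  have hnn : ∀ r : ℝ, ENNReal.ofReal (|r| ^ p) = (‖r‖₊ : ℝ≥0∞) ^ p := by
    intro r
    rw [← enorm_eq_nnnorm, Real.enorm_eq_ofReal_abs, ← ENNReal.ofReal_rpow_of_nonneg (abs_nonneg r) hp0.le]
  have key : eLpNorm g (ENNReal.ofReal p) P
      = (∫⁻ ω, (‖g ω‖₊ : ℝ≥0∞) ^ p ∂P) ^ (1 / p) := by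
    rw [eLpNorm_eq_lintegral_rpow_enorm_toReal
      (by simp [ENNReal.ofReal_eq_zero, not_le, hp0]) ENNReal.ofReal_ne_top,
      ENNReal.toReal_ofReal hp0.le]
    rfl
  calc ENNReal.ofReal (|∫ ω, g ω ∂P| ^ p) = (‖∫ ω, g ω ∂P‖₊ : ℝ≥0∞) ^ p := hnn _
    _ ≤ (∫⁻ ω, (‖g ω‖₊ : ℝ≥0∞) ∂P) ^ p :=
        ENNReal.rpow_le_rpow (enorm_integral_le_lintegral_enorm _) hp0.le
    _ = (eLpNorm g 1 P) ^ p := by simp only [eLpNorm_one_eq_lintegral_enorm, enorm_eq_nnnorm]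
    _ ≤ (eLpNorm g (ENNReal.ofReal p) P) ^ p :=
        ENNReal.rpow_le_rpow
          (eLpNorm_le_eLpNorm_of_exponent_le
            (by simpa using ENNReal.one_le_ofReal.mpr hp) hg.aestronglyMeasurable) hp0.le
    _ = ∫⁻ ω, (‖g ω‖₊ : ℝ≥0∞) ^ p ∂P := by
        rw [key, ← ENNReal.rpow_mul, one_div, inv_mul_cancel₀ hp0.ne', ENNReal.rpow_one]
    _ = ∫⁻ ω, ENNReal.ofReal (|g ω| ^ p) ∂P := lintegral_congr fun ω => (hnn _).symm

lemma aux_nnnorm_le (p : ℝ) (hp : 1 ≤ p) (r : ℝ) :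
    (‖r‖₊ : ℝ≥0∞) ≤ 1 + ENNReal.ofReal (|r| ^ p) := by
  rw [← enorm_eq_nnnorm, Real.enorm_eq_ofReal_abs]
  rcases le_total |r| 1 with h | h
  · exact le_trans (by simpa using ENNReal.ofReal_le_one.mpr h) le_self_add
  · refine le_trans (ENNReal.ofReal_le_ofReal ?_) le_add_self
    calc |r| = |r| ^ (1:ℝ) := (Real.rpow_one _).symm
      _ ≤ |r| ^ p := Real.rpow_le_rpow_of_exponent_le h hp

end

theorem stmt6
    {d : ℕ} (hd : 1 ≤ d)
    (N : (Fin d → ℝ) → ℝ)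
    (hN_zero : ∀ x : Fin d → ℝ, N x = 0 ↔ x = 0)
    (hN_smul : ∀ (a : ℝ) (x : Fin d → ℝ), N (a • x) = |a| * N x)
    (hN_add : ∀ x y : Fin d → ℝ, N (x + y) ≤ N x + N y)
    (Splus : Set (Fin d → ℝ))
    (hSplus : Splus = {u : Fin d → ℝ | (∀ j, 0 ≤ u j) ∧ N u = 1})
    (hSsub : Splus ⊆ Set.Icc (0 : Fin d → ℝ) 1)
    (ν : Measure (Fin d → ℝ)) [IsFiniteMeasure ν]
    (hν_supp : ν Splusᶜ = 0)
    (hν_mom : ∀ j : Fin d, ∫ u, u j ∂ν = 1)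
    (μ : Measure (Fin d → ℝ))
    (hμ : μ = Measure.map (fun p : ℝ × (Fin d → ℝ) => p.1 • p.2)
        (((volume.restrict (Set.Ioi (0 : ℝ))).withDensity
            (fun r => ENNReal.ofReal ((r ^ 2)⁻¹))).prod ν))
    (Ω : Type) [MeasurableSpace Ω] (P : Measure Ω) [IsProbabilityMeasure P]
    (Z : Ω → (Fin d → ℝ)) (hZ_meas : Measurable Z)
    (hZ_pos : ∀ ω j, 0 < Z ω j)
    (hZ_law : ∀ x : Fin d → ℝ, (∀ j, 0 < x j) →
        P {ω | Z ω ≤ x} = ENNReal.ofReal (Real.exp (-(μ {y | ¬ y ≤ x}).toReal)))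
    :
    (∀ f : (Fin d → ℝ) → ℝ, Measurable f →
      (∃ M : ℝ, ∀ x : Fin d → ℝ, (∀ j, 0 < x j) → |f x| ≤ M) →
      ∀ t s : ℝ, 0 ≤ t → 0 ≤ s → ∀ x : Fin d → ℝ, (∀ j, 0 < x j) →
        (∫ ω, (∫ ω', f (Real.exp (-s) •
              (Real.exp (-t) • x ⊔ (1 - Real.exp (-t)) • Z ω)
            ⊔ (1 - Real.exp (-s)) • Z ω') ∂P) ∂P)
          = ∫ ω, f (Real.exp (-(t + s)) • x ⊔ (1 - Real.exp (-(t + s))) • Z ω) ∂P) ∧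
    (∀ p : ℝ, 1 ≤ p → ∀ f : (Fin d → ℝ) → ℝ, Measurable f →
      (∫⁻ ω, ENNReal.ofReal (|f (Z ω)| ^ p) ∂P) < ⊤ →
      ∀ t : ℝ, 0 ≤ t →
        (∀ᵐ ω ∂P, Integrable
            (fun ω' => f (Real.exp (-t) • Z ω ⊔ (1 - Real.exp (-t)) • Z ω')) P) ∧
        (∫⁻ ω, ENNReal.ofReal
              (|∫ ω', f (Real.exp (-t) • Z ω ⊔ (1 - Real.exp (-t)) • Z ω') ∂P| ^ p) ∂P)
          ≤ ∫⁻ ω, ENNReal.ofReal (|f (Z ω)| ^ p) ∂P) ∧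
    (∀ f : (Fin d → ℝ) → ℝ, Measurable f → Integrable (fun ω => f (Z ω)) P →
      ∀ t : ℝ, 0 ≤ t →
        ∫ ω, (∫ ω', f (Real.exp (-t) • Z ω ⊔ (1 - Real.exp (-t)) • Z ω') ∂P) ∂P
          = ∫ ω, f (Z ω) ∂P) := by
  have hexp1 : ∀ u : ℝ, 0 ≤ u → Real.exp (-u) ≤ 1 := fun u hu =>
    Real.exp_le_one_iff.mpr (neg_nonpos.mpr hu)
  refine ⟨?_, ?_, ?_⟩
  · -- Part 1: semigroup property
    rintro f hf ⟨M, hM⟩ t s ht hs x hx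
    set et := Real.exp (-t) with het
    set es := Real.exp (-s) with hes
    set e := Real.exp (-(t + s)) with he
    have hetpos : 0 < et := Real.exp_pos _
    have hespos : 0 < es := Real.exp_pos _
    have hepos : 0 < e := Real.exp_pos _
    have heeq : es * et = e := by rw [he, het, hes, ← Real.exp_add]; ring_nf
    set a := es * (1 - et) with ha
    set b := 1 - es with hb
    have ha0 : 0 ≤ a := mul_nonneg hespos.le (by linarith [hexp1 t ht])
    have hb0 : 0 ≤ b := by rw [hb]; linarith [hexp1 s hs]
    have hab : a + b = 1 - e := by rw [ha, hb, ← heeq]; ring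
    have hpoint : ∀ ω ω' : Ω, es • (et • x ⊔ (1 - et) • Z ω) ⊔ b • Z ω'
        = e • x ⊔ (a • Z ω ⊔ b • Z ω') := by
      intro ω ω'
      rw [aux_smul_sup hespos.le, smul_smul, smul_smul, heeq, sup_assoc]
    simp only [hpoint]
    have hG : Measurable (fun w : Fin d → ℝ => f (e • x ⊔ w)) :=
      hf.comp (aux_sup_const_meas _)
    have hGb : ∀ w : Fin d → ℝ, |f (e • x ⊔ w)| ≤ M := by
      intro w
      refine hM _ fun j => ?_
      refine lt_of_lt_of_le ?_ ((le_sup_left : e • x ≤ e • x ⊔ w) j)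
      simpa using mul_pos hepos (hx j)
    have hmab : Measurable (fun ω => (a + b) • Z ω) :=
      (measurable_const_smul (a + b)).comp hZ_meas
    have hint1 : Integrable
        (Function.uncurry fun ω ω' : Ω => f (e • x ⊔ (a • Z ω ⊔ b • Z ω'))) (P.prod P) := by
      refine Integrable.mono' (integrable_const M)
        ((hG.comp (aux_meas_pair hZ_meas a b)).aestronglyMeasurable) ?_
      exact Eventually.of_forall fun q => by
        simpa [Real.norm_eq_abs, Function.uncurry] using hGb (a • Z q.1 ⊔ b • Z q.2)
    calc ∫ ω, ∫ ω', f (e • x ⊔ (a • Z ω ⊔ b • Z ω')) ∂P ∂P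
        = ∫ q : Ω × Ω, f (e • x ⊔ (a • Z q.1 ⊔ b • Z q.2)) ∂(P.prod P) :=
          integral_integral hint1
      _ = ∫ w, f (e • x ⊔ w)
            ∂(Measure.map (fun q : Ω × Ω => a • Z q.1 ⊔ b • Z q.2) (P.prod P)) :=
          (integral_map (aux_meas_pair hZ_meas a b).aemeasurable
            hG.aestronglyMeasurable).symm
      _ = ∫ w, f (e • x ⊔ w) ∂(Measure.map (fun ω => (a + b) • Z ω) P) := by
          rw [aux_law ν μ hμ P Z hZ_meas hZ_pos hZ_law a b ha0 hb0]
      _ = ∫ ω, f (e • x ⊔ (a + b) • Z ω) ∂P :=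
          integral_map hmab.aemeasurable hG.aestronglyMeasurable
      _ = ∫ ω, f (e • x ⊔ (1 - e) • Z ω) ∂P := by rw [hab]
  · -- Part 2: Lp contraction
    rintro p hp f hf hfin t ht
    have hp0 : 0 < p := lt_of_lt_of_le one_pos hp
    set a := Real.exp (-t) with ha
    set b := 1 - Real.exp (-t) with hb
    have ha0 : 0 ≤ a := (Real.exp_pos _).le
    have hb0 : 0 ≤ b := by rw [hb]; linarith [hexp1 t ht]
    have hab : a + b = 1 := by rw [ha, hb]; ring
    have hh := aux_meas_pair hZ_meas a b
    have hlaw : Measure.map (fun q : Ω × Ω => a • Z q.1 ⊔ b • Z q.2) (P.prod P)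
        = Measure.map Z P := by
      rw [aux_law ν μ hμ P Z hZ_meas hZ_pos hZ_law a b ha0 hb0, hab]
      have : (fun ω => (1:ℝ) • Z ω) = Z := funext fun ω => one_smul ℝ (Z ω)
      rw [this]
    have hfp : Measurable (fun w : Fin d → ℝ => ENNReal.ofReal (|f w| ^ p)) := by
      apply Measurable.ennreal_ofReal
      fun_prop
    have hFm : Measurable (fun q : Ω × Ω =>
        ENNReal.ofReal (|f (a • Z q.1 ⊔ b • Z q.2)| ^ p)) := hfp.comp hh
    have keyA : ∫⁻ q, ENNReal.ofReal (|f (a • Z q.1 ⊔ b • Z q.2)| ^ p) ∂(P.prod P)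
        = ∫⁻ ω, ENNReal.ofReal (|f (Z ω)| ^ p) ∂P := by
      rw [← lintegral_map hfp hh, hlaw, lintegral_map hfp hZ_meas]
    have keyB : ∫⁻ ω, ∫⁻ ω', ENNReal.ofReal (|f (a • Z ω ⊔ b • Z ω')| ^ p) ∂P ∂P
        = ∫⁻ ω, ENNReal.ofReal (|f (Z ω)| ^ p) ∂P := by
      rw [← MeasureTheory.lintegral_prod _ hFm.aemeasurable, keyA]
    have hgm : ∀ ω, Measurable (fun ω' => f (a • Z ω ⊔ b • Z ω')) := fun ω =>
      hf.comp ((aux_sup_const_meas (a • Z ω)).comp ((measurable_const_smul b).comp hZ_meas))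
    constructor
    · have hae : ∀ᵐ ω ∂P, ∫⁻ ω', ENNReal.ofReal (|f (a • Z ω ⊔ b • Z ω')| ^ p) ∂P < ⊤ := by
        refine ae_lt_top hFm.lintegral_prod_right' ?_
        rw [keyB]
        exact hfin.ne
      filter_upwards [hae] with ω hω
      refine ⟨(hgm ω).aestronglyMeasurable, ?_⟩
      refine lt_of_le_of_lt (lintegral_mono fun ω' => aux_nnnorm_le p hp _) ?_
      rw [lintegral_add_left measurable_const, lintegral_const, measure_univ, mul_one]
      exact ENNReal.add_lt_top.mpr ⟨ENNReal.one_lt_top, hω⟩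
    · refine le_trans (lintegral_mono fun ω => ?_) (le_of_eq keyB)
      exact aux_jensen P p hp _ (hgm ω)
  · -- Part 3: invariance
    rintro f hf hint t ht
    set a := Real.exp (-t) with ha
    set b := 1 - Real.exp (-t) with hb
    have ha0 : 0 ≤ a := (Real.exp_pos _).le
    have hb0 : 0 ≤ b := by rw [hb]; linarith [hexp1 t ht]
    have hab : a + b = 1 := by rw [ha, hb]; ring
    have hh := aux_meas_pair hZ_meas a b
    have hlaw : Measure.map (fun q : Ω × Ω => a • Z q.1 ⊔ b • Z q.2) (P.prod P)
        = Measure.map Z P := by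
      rw [aux_law ν μ hμ P Z hZ_meas hZ_pos hZ_law a b ha0 hb0, hab]
      have : (fun ω => (1:ℝ) • Z ω) = Z := funext fun ω => one_smul ℝ (Z ω)
      rw [this]
    have hint_map : Integrable f (Measure.map Z P) := by
      rw [integrable_map_measure hf.aestronglyMeasurable hZ_meas.aemeasurable]
      exact hint
    have hint_prod : Integrable
        (Function.uncurry fun ω ω' : Ω => f (a • Z ω ⊔ b • Z ω')) (P.prod P) := by
      have h2 : Integrable f
          (Measure.map (fun q : Ω × Ω => a • Z q.1 ⊔ b • Z q.2) (P.prod P)) := by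
        rw [hlaw]; exact hint_map
      have h3 := (integrable_map_measure
        (hlaw ▸ hf.aestronglyMeasurable : AEStronglyMeasurable f
          (Measure.map (fun q : Ω × Ω => a • Z q.1 ⊔ b • Z q.2) (P.prod P)))
        hh.aemeasurable).mp h2
      exact h3
    calc ∫ ω, ∫ ω', f (a • Z ω ⊔ b • Z ω') ∂P ∂P
        = ∫ q : Ω × Ω, f (a • Z q.1 ⊔ b • Z q.2) ∂(P.prod P) := integral_integral hint_prod
      _ = ∫ w, f w ∂(Measure.map (fun q : Ω × Ω => a • Z q.1 ⊔ b • Z q.2) (P.prod P)) :=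
          (integral_map hh.aemeasurable
            (hlaw ▸ hf.aestronglyMeasurable)).symm
      _ = ∫ w, f w ∂(Measure.map Z P) := by rw [hlaw]
      _ = ∫ ω, f (Z ω) ∂P :=
          integral_map hZ_meas.aemeasurable hf.aestronglyMeasurable
end

section
/- For every bounded continuous f : E₀* → ℝ and every x ∈ E₀*, one has P_t f(x) → E[f(Z)] as t → ∞ (the semigroup is ergodic, with stationary measure the law of Z). -/
open MeasureTheory Filter

theorem stmt7
    {d : ℕ} (hd : 1 ≤ d)
    (N : (Fin d → ℝ) → ℝ)
    (hN_zero : ∀ x : Fin d → ℝ, N x = 0 ↔ x = 0)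
    (hN_smul : ∀ (a : ℝ) (x : Fin d → ℝ), N (a • x) = |a| * N x)
    (hN_add : ∀ x y : Fin d → ℝ, N (x + y) ≤ N x + N y)
    (Splus : Set (Fin d → ℝ))
    (hSplus : Splus = {u : Fin d → ℝ | (∀ j, 0 ≤ u j) ∧ N u = 1})
    (hSsub : Splus ⊆ Set.Icc (0 : Fin d → ℝ) 1)
    (ν : Measure (Fin d → ℝ)) [IsFiniteMeasure ν]
    (hν_supp : ν Splusᶜ = 0)
    (hν_mom : ∀ j : Fin d, ∫ u, u j ∂ν = 1)
    (μ : Measure (Fin d → ℝ))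
    (hμ : μ = Measure.map (fun p : ℝ × (Fin d → ℝ) => p.1 • p.2)
        (((volume.restrict (Set.Ioi (0 : ℝ))).withDensity
            (fun r => ENNReal.ofReal ((r ^ 2)⁻¹))).prod ν))
    (Ω : Type) [MeasurableSpace Ω] (P : Measure Ω) [IsProbabilityMeasure P]
    (Z : Ω → (Fin d → ℝ)) (hZ_meas : Measurable Z)
    (hZ_pos : ∀ ω j, 0 < Z ω j)
    (hZ_law : ∀ x : Fin d → ℝ, (∀ j, 0 < x j) →
        P {ω | Z ω ≤ x} = ENNReal.ofReal (Real.exp (-(μ {y | ¬ y ≤ x}).toReal)))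
    (f : (Fin d → ℝ) → ℝ)
    (hf_cont : ContinuousOn f {x : Fin d → ℝ | ∀ j, 0 < x j})
    (hf_bdd : ∃ M : ℝ, ∀ x : Fin d → ℝ, (∀ j, 0 < x j) → |f x| ≤ M)
    (x : Fin d → ℝ) (hx : ∀ j, 0 < x j) :
    Tendsto (fun t : ℝ => ∫ ω, f (Real.exp (-t) • x ⊔ (1 - Real.exp (-t)) • Z ω) ∂P)
      atTop (nhds (∫ ω, f (Z ω) ∂P)) := by
  obtain ⟨M, hM⟩ := hf_bdd
  have hU_open : IsOpen {x : Fin d → ℝ | ∀ j, 0 < x j} := by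
    have : {x : Fin d → ℝ | ∀ j, 0 < x j} = ⋂ j, {x : Fin d → ℝ | 0 < x j} := by
      ext y; simp
    rw [this]
    exact isOpen_iInter_of_finite fun j => isOpen_lt continuous_const (continuous_apply j)
  have hmem : ∀ (t : ℝ) (ω : Ω),
      (Real.exp (-t) • x ⊔ (1 - Real.exp (-t)) • Z ω) ∈ {x : Fin d → ℝ | ∀ j, 0 < x j} := by
    intro t ω j
    have h1 : 0 < Real.exp (-t) * x j := mul_pos (Real.exp_pos _) (hx j)
    simp only [Pi.sup_apply, Pi.smul_apply, smul_eq_mul]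
    exact lt_of_lt_of_le h1 (le_max_left _ _)
  apply tendsto_integral_filter_of_dominated_convergence (fun _ => M)
  · refine Eventually.of_forall fun t => ?_
    have hg : Measurable (fun ω => Real.exp (-t) • x ⊔ (1 - Real.exp (-t)) • Z ω) := by
      refine measurable_pi_iff.mpr fun j => ?_
      simp only [Pi.sup_apply, Pi.smul_apply, smul_eq_mul]
      exact measurable_const.max (((measurable_pi_apply j).comp hZ_meas).const_mul _)
    have hres : Continuous ({x : Fin d → ℝ | ∀ j, 0 < x j}.restrict f) :=
      continuousOn_iff_continuous_restrict.mp hf_cont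
    have heq : (fun ω => f (Real.exp (-t) • x ⊔ (1 - Real.exp (-t)) • Z ω)) =
        ({x : Fin d → ℝ | ∀ j, 0 < x j}.restrict f) ∘
          (fun ω => (⟨_, hmem t ω⟩ : {x : Fin d → ℝ | ∀ j, 0 < x j})) := rfl
    rw [heq]
    exact (hres.measurable.comp (hg.subtype_mk)).aestronglyMeasurable
  · exact Eventually.of_forall fun t => ae_of_all _ fun ω => by
      rw [Real.norm_eq_abs]; exact hM _ (hmem t ω)
  · exact integrable_const M
  · refine ae_of_all _ fun ω => ?_
    have hZU : Z ω ∈ {x : Fin d → ℝ | ∀ j, 0 < x j} := fun j => hZ_pos ω j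
    have hfc : ContinuousAt f (Z ω) := hf_cont.continuousAt (hU_open.mem_nhds hZU)
    have hg : Tendsto (fun t => Real.exp (-t) • x ⊔ (1 - Real.exp (-t)) • Z ω)
        atTop (nhds (Z ω)) := by
      rw [tendsto_pi_nhds]
      intro j
      simp only [Pi.sup_apply, Pi.smul_apply, smul_eq_mul]
      have hexp : Tendsto (fun t : ℝ => Real.exp (-t)) atTop (nhds 0) :=
        Real.tendsto_exp_atBot.comp tendsto_neg_atTop_atBot
      have h1 : Tendsto (fun t => Real.exp (-t) * x j) atTop (nhds 0) := by
        simpa using hexp.mul_const (x j)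
      have h2 : Tendsto (fun t => (1 - Real.exp (-t)) * Z ω j) atTop (nhds (Z ω j)) := by
        have := ((tendsto_const_nhds (x := (1:ℝ))).sub hexp).mul_const (Z ω j)
        simpa using this
      have := h1.max h2
      rwa [max_eq_right (le_of_lt (hZ_pos ω j))] at this
    exact hfc.tendsto.comp hg
end

section
/- Let Z ~ MS(1, ν) and p ∈ [1, ∞). Then E[(μ[0,Z]^c)^p] < ∞, and for every bounded measurable f : E₀* → ℝ one has E[ ( ∫_{E₀} |f(Z ⊕ y) − f(Z)| dμ(y) )^p ] ≤ 2^p (sup_{x ∈ E₀*} |f(x)|)^p · E[(μ[0,Z]^c)^p]. In particular the operator D f(x) := ∫_{E₀} (f(x ⊕ y) − f(x)) dμ(y) maps bounded measurable functions into L^p(ℙ_Z), with ‖D f‖_{L^p(ℙ_Z)} ≤ 2 ‖μ[0,·]^c‖_{L^p(ℙ_Z)} · sup |f|. -/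
open MeasureTheory Filter

set_option maxHeartbeats 1000000

theorem stmt11
    {d : ℕ} (hd : 1 ≤ d)
    (N : (Fin d → ℝ) → ℝ)
    (hN_zero : ∀ x : Fin d → ℝ, N x = 0 ↔ x = 0)
    (hN_smul : ∀ (a : ℝ) (x : Fin d → ℝ), N (a • x) = |a| * N x)
    (hN_add : ∀ x y : Fin d → ℝ, N (x + y) ≤ N x + N y)
    (Splus : Set (Fin d → ℝ))
    (hSplus : Splus = {u : Fin d → ℝ | (∀ j, 0 ≤ u j) ∧ N u = 1})
    (hSsub : Splus ⊆ Set.Icc (0 : Fin d → ℝ) 1)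
    (ν : Measure (Fin d → ℝ)) [IsFiniteMeasure ν]
    (hν_supp : ν Splusᶜ = 0)
    (hν_mom : ∀ j : Fin d, ∫ u, u j ∂ν = 1)
    (μ : Measure (Fin d → ℝ))
    (hμ : μ = Measure.map (fun p : ℝ × (Fin d → ℝ) => p.1 • p.2)
        (((volume.restrict (Set.Ioi (0 : ℝ))).withDensity
            (fun r => ENNReal.ofReal ((r ^ 2)⁻¹))).prod ν))
    (Ω : Type) [MeasurableSpace Ω] (P : Measure Ω) [IsProbabilityMeasure P]
    (Z : Ω → (Fin d → ℝ)) (hZ_meas : Measurable Z)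
    (hZ_pos : ∀ ω j, 0 < Z ω j)
    (hZ_law : ∀ x : Fin d → ℝ, (∀ j, 0 < x j) →
        P {ω | Z ω ≤ x} = ENNReal.ofReal (Real.exp (-(μ {y | ¬ y ≤ x}).toReal)))
    (p : ℝ) (hp : 1 ≤ p) :
    (∫⁻ ω, ENNReal.ofReal ((μ {y | ¬ y ≤ Z ω}).toReal ^ p) ∂P) < ⊤ ∧
    (∀ f : (Fin d → ℝ) → ℝ, Measurable f → ∀ M : ℝ,
      (∀ x : Fin d → ℝ, (∀ j, 0 < x j) → |f x| ≤ M) →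
      (∫⁻ ω, ENNReal.ofReal ((∫ y, |f (Z ω ⊔ y) - f (Z ω)| ∂μ) ^ p) ∂P)
          ≤ ENNReal.ofReal (2 ^ p * M ^ p) *
              ∫⁻ ω, ENNReal.ofReal ((μ {y | ¬ y ≤ Z ω}).toReal ^ p) ∂P ∧
      eLpNorm (fun ω => ∫ y, (f (Z ω ⊔ y) - f (Z ω)) ∂μ) (ENNReal.ofReal p) P
          ≤ ENNReal.ofReal 2 *
              eLpNorm (fun ω => (μ {y | ¬ y ≤ Z ω}).toReal) (ENNReal.ofReal p) P *
              ENNReal.ofReal M) := by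
  classical
  have hp0 : (0:ℝ) < p := lt_of_lt_of_le one_pos hp
  have hp0' : (0:ℝ) ≤ p := hp0.le
  have hφ : Measurable (fun q : ℝ × (Fin d → ℝ) => q.1 • q.2) := by fun_prop
  -- Lemma B : tail integral of r ↦ r⁻²
  have lemB : ∀ a : ℝ, 0 < a →
      (∫⁻ r in Set.Ioi a, ENNReal.ofReal ((r ^ 2)⁻¹)) = ENNReal.ofReal a⁻¹ := by
    intro a ha
    have heq : Set.EqOn (fun r : ℝ => r ^ (-2 : ℝ)) (fun r : ℝ => (r ^ 2)⁻¹) (Set.Ioi a) := by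
      intro r hr
      have hr0 : (0:ℝ) < r := ha.trans hr
      simp only
      rw [Real.rpow_neg hr0.le, show ((2:ℝ)) = ((2:ℕ):ℝ) by norm_num, Real.rpow_natCast]
    have hint : MeasureTheory.IntegrableOn (fun r : ℝ => (r ^ 2)⁻¹) (Set.Ioi a) :=
      (integrableOn_Ioi_rpow_of_lt (by norm_num) ha).congr_fun heq measurableSet_Ioi
    have hval : (∫ r in Set.Ioi a, (r ^ 2)⁻¹) = a⁻¹ := by
      rw [← setIntegral_congr_fun measurableSet_Ioi heq, integral_Ioi_rpow_of_lt (by norm_num) ha]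
      norm_num
      rw [Real.rpow_neg_one]
    rw [← MeasureTheory.ofReal_integral_eq_lintegral_ofReal hint
      (Filter.Eventually.of_forall fun r => by positivity), hval]
  set W : Measure ℝ := (volume.restrict (Set.Ioi (0 : ℝ))).withDensity
      (fun r => ENNReal.ofReal ((r ^ 2)⁻¹)) with hWdef
  have ae_splus : ∀ᵐ u ∂ν, u ∈ Splus := by
    rw [MeasureTheory.ae_iff]
    exact hν_supp
  have hSplus_nn : ∀ u ∈ Splus, ∀ j, 0 ≤ u j := by
    intro u hu j
    have := (hSsub hu).1
    simpa using this j
  have hSplus_le1 : ∀ u ∈ Splus, ∀ j, u j ≤ 1 := by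
    intro u hu j
    have := (hSsub hu).2
    simpa using this j
  have hint_j : ∀ j : Fin d, MeasureTheory.Integrable (fun u : Fin d → ℝ => u j) ν := by
    intro j
    refine ⟨(measurable_pi_apply j).aestronglyMeasurable, ?_⟩
    apply MeasureTheory.HasFiniteIntegral.of_bounded (C := 1)
    filter_upwards [ae_splus] with u hu
    rw [Real.norm_eq_abs, abs_of_nonneg (hSplus_nn u hu j)]
    exact hSplus_le1 u hu j
  have ae_nn_j : ∀ j : Fin d, 0 ≤ᵐ[ν] fun u : Fin d → ℝ => u j := by
    intro j
    filter_upwards [ae_splus] with u hu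
    exact hSplus_nn u hu j
  -- Lemma C : μ {y | t < y j} = ofReal t⁻¹
  have lemC : ∀ t : ℝ, 0 < t → ∀ j : Fin d,
      μ {y : Fin d → ℝ | t < y j} = ENNReal.ofReal t⁻¹ := by
    intro t ht j
    have hS : MeasurableSet {y : Fin d → ℝ | t < y j} :=
      measurableSet_lt measurable_const (measurable_pi_apply j)
    rw [hμ, Measure.map_apply hφ hS, Measure.prod_apply_symm (hφ hS)]
    have key : ∀ᵐ u ∂ν,
        W ((fun r : ℝ => (r, u)) ⁻¹'
            ((fun q : ℝ × (Fin d → ℝ) => q.1 • q.2) ⁻¹' {y | t < y j}))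
          = ENNReal.ofReal (u j) * ENNReal.ofReal t⁻¹ := by
      filter_upwards [ae_splus] with u hu
      have h0 : 0 ≤ u j := hSplus_nn u hu j
      have hset : ((fun r : ℝ => (r, u)) ⁻¹'
          ((fun q : ℝ × (Fin d → ℝ) => q.1 • q.2) ⁻¹' {y | t < y j}))
          = {r : ℝ | t < r * u j} := by
        ext r
        simp [Pi.smul_apply, smul_eq_mul]
      rw [hset]
      rcases eq_or_lt_of_le h0 with h0' | h0'
      · have hempty : {r : ℝ | t < r * u j} = ∅ := by
          ext r
          simp only [Set.mem_setOf_eq, Set.mem_empty_iff_false, iff_false, not_lt, ← h0',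
            mul_zero]
          exact ht.le
        rw [hempty, measure_empty, ← h0']
        simp
      · have hset2 : {r : ℝ | t < r * u j} = Set.Ioi (t / u j) := by
          ext r
          simp only [Set.mem_setOf_eq, Set.mem_Ioi]
          rw [div_lt_iff₀ h0', mul_comm]
        have ha : 0 < t / u j := div_pos ht h0'
        have hsub : Set.Ioi (t / u j) ⊆ Set.Ioi (0:ℝ) := fun r hr => lt_trans ha hr
        rw [hset2, hWdef, MeasureTheory.withDensity_apply _ measurableSet_Ioi,
            Measure.restrict_restrict measurableSet_Ioi,
            Set.inter_eq_self_of_subset_left hsub, lemB _ ha, ← ENNReal.ofReal_mul h0]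
        congr 1
        field_simp
    rw [MeasureTheory.lintegral_congr_ae key,
        MeasureTheory.lintegral_mul_const' _ _ ENNReal.ofReal_ne_top,
        ← MeasureTheory.ofReal_integral_eq_lintegral_ofReal (hint_j j) (ae_nn_j j), hν_mom j]
    simp
  -- Lemma A : finiteness of the exponent measure of the complement
  have hsetU : ∀ x : Fin d → ℝ, {y : Fin d → ℝ | ¬ y ≤ x} = ⋃ j, {y : Fin d → ℝ | x j < y j} := by
    intro x
    ext y
    simp [Pi.le_def, not_forall, not_le]
  have lemA : ∀ x : Fin d → ℝ, (∀ j, 0 < x j) →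
      μ {y | ¬ y ≤ x} ≤ ENNReal.ofReal (∑ j, (x j)⁻¹) := by
    intro x hx
    rw [hsetU x]
    refine le_trans (measure_iUnion_fintype_le μ _) ?_
    rw [ENNReal.ofReal_sum_of_nonneg (fun j _ => inv_nonneg.mpr (hx j).le)]
    exact Finset.sum_le_sum fun j _ => le_of_eq (lemC _ (hx j) j)
  have lemA_fin : ∀ x : Fin d → ℝ, (∀ j, 0 < x j) → μ {y | ¬ y ≤ x} ≠ ⊤ :=
    fun x hx => ne_top_of_le_ne_top ENNReal.ofReal_ne_top (lemA x hx)
  have lemA_toReal : ∀ x : Fin d → ℝ, (∀ j, 0 < x j) →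
      (μ {y | ¬ y ≤ x}).toReal ≤ ∑ j, (x j)⁻¹ :=
    fun x hx => ENNReal.toReal_le_of_le_ofReal
      (Finset.sum_nonneg fun j _ => inv_nonneg.mpr (hx j).le) (lemA x hx)
  have lemA_lower : ∀ x : Fin d → ℝ, (∀ j, 0 < x j) → ∀ j,
      (x j)⁻¹ ≤ (μ {y | ¬ y ≤ x}).toReal := by
    intro x hx j
    have hsub : {y : Fin d → ℝ | x j < y j} ⊆ {y | ¬ y ≤ x} := by
      intro y hy hle
      exact absurd (hle j) (not_le.mpr hy)
    have h1 := measure_mono (μ := μ) hsub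
    rw [lemC _ (hx j) j] at h1
    have h2 := ENNReal.toReal_mono (lemA_fin x hx) h1
    rwa [ENNReal.toReal_ofReal (inv_nonneg.mpr (hx j).le)] at h2
  -- Lemma D : marginal tail bound
  have lemD : ∀ j : Fin d, ∀ t : ℝ, 0 < t →
      P {ω | Z ω j ≤ t} ≤ ENNReal.ofReal (Real.exp (-t⁻¹)) := by
    intro j t ht
    set x : ℕ → (Fin d → ℝ) := fun n k => if k = j then t else (n : ℝ) + 1 with hxdef
    have hxpos : ∀ n k, 0 < x n k := by
      intro n k
      by_cases h : k = j <;> simp [hxdef, h, ht] <;> positivity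
    have hcup : {ω | Z ω j ≤ t} = ⋃ n, {ω | Z ω ≤ x n} := by
      ext ω
      simp only [Set.mem_setOf_eq, Set.mem_iUnion]
      constructor
      · intro h
        obtain ⟨n, hn⟩ := exists_nat_ge (∑ k, |Z ω k|)
        refine ⟨n, fun k => ?_⟩
        by_cases hk : k = j
        · subst hk
          simpa [hxdef] using h
        · have h1 : Z ω k ≤ ∑ k', |Z ω k'| :=
            le_trans (le_abs_self _)
              (Finset.single_le_sum (f := fun k' => |Z ω k'|) (fun i _ => abs_nonneg _) (Finset.mem_univ k))
          simp only [hxdef, hk, if_false]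
          linarith
      · rintro ⟨n, hn⟩
        have := hn j
        simpa [hxdef] using this
    have hmono : Monotone fun n => {ω | Z ω ≤ x n} := by
      intro n m hnm ω h
      simp only [Set.mem_setOf_eq] at h ⊢
      have hxm : x n ≤ x m := by
        refine Pi.le_def.mpr fun k => ?_
        by_cases hk : k = j <;> simp only [hxdef, hk, if_true, if_false, le_refl]
        have : (n:ℝ) ≤ m := by exact_mod_cast hnm
        linarith
      exact le_trans h hxm
    rw [hcup, (hmono.directed_le).measure_iUnion]
    refine iSup_le fun n => ?_
    rw [hZ_law (x n) (hxpos n)]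
    apply ENNReal.ofReal_le_ofReal
    apply Real.exp_le_exp.mpr
    apply neg_le_neg
    have := lemA_lower (x n) (hxpos n) j
    simpa [hxdef] using this
  -- Lemma E : moments of reciprocal marginals
  have hZj_meas : ∀ j : Fin d, Measurable fun ω => Z ω j :=
    fun j => (measurable_pi_apply j).comp hZ_meas
  have lemE : ∀ j : Fin d, (∫⁻ ω, ENNReal.ofReal ((Z ω j)⁻¹ ^ p) ∂P) < ⊤ := by
    intro j
    have fmble : AEMeasurable (fun ω => (Z ω j)⁻¹) P := ((hZj_meas j).inv).aemeasurable
    have fnn : 0 ≤ᵐ[P] fun ω => (Z ω j)⁻¹ :=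
      Filter.Eventually.of_forall fun ω => inv_nonneg.mpr (hZ_pos ω j).le
    rw [MeasureTheory.lintegral_rpow_eq_lintegral_meas_lt_mul P fnn fmble hp0]
    have hbound : (∫⁻ t in Set.Ioi (0:ℝ),
          P {ω | t < (Z ω j)⁻¹} * ENNReal.ofReal (t ^ (p-1)))
        ≤ ∫⁻ t in Set.Ioi (0:ℝ), ENNReal.ofReal (Real.exp (-t) * t ^ (p-1)) := by
      have hmrp : Measurable fun t : ℝ => ENNReal.ofReal (Real.exp (-t) * t ^ (p-1)) :=
        ((Real.measurable_exp.comp measurable_neg).mul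
          (Real.continuous_rpow_const (by linarith)).measurable).ennreal_ofReal
      refine MeasureTheory.setLIntegral_mono hmrp (fun t ht => ?_)
      rw [ENNReal.ofReal_mul (le_of_lt (Real.exp_pos _))]
      refine mul_le_mul_left ?_ _
      have ht' : (0:ℝ) < t := ht
      have hsub : {ω | t < (Z ω j)⁻¹} ⊆ {ω | Z ω j ≤ t⁻¹} := by
        intro ω hω
        have hz := hZ_pos ω j
        simp only [Set.mem_setOf_eq] at hω ⊢
        nlinarith [mul_inv_cancel₀ (ne_of_gt ht'), mul_inv_cancel₀ (ne_of_gt hz),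
          mul_pos ht' hz, inv_pos.mpr ht', inv_pos.mpr hz]
      refine le_trans (measure_mono hsub) ?_
      have := lemD j t⁻¹ (inv_pos.mpr ht')
      simpa [inv_inv] using this
    have hGamma := (Real.GammaIntegral_convergent hp0).lintegral_lt_top
    exact ENNReal.mul_lt_top ENNReal.ofReal_lt_top (lt_of_le_of_lt hbound hGamma)
  have Vnn : ∀ ω, (0:ℝ) ≤ (μ {y | ¬ y ≤ Z ω}).toReal := fun ω => ENNReal.toReal_nonneg
  have hd0 : (0:ℝ) < d := by
    have : (1:ℝ) ≤ d := by exact_mod_cast hd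
    linarith
  -- Part 1
  have part1 : (∫⁻ ω, ENNReal.ofReal ((μ {y | ¬ y ≤ Z ω}).toReal ^ p) ∂P) < ⊤ := by
    have hb : ∀ ω, ENNReal.ofReal ((μ {y | ¬ y ≤ Z ω}).toReal ^ p)
        ≤ ENNReal.ofReal ((d:ℝ) ^ (p-1)) * ∑ j, ENNReal.ofReal ((Z ω j)⁻¹ ^ p) := by
      intro ω
      have h1 : (μ {y | ¬ y ≤ Z ω}).toReal ^ p ≤ (∑ j, (Z ω j)⁻¹) ^ p :=
        Real.rpow_le_rpow (Vnn ω) (lemA_toReal _ (hZ_pos ω)) hp0'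
      have h2 : (∑ j : Fin d, (Z ω j)⁻¹) ^ p ≤ (d:ℝ) ^ (p-1) * ∑ j, (Z ω j)⁻¹ ^ p := by
        have key := Real.rpow_arith_mean_le_arith_mean_rpow Finset.univ
          (fun _ : Fin d => (d:ℝ)⁻¹) (fun j => (d:ℝ) * (Z ω j)⁻¹)
          (fun i _ => inv_nonneg.mpr hd0.le)
          (by
            simp only [Finset.sum_const, Finset.card_univ, Fintype.card_fin, nsmul_eq_mul]
            field_simp)
          (fun i _ => mul_nonneg hd0.le (inv_nonneg.mpr (hZ_pos ω i).le)) hp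
        have e1 : ∀ j : Fin d, (d:ℝ)⁻¹ * ((d:ℝ) * (Z ω j)⁻¹) = (Z ω j)⁻¹ := by
          intro j
          field_simp
        have e2 : ∀ j : Fin d, (d:ℝ)⁻¹ * ((d:ℝ) * (Z ω j)⁻¹) ^ p
            = (d:ℝ) ^ (p-1) * (Z ω j)⁻¹ ^ p := by
          intro j
          rw [Real.mul_rpow hd0.le (inv_nonneg.mpr (hZ_pos ω j).le), Real.rpow_sub hd0, Real.rpow_one]
          field_simp
        calc (∑ j : Fin d, (Z ω j)⁻¹) ^ p
            ≤ ∑ j : Fin d, (d:ℝ)⁻¹ * ((d:ℝ) * (Z ω j)⁻¹) ^ p := by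
              refine le_trans (le_of_eq ?_) key
              congr 1
              exact (Finset.sum_congr rfl fun j _ => (e1 j).symm)
          _ = ∑ j : Fin d, (d:ℝ) ^ (p-1) * (Z ω j)⁻¹ ^ p :=
              Finset.sum_congr rfl fun j _ => e2 j
          _ = (d:ℝ) ^ (p-1) * ∑ j, (Z ω j)⁻¹ ^ p := by rw [Finset.mul_sum]
      calc ENNReal.ofReal ((μ {y | ¬ y ≤ Z ω}).toReal ^ p)
          ≤ ENNReal.ofReal ((d:ℝ) ^ (p-1) * ∑ j, (Z ω j)⁻¹ ^ p) :=
            ENNReal.ofReal_le_ofReal (h1.trans h2)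
        _ = ENNReal.ofReal ((d:ℝ) ^ (p-1)) * ENNReal.ofReal (∑ j, (Z ω j)⁻¹ ^ p) :=
            ENNReal.ofReal_mul (Real.rpow_nonneg hd0.le _)
        _ = ENNReal.ofReal ((d:ℝ) ^ (p-1)) * ∑ j, ENNReal.ofReal ((Z ω j)⁻¹ ^ p) := by
            rw [ENNReal.ofReal_sum_of_nonneg
              (fun j _ => Real.rpow_nonneg (inv_nonneg.mpr (hZ_pos ω j).le) _)]
    have hmeas_j : ∀ j : Fin d, Measurable fun ω => ENNReal.ofReal ((Z ω j)⁻¹ ^ p) := by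
      intro j
      exact ((Real.continuous_rpow_const hp0').measurable.comp ((hZj_meas j).inv)).ennreal_ofReal
    calc (∫⁻ ω, ENNReal.ofReal ((μ {y | ¬ y ≤ Z ω}).toReal ^ p) ∂P)
        ≤ ∫⁻ ω, ENNReal.ofReal ((d:ℝ) ^ (p-1)) * ∑ j, ENNReal.ofReal ((Z ω j)⁻¹ ^ p) ∂P :=
          MeasureTheory.lintegral_mono hb
      _ = ENNReal.ofReal ((d:ℝ) ^ (p-1)) *
            ∫⁻ ω, ∑ j, ENNReal.ofReal ((Z ω j)⁻¹ ^ p) ∂P :=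
          MeasureTheory.lintegral_const_mul' _ _ ENNReal.ofReal_ne_top
      _ = ENNReal.ofReal ((d:ℝ) ^ (p-1)) *
            ∑ j, ∫⁻ ω, ENNReal.ofReal ((Z ω j)⁻¹ ^ p) ∂P := by
          rw [MeasureTheory.lintegral_finset_sum _ (fun j _ => hmeas_j j)]
      _ < ⊤ := ENNReal.mul_lt_top ENNReal.ofReal_lt_top
          (ENNReal.sum_lt_top.mpr fun j _ => lemE j)
  refine ⟨part1, ?_⟩
  intro f hf M hM
  have hΩ : Nonempty Ω := by
    by_contra h
    rw [not_nonempty_iff] at h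
    have h1 := measure_univ (μ := P)
    rw [Set.univ_eq_empty_iff.mpr h, measure_empty] at h1
    exact zero_ne_one h1
  obtain ⟨ω₀⟩ := hΩ
  have hM0 : 0 ≤ M := le_trans (abs_nonneg _) (hM (Z ω₀) (hZ_pos ω₀))
  -- core bound
  have hcore : ∀ ω, (∫ y, |f (Z ω ⊔ y) - f (Z ω)| ∂μ)
      ≤ 2 * M * (μ {y | ¬ y ≤ Z ω}).toReal := by
    intro ω
    have hA : MeasurableSet {y : Fin d → ℝ | ¬ y ≤ Z ω} := by
      have hle : MeasurableSet {y : Fin d → ℝ | y ≤ Z ω} := by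
        have : {y : Fin d → ℝ | y ≤ Z ω} = ⋂ j, {y : Fin d → ℝ | y j ≤ Z ω j} := by
          ext y
          simp [Pi.le_def]
        rw [this]
        exact MeasurableSet.iInter fun j =>
          measurableSet_le (measurable_pi_apply j) measurable_const
      exact hle.compl
    have hAfin : μ {y | ¬ y ≤ Z ω} ≠ ⊤ := lemA_fin _ (hZ_pos ω)
    have hind : MeasureTheory.Integrable
        ({y : Fin d → ℝ | ¬ y ≤ Z ω}.indicator (fun _ => 2 * M)) μ :=
      (MeasureTheory.integrable_indicator_iff hA).mpr
        ((MeasureTheory.integrableOn_const_iff).mpr (Or.inr hAfin.lt_top))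
    have hle : ∀ y, |f (Z ω ⊔ y) - f (Z ω)|
        ≤ {y : Fin d → ℝ | ¬ y ≤ Z ω}.indicator (fun _ => 2 * M) y := by
      intro y
      by_cases hy : y ≤ Z ω
      · have hxy : Z ω ⊔ y = Z ω := sup_eq_left.mpr hy
        have hnm : y ∉ {y : Fin d → ℝ | ¬ y ≤ Z ω} := fun hmem => hmem hy
        have hzero : {y : Fin d → ℝ | ¬ y ≤ Z ω}.indicator (fun _ => 2 * M) y = 0 :=
          Set.indicator_of_notMem hnm _
        rw [hxy, hzero]
        simp
      · have hmem : y ∈ {y : Fin d → ℝ | ¬ y ≤ Z ω} := hy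
        have hval : {y : Fin d → ℝ | ¬ y ≤ Z ω}.indicator (fun _ => 2 * M) y = 2 * M :=
          Set.indicator_of_mem hmem _
        rw [hval]
        have hpos : ∀ j, 0 < (Z ω ⊔ y) j := by
          intro j
          have hle : Z ω j ≤ (Z ω ⊔ y) j := by
            rw [Pi.sup_apply]
            exact le_sup_left
          exact lt_of_lt_of_le (hZ_pos ω j) hle
        have h1 : |f (Z ω ⊔ y)| ≤ M := hM _ hpos
        have h2 : |f (Z ω)| ≤ M := hM _ (hZ_pos ω)
        calc |f (Z ω ⊔ y) - f (Z ω)| ≤ |f (Z ω ⊔ y)| + |f (Z ω)| := abs_sub _ _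
          _ ≤ 2 * M := by rw [two_mul]; exact add_le_add h1 h2
    refine le_trans (MeasureTheory.integral_mono_of_nonneg
      (Filter.Eventually.of_forall fun y => abs_nonneg _) hind
      (Filter.Eventually.of_forall hle)) ?_
    rw [MeasureTheory.integral_indicator_const _ hA, smul_eq_mul]
    exact le_of_eq (mul_comm _ _)
  have hint_nonneg : ∀ ω, (0:ℝ) ≤ ∫ y, |f (Z ω ⊔ y) - f (Z ω)| ∂μ :=
    fun ω => MeasureTheory.integral_nonneg fun y => abs_nonneg _
  constructor
  · -- first inequality
    have step : ∀ ω, ENNReal.ofReal ((∫ y, |f (Z ω ⊔ y) - f (Z ω)| ∂μ) ^ p)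
        ≤ ENNReal.ofReal (2 ^ p * M ^ p) *
            ENNReal.ofReal ((μ {y | ¬ y ≤ Z ω}).toReal ^ p) := by
      intro ω
      have h1 : (∫ y, |f (Z ω ⊔ y) - f (Z ω)| ∂μ) ^ p
          ≤ (2 * M * (μ {y | ¬ y ≤ Z ω}).toReal) ^ p :=
        Real.rpow_le_rpow (hint_nonneg ω) (hcore ω) hp0'
      have h2 : (2 * M * (μ {y | ¬ y ≤ Z ω}).toReal) ^ p
          = 2 ^ p * M ^ p * (μ {y | ¬ y ≤ Z ω}).toReal ^ p := by
        rw [Real.mul_rpow (mul_nonneg (by norm_num) hM0) (Vnn ω), Real.mul_rpow (by norm_num) hM0]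
      rw [← ENNReal.ofReal_mul
        (mul_nonneg (Real.rpow_nonneg (by norm_num) _) (Real.rpow_nonneg hM0 _))]
      exact ENNReal.ofReal_le_ofReal (le_trans h1 (le_of_eq h2))
    calc (∫⁻ ω, ENNReal.ofReal ((∫ y, |f (Z ω ⊔ y) - f (Z ω)| ∂μ) ^ p) ∂P)
        ≤ ∫⁻ ω, ENNReal.ofReal (2 ^ p * M ^ p) *
            ENNReal.ofReal ((μ {y | ¬ y ≤ Z ω}).toReal ^ p) ∂P :=
          MeasureTheory.lintegral_mono step
      _ = ENNReal.ofReal (2 ^ p * M ^ p) *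
            ∫⁻ ω, ENNReal.ofReal ((μ {y | ¬ y ≤ Z ω}).toReal ^ p) ∂P :=
          MeasureTheory.lintegral_const_mul' _ _ ENNReal.ofReal_ne_top
  · -- eLpNorm inequality
    have habs : ∀ ω, ‖∫ y, (f (Z ω ⊔ y) - f (Z ω)) ∂μ‖
        ≤ 2 * M * (μ {y | ¬ y ≤ Z ω}).toReal := by
      intro ω
      refine le_trans (MeasureTheory.norm_integral_le_integral_norm _) ?_
      simpa [Real.norm_eq_abs] using hcore ω
    calc eLpNorm (fun ω => ∫ y, (f (Z ω ⊔ y) - f (Z ω)) ∂μ) (ENNReal.ofReal p) P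
        ≤ eLpNorm (fun ω => 2 * M * (μ {y | ¬ y ≤ Z ω}).toReal) (ENNReal.ofReal p) P :=
          MeasureTheory.eLpNorm_mono_real habs
      _ = (‖(2 * M : ℝ)‖₊ : ENNReal) *
            eLpNorm (fun ω => (μ {y | ¬ y ≤ Z ω}).toReal) (ENNReal.ofReal p) P := by
          have hsmul : (fun ω => 2 * M * (μ {y | ¬ y ≤ Z ω}).toReal)
              = (2 * M : ℝ) • (fun ω => (μ {y | ¬ y ≤ Z ω}).toReal) := rfl
          rw [hsmul, MeasureTheory.eLpNorm_const_smul, enorm_eq_nnnorm]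
      _ ≤ ENNReal.ofReal 2 *
            eLpNorm (fun ω => (μ {y | ¬ y ≤ Z ω}).toReal) (ENNReal.ofReal p) P *
            ENNReal.ofReal M := by
          rw [← enorm_eq_nnnorm, Real.enorm_eq_ofReal (mul_nonneg (by norm_num) hM0), ENNReal.ofReal_mul (by norm_num)]
          rw [mul_right_comm]
end

section
/- Let f ∈ C¹(E₀*) be log-Lipschitz. Then for every x ∈ E₀* both of the following integrals converge absolutely and are equal: ∫_{E₀} (f(x ⊕ y) − f(x)) dμ(y) = ∫_{E₀} ∑_{j=1}^d y_j (∂_j f)(x ⊕ y) 𝟙{y_j > x_j} dμ(y). -/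
open MeasureTheory Filter Set

namespace Stmt12Aux

lemma pi_decomp {d : ℕ} (w : Fin d → ℝ) : ∑ j, w j • (Pi.single j 1 : Fin d → ℝ) = w := by
  funext i
  rw [Finset.sum_apply]
  simp [Pi.single_apply]

lemma isOpenU {d : ℕ} : IsOpen {z : Fin d → ℝ | ∀ j, 0 < z j} := by
  have h : {z : Fin d → ℝ | ∀ j, 0 < z j} = ⋂ j, (fun z : Fin d → ℝ => z j) ⁻¹' Ioi 0 := by
    ext z; simp
  rw [h]
  exact isOpen_iInter_of_finite fun j => isOpen_Ioi.preimage (continuous_apply j)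

lemma meas_inv_sq : Measurable fun r : ℝ => ((r:ℝ)^2)⁻¹ := by fun_prop

lemma wd_int (G : ℝ → ℝ) :
    (∫ r, G r ∂((volume.restrict (Ioi (0:ℝ))).withDensity (fun r => ENNReal.ofReal ((r^2)⁻¹))))
      = ∫ r in Ioi (0:ℝ), G r * ((r^2)⁻¹) := by
  have hmeas : Measurable fun r : ℝ => ((r^2)⁻¹ : ℝ).toNNReal :=
    meas_inv_sq.real_toNNReal
  have hd : (fun r : ℝ => ENNReal.ofReal ((r^2)⁻¹))
      = fun r : ℝ => (((((r:ℝ)^2)⁻¹).toNNReal : NNReal) : ENNReal) := rfl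
  rw [hd, integral_withDensity_eq_integral_smul hmeas]
  apply integral_congr_ae
  apply Eventually.of_forall
  intro r
  show ((((r:ℝ)^2)⁻¹).toNNReal : NNReal) • G r = G r * ((r^2)⁻¹)
  rw [NNReal.smul_def, Real.coe_toNNReal _ (inv_nonneg.2 (sq_nonneg r)), smul_eq_mul, mul_comm]

lemma wd_integrable (G : ℝ → ℝ) :
    Integrable G ((volume.restrict (Ioi (0:ℝ))).withDensity (fun r => ENNReal.ofReal ((r^2)⁻¹)))
      ↔ IntegrableOn (fun r => G r * ((r^2)⁻¹)) (Ioi (0:ℝ)) := by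
  rw [integrable_withDensity_iff meas_inv_sq.ennreal_ofReal
    (Eventually.of_forall fun r => ENNReal.ofReal_lt_top)]
  have h : (fun r : ℝ => G r * (ENNReal.ofReal ((r^2)⁻¹)).toReal) = fun r => G r * ((r^2)⁻¹) := by
    funext r; rw [ENNReal.toReal_ofReal (inv_nonneg.2 (sq_nonneg r))]
  rw [h]
  rfl


theorem core {d : ℕ} {f : (Fin d → ℝ) → ℝ}
    (hf : ContDiffOn ℝ 1 f {z : Fin d → ℝ | ∀ j, 0 < z j})
    {C : ℝ} (hC0 : 0 < C)
    (hC : ∀ z : Fin d → ℝ, (∀ j, 0 < z j) → ∀ j, z j * |fderiv ℝ f z (Pi.single j 1)| ≤ C)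
    {x : Fin d → ℝ} (hx : ∀ j, 0 < x j)
    {m : ℝ} (hm : 0 < m) (hmx : ∀ j, m ≤ x j)
    {u : Fin d → ℝ} (hu0 : ∀ j, 0 ≤ u j) (hu1 : ∀ j, u j ≤ 1) :
    IntegrableOn (fun r : ℝ => (f (x ⊔ r • u) - f x) * ((r ^ 2)⁻¹)) (Ioi 0) volume ∧
    IntegrableOn (fun r : ℝ => (∑ j, (r • u) j * fderiv ℝ f (x ⊔ r • u) (Pi.single j 1)
        * (if x j < (r • u) j then 1 else 0)) * ((r ^ 2)⁻¹)) (Ioi 0) volume ∧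
    (∫ r in Ioi (0:ℝ), (f (x ⊔ r • u) - f x) * ((r ^ 2)⁻¹))
      = (∫ r in Ioi (0:ℝ), (∑ j, (r • u) j * fderiv ℝ f (x ⊔ r • u) (Pi.single j 1)
        * (if x j < (r • u) j then 1 else 0)) * ((r ^ 2)⁻¹)) ∧
    (∫ r in Ioi (0:ℝ), |(f (x ⊔ r • u) - f x) * ((r ^ 2)⁻¹)|)
      ≤ (∫ r in Ioi m, (2 * d * C / Real.sqrt m) * r ^ (-(3/2) : ℝ)) ∧
    (∫ r in Ioi (0:ℝ), |(∑ j, (r • u) j * fderiv ℝ f (x ⊔ r • u) (Pi.single j 1)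
        * (if x j < (r • u) j then 1 else 0)) * ((r ^ 2)⁻¹)|)
      ≤ (∫ r in Ioi m, (d * C) * r ^ (-(2:ℝ))) := by
  classical
  have hd0 : (0:ℝ) ≤ d * C := by positivity
  have hU : IsOpen {z : Fin d → ℝ | ∀ j, 0 < z j} := isOpenU
  have hmem : ∀ s : ℝ, (x ⊔ s • u) ∈ {z : Fin d → ℝ | ∀ j, 0 < z j} := by
    intro s j
    have h1 : x ≤ x ⊔ s • u := le_sup_left
    exact lt_of_lt_of_le (hx j) (h1 j)
  have key_lt : ∀ s < m, ∀ j, s * u j < x j := by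
    intro s hs j
    rcases (hu0 j).eq_or_lt with h0 | h0
    · rw [← h0, mul_zero]; exact hx j
    · calc s * u j < m * u j := mul_lt_mul_of_pos_right hs h0
        _ ≤ m * 1 := mul_le_mul_of_nonneg_left (hu1 j) hm.le
        _ ≤ x j := by rw [mul_one]; exact hmx j
  have key_le : ∀ s ≤ m, ∀ j, s * u j ≤ x j := by
    intro s hs j
    rcases (hu0 j).eq_or_lt with h0 | h0
    · rw [← h0, mul_zero]; exact (hx j).le
    · calc s * u j ≤ m * u j := mul_le_mul_of_nonneg_right hs h0.le
        _ ≤ m * 1 := mul_le_mul_of_nonneg_left (hu1 j) hm.le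
        _ ≤ x j := by rw [mul_one]; exact hmx j
  have hAeq : ∀ s ≤ m, x ⊔ s • u = x := by
    intro s hs
    funext j
    have h1 := key_le s hs j
    simp only [Pi.sup_apply, Pi.smul_apply, smul_eq_mul]
    exact sup_eq_left.2 h1
  have hAc : Continuous fun s : ℝ => x ⊔ s • u := by
    apply continuous_pi; intro j
    simp only [Pi.sup_apply, Pi.smul_apply, smul_eq_mul]
    exact continuous_const.sup (continuous_id.mul continuous_const)
  have hhc : Continuous fun s : ℝ => f (x ⊔ s • u) :=
    hf.continuousOn.comp_continuous hAc hmem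
  have hdc : Continuous fun s : ℝ => fderiv ℝ f (x ⊔ s • u) :=
    (hf.continuousOn_fderiv_of_isOpen hU le_rfl).comp_continuous hAc hmem
  have hdjc : ∀ j, Continuous fun s : ℝ => fderiv ℝ f (x ⊔ s • u) (Pi.single j 1) := fun j => by
    exact (ContinuousLinearMap.apply ℝ ℝ (Pi.single j (1:ℝ))).continuous.comp hdc
  set g : ℝ → ℝ := fun s => ∑ j, if x j ≤ s * u j ∧ u j ≠ 0 then
      u j * fderiv ℝ f (x ⊔ s • u) (Pi.single j 1) else 0 with hgdef
  have hgm : Measurable g := by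
    apply Finset.measurable_sum
    intro j _
    by_cases hj : u j = 0
    · simp only [hj, ne_eq, not_true_eq_false, and_false, if_false]
      exact measurable_const
    · simp only [hj, ne_eq, not_false_eq_true, and_true]
      exact Measurable.ite (measurableSet_le measurable_const (measurable_id.mul_const _))
        ((hdjc j).measurable.const_mul _) measurable_const
  have hgb : ∀ s : ℝ, 0 < s → |g s| ≤ d * C / s := by
    intro s hs
    calc |g s| ≤ ∑ j, |if x j ≤ s * u j ∧ u j ≠ 0 then
        u j * fderiv ℝ f (x ⊔ s • u) (Pi.single j 1) else 0| := Finset.abs_sum_le_sum_abs _ _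
      _ ≤ ∑ _j : Fin d, C / s := by
          apply Finset.sum_le_sum
          intro j _
          by_cases hj : x j ≤ s * u j ∧ u j ≠ 0
          · rw [if_pos hj]
            have hzj : (x ⊔ s • u) j = s * u j := by
              simp only [Pi.sup_apply, Pi.smul_apply, smul_eq_mul]
              exact sup_eq_right.2 hj.1
            have hCz := hC (x ⊔ s • u) (hmem s) j
            rw [hzj] at hCz
            rw [abs_mul, abs_of_nonneg (hu0 j), le_div_iff₀ hs]
            calc u j * |fderiv ℝ f (x ⊔ s • u) (Pi.single j 1)| * s
                = s * u j * |fderiv ℝ f (x ⊔ s • u) (Pi.single j 1)| := by ring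
              _ ≤ C := hCz
          · rw [if_neg hj, abs_zero]
            positivity
      _ = d * C / s := by
          rw [Finset.sum_const, Finset.card_univ, Fintype.card_fin, nsmul_eq_mul]
          ring
  have hgz : ∀ s < m, g s = 0 := by
    intro s hs
    apply Finset.sum_eq_zero
    intro j _
    rw [if_neg]
    rintro ⟨h1, -⟩
    exact absurd h1 (not_le.2 (key_lt s hs j))
  -- derivative from the right
  have hD : ∀ r : ℝ, 0 < r → HasDerivWithinAt (fun s : ℝ => f (x ⊔ s • u)) (g r) (Ioi r) r := by
    intro r hr
    set L : ℝ → Fin d → ℝ := fun s j => if x j ≤ r * u j ∧ u j ≠ 0 then s * u j else x j with hLdef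
    set v : Fin d → ℝ := fun j => if x j ≤ r * u j ∧ u j ≠ 0 then u j else 0 with hvdef
    have hLr : L r = x ⊔ r • u := by
      funext j
      simp only [hLdef, Pi.sup_apply, Pi.smul_apply, smul_eq_mul]
      by_cases hj : x j ≤ r * u j ∧ u j ≠ 0
      · rw [if_pos hj]; exact (sup_eq_right.2 hj.1).symm
      · rw [if_neg hj]
        refine (sup_eq_left.2 ?_).symm
        rcases Classical.em (u j = 0) with h0 | h0
        · rw [h0, mul_zero]; exact (hx j).le
        · by_contra hcon
          push_neg at hcon
          exact hj ⟨hcon.le, h0⟩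
    have hLd : HasDerivAt L v r := by
      rw [hasDerivAt_pi]
      intro j
      by_cases hj : x j ≤ r * u j ∧ u j ≠ 0
      · simp only [hLdef, hvdef, if_pos hj]
        simpa using (hasDerivAt_id r).mul_const (u j)
      · simp only [hLdef, hvdef, if_neg hj]
        exact hasDerivAt_const r (x j)
    have hfd' : HasFDerivAt f (fderiv ℝ f (x ⊔ r • u)) (L r) := by
      rw [hLr]
      exact ((hf.differentiableOn one_ne_zero).differentiableAt
        (hU.mem_nhds (hmem r))).hasFDerivAt
    have hcomp : HasDerivAt (fun s => f (L s)) (fderiv ℝ f (x ⊔ r • u) v) r :=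
      hfd'.comp_hasDerivAt r hLd
    have hev : (fun s : ℝ => f (x ⊔ s • u)) =ᶠ[nhdsWithin r (Ioi r)] fun s => f (L s) := by
      have hj : ∀ j, ∀ᶠ s in nhdsWithin r (Ioi r), (x ⊔ s • u) j = L s j := by
        intro j
        by_cases hc : x j ≤ r * u j ∧ u j ≠ 0
        · filter_upwards [self_mem_nhdsWithin] with s hs
          simp only [hLdef, if_pos hc, Pi.sup_apply, Pi.smul_apply, smul_eq_mul]
          apply sup_eq_right.2
          calc x j ≤ r * u j := hc.1
            _ ≤ s * u j := mul_le_mul_of_nonneg_right (le_of_lt hs) (hu0 j)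
        · rcases Classical.em (u j = 0) with h0 | h0
          · filter_upwards with s
            simp only [hLdef, if_neg hc, Pi.sup_apply, Pi.smul_apply, smul_eq_mul, h0, mul_zero]
            exact sup_eq_left.2 (hx j).le
          · have hlt : r * u j < x j := by
              rcases lt_or_ge (r * u j) (x j) with h | h
              · exact h
              · exact absurd ⟨h, h0⟩ hc
            have hev0 : ∀ᶠ s in nhds r, s * u j < x j :=
              Filter.Tendsto.eventually_lt_const hlt
                ((continuous_id.mul continuous_const).tendsto r)
            filter_upwards [nhdsWithin_le_nhds hev0] with s hs
            simp only [hLdef, if_neg hc, Pi.sup_apply, Pi.smul_apply, smul_eq_mul]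
            exact sup_eq_left.2 hs.le
      have hall := (Filter.eventually_all).2 hj
      filter_upwards [hall] with s hs
      rw [show (x ⊔ s • u) = L s from funext hs]
    have heq0 : f (x ⊔ r • u) = f (L r) := by rw [hLr]
    have hfinal := (hcomp.hasDerivWithinAt (s := Ioi r)).congr_of_eventuallyEq hev heq0
    have hval : fderiv ℝ f (x ⊔ r • u) v = g r := by
      conv_lhs => rw [← pi_decomp v]
      rw [map_sum]
      apply Finset.sum_congr rfl
      intro j _
      rw [_root_.map_smul]
      simp only [hvdef, smul_eq_mul]
      rw [ite_mul, zero_mul]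
    rwa [hval] at hfinal
  -- interval integrability of g
  have hIntg : ∀ a b : ℝ, m ≤ a → a ≤ b → IntervalIntegrable g volume a b := by
    intro a b ha hab
    rw [intervalIntegrable_iff_integrableOn_Ioc_of_le hab]
    apply Integrable.mono' (integrable_const (d * C / m)) hgm.aestronglyMeasurable.restrict
    filter_upwards [ae_restrict_mem measurableSet_Ioc] with s hs
    have hms : m ≤ s := ha.trans hs.1.le
    have hs0 : 0 < s := lt_of_lt_of_le hm hms
    rw [Real.norm_eq_abs]
    calc |g s| ≤ d * C / s := hgb s hs0
      _ ≤ d * C / m := by gcongr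
  -- FTC on [m, b]
  have hFTC1 : ∀ b, m ≤ b → f (x ⊔ b • u) - f x = ∫ s in m..b, g s := by
    intro b hb
    have h1 := intervalIntegral.integral_eq_sub_of_hasDeriv_right_of_le hb
      hhc.continuousOn (fun s hs => hD s (hm.trans hs.1)) (hIntg m b le_rfl hb)
    rw [h1, hAeq m le_rfl]
  -- sqrt bound
  have hlog : ∀ b, m ≤ b → |f (x ⊔ b • u) - f x| ≤ 2 * d * C / Real.sqrt m * Real.sqrt b := by
    intro b hb
    have hb0 : 0 < b := lt_of_lt_of_le hm hb
    have hsm : (0:ℝ) < Real.sqrt m := Real.sqrt_pos.2 hm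
    rw [hFTC1 b hb]
    have h1 : |∫ s in m..b, g s| ≤ ∫ s in m..b, |g s| :=
      intervalIntegral.abs_integral_le_integral_abs hb
    have hconst : IntervalIntegrable (fun s : ℝ => d * C * s⁻¹) volume m b := by
      apply ContinuousOn.intervalIntegrable
      apply ContinuousOn.mul continuousOn_const
      apply ContinuousOn.inv₀ continuousOn_id
      intro s hs
      rw [uIcc_of_le hb] at hs
      exact ne_of_gt (lt_of_lt_of_le hm hs.1)
    have h2 : (∫ s in m..b, |g s|) ≤ ∫ s in m..b, d * C * s⁻¹ := by
      apply intervalIntegral.integral_mono_on hb ((hIntg m b le_rfl hb).abs) hconst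
      intro s hs
      have hs0 : 0 < s := lt_of_lt_of_le hm hs.1
      calc |g s| ≤ d * C / s := hgb s hs0
        _ = d * C * s⁻¹ := div_eq_mul_inv _ _
    have h3 : (∫ s in m..b, d * C * s⁻¹) = d * C * Real.log (b / m) := by
      rw [intervalIntegral.integral_const_mul, integral_inv_of_pos hm hb0]
    have h4 : Real.log (b / m) ≤ 2 * (Real.sqrt b / Real.sqrt m) := by
      have hbm : (0:ℝ) < b / m := div_pos hb0 hm
      have hsq : 0 < Real.sqrt (b / m) := Real.sqrt_pos.2 hbm
      calc Real.log (b / m) = 2 * Real.log (Real.sqrt (b / m)) := by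
            rw [Real.log_sqrt hbm.le]; ring
        _ ≤ 2 * Real.sqrt (b / m) := by nlinarith [Real.log_le_sub_one_of_pos hsq]
        _ = 2 * (Real.sqrt b / Real.sqrt m) := by rw [Real.sqrt_div hb0.le]
    calc |∫ s in m..b, g s| ≤ ∫ s in m..b, |g s| := h1
      _ ≤ d * C * Real.log (b / m) := by rw [← h3]; exact h2
      _ ≤ d * C * (2 * (Real.sqrt b / Real.sqrt m)) := mul_le_mul_of_nonneg_left h4 hd0
      _ = 2 * d * C / Real.sqrt m * Real.sqrt b := by field_simp
  have hrpow2 : ∀ r : ℝ, 0 < r → ((r:ℝ) ^ 2)⁻¹ = r ^ (-(2:ℝ)) := by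
    intro r hr
    rw [← Real.rpow_natCast r 2, ← Real.rpow_neg hr.le]
    norm_num

  -- zero of integrands on (0, m]
  have hF1zero : ∀ r ∈ Ioc (0:ℝ) m, (f (x ⊔ r • u) - f x) * ((r ^ 2)⁻¹) = 0 := by
    intro r hr
    rw [hAeq r hr.2, sub_self, zero_mul]
  have hF2sum : ∀ r : ℝ, r ≤ m → (∑ j, (r • u) j * fderiv ℝ f (x ⊔ r • u) (Pi.single j 1)
      * (if x j < (r • u) j then 1 else 0)) = 0 := by
    intro r hr
    apply Finset.sum_eq_zero
    intro j _
    simp only [Pi.smul_apply, smul_eq_mul]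
    rw [if_neg (not_lt.2 (key_le r hr j)), mul_zero]
  have hF2zero : ∀ r ∈ Ioc (0:ℝ) m, (∑ j, (r • u) j * fderiv ℝ f (x ⊔ r • u) (Pi.single j 1)
      * (if x j < (r • u) j then 1 else 0)) * ((r ^ 2)⁻¹) = 0 := by
    intro r hr
    rw [hF2sum r hr.2, zero_mul]
  -- pointwise bounds
  have hP1 : ∀ r ∈ Ioi m, |(f (x ⊔ r • u) - f x) * ((r ^ 2)⁻¹)|
      ≤ (2 * d * C / Real.sqrt m) * r ^ (-(3/2) : ℝ) := by
    intro r hr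
    have hr0 : 0 < r := hm.trans hr
    rw [abs_mul, abs_of_nonneg (inv_nonneg.2 (sq_nonneg r))]
    calc |f (x ⊔ r • u) - f x| * ((r ^ 2)⁻¹)
        ≤ 2 * d * C / Real.sqrt m * Real.sqrt r * ((r ^ 2)⁻¹) :=
          mul_le_mul_of_nonneg_right (hlog r (le_of_lt hr)) (inv_nonneg.2 (sq_nonneg r))
      _ = (2 * d * C / Real.sqrt m) * r ^ (-(3/2) : ℝ) := by
          rw [mul_assoc]
          congr 1
          rw [Real.sqrt_eq_rpow, hrpow2 r hr0, ← Real.rpow_add hr0]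
          norm_num
  have hP2 : ∀ r : ℝ, 0 < r → |(∑ j, (r • u) j * fderiv ℝ f (x ⊔ r • u) (Pi.single j 1)
      * (if x j < (r • u) j then 1 else 0)) * ((r ^ 2)⁻¹)| ≤ (d * C) * r ^ (-(2:ℝ)) := by
    intro r hr0
    rw [abs_mul, abs_of_nonneg (inv_nonneg.2 (sq_nonneg r))]
    have hsum : |∑ j, (r • u) j * fderiv ℝ f (x ⊔ r • u) (Pi.single j 1)
        * (if x j < (r • u) j then 1 else 0)| ≤ d * C := by
      calc |∑ j, (r • u) j * fderiv ℝ f (x ⊔ r • u) (Pi.single j 1)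
          * (if x j < (r • u) j then 1 else 0)|
          ≤ ∑ j, |(r • u) j * fderiv ℝ f (x ⊔ r • u) (Pi.single j 1)
            * (if x j < (r • u) j then 1 else 0)| := Finset.abs_sum_le_sum_abs _ _
        _ ≤ ∑ _j : Fin d, C := by
            apply Finset.sum_le_sum
            intro j _
            simp only [Pi.smul_apply, smul_eq_mul]
            by_cases hj : x j < r * u j
            · rw [if_pos hj, mul_one]
              have hzj : (x ⊔ r • u) j = r * u j := by
                simp only [Pi.sup_apply, Pi.smul_apply, smul_eq_mul]
                exact sup_eq_right.2 hj.le
              have hCz := hC (x ⊔ r • u) (hmem r) j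
              rw [hzj] at hCz
              rw [abs_mul, abs_of_nonneg (le_of_lt (lt_trans (hx j) hj))]
              exact hCz
            · rw [if_neg hj, mul_zero, abs_zero]
              exact hC0.le
        _ = d * C := by
            rw [Finset.sum_const, Finset.card_univ, Fintype.card_fin, nsmul_eq_mul]
    calc |∑ j, (r • u) j * fderiv ℝ f (x ⊔ r • u) (Pi.single j 1)
        * (if x j < (r • u) j then 1 else 0)| * ((r ^ 2)⁻¹)
        ≤ (d * C) * ((r ^ 2)⁻¹) := mul_le_mul_of_nonneg_right hsum (inv_nonneg.2 (sq_nonneg r))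
      _ = (d * C) * r ^ (-(2:ℝ)) := by rw [hrpow2 r hr0]
  -- integrable bounds
  have hbound1int : IntegrableOn (fun r : ℝ => (2 * d * C / Real.sqrt m) * r ^ (-(3/2):ℝ))
      (Ioi m) volume :=
    (integrableOn_Ioi_rpow_of_lt (by norm_num) hm).const_mul _
  have hbound2int : IntegrableOn (fun r : ℝ => (d * C) * r ^ (-(2:ℝ))) (Ioi m) volume :=
    (integrableOn_Ioi_rpow_of_lt (by norm_num) hm).const_mul _
  -- measurability of integrands
  have hF1meas : AEStronglyMeasurable (fun r : ℝ => (f (x ⊔ r • u) - f x) * ((r ^ 2)⁻¹)) volume :=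
    ((hhc.sub continuous_const).measurable.mul ((measurable_id.pow_const 2).inv)).aestronglyMeasurable
  have hF2meas : AEStronglyMeasurable (fun r : ℝ => (∑ j, (r • u) j
      * fderiv ℝ f (x ⊔ r • u) (Pi.single j 1)
      * (if x j < (r • u) j then 1 else 0)) * ((r ^ 2)⁻¹)) volume := by
    apply Measurable.aestronglyMeasurable
    apply Measurable.mul ?_ ((measurable_id.pow_const 2).inv)
    apply Finset.measurable_sum
    intro j _
    apply Measurable.mul
    · apply Measurable.mul
      · simp only [Pi.smul_apply, smul_eq_mul]
        exact measurable_id.mul_const _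
      · exact (hdjc j).measurable
    · apply Measurable.ite ?_ measurable_const measurable_const
      have hset : {r : ℝ | x j < (r • u) j} = {r : ℝ | x j < r * u j} := by
        ext r; simp [Pi.smul_apply, smul_eq_mul]
      rw [hset]
      exact measurableSet_lt measurable_const (measurable_id.mul_const _)
  -- integrability on (0, ∞)
  have hF1i : IntegrableOn (fun r : ℝ => (f (x ⊔ r • u) - f x) * ((r ^ 2)⁻¹)) (Ioi 0) volume := by
    rw [← Ioc_union_Ioi_eq_Ioi hm.le]
    apply IntegrableOn.union
    · exact (integrableOn_zero).congr_fun (fun r hr => (hF1zero r hr).symm) measurableSet_Ioc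
    · apply Integrable.mono' hbound1int hF1meas.restrict
      filter_upwards [ae_restrict_mem measurableSet_Ioi] with r hr
      rw [Real.norm_eq_abs]
      exact hP1 r hr
  have hF2i : IntegrableOn (fun r : ℝ => (∑ j, (r • u) j * fderiv ℝ f (x ⊔ r • u) (Pi.single j 1)
      * (if x j < (r • u) j then 1 else 0)) * ((r ^ 2)⁻¹)) (Ioi 0) volume := by
    rw [← Ioc_union_Ioi_eq_Ioi hm.le]
    apply IntegrableOn.union
    · exact (integrableOn_zero).congr_fun (fun r hr => (hF2zero r hr).symm) measurableSet_Ioc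
    · apply Integrable.mono' hbound2int hF2meas.restrict
      filter_upwards [ae_restrict_mem measurableSet_Ioi] with r hr
      rw [Real.norm_eq_abs]
      exact hP2 r (hm.trans hr)
  -- splitting the integral
  have hsplit : ∀ F : ℝ → ℝ, (∀ r ∈ Ioc (0:ℝ) m, F r = 0) → IntegrableOn F (Ioi 0) volume →
      (∫ r in Ioi (0:ℝ), F r) = ∫ r in Ioi m, F r := by
    intro F hz hFi
    have h1 : IntegrableOn F (Ioc 0 m) volume := hFi.mono_set Ioc_subset_Ioi_self
    have h2 : IntegrableOn F (Ioi m) volume := hFi.mono_set (Ioi_subset_Ioi hm.le)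
    rw [← Ioc_union_Ioi_eq_Ioi hm.le,
      setIntegral_union Ioc_disjoint_Ioi_same measurableSet_Ioi h1 h2,
      setIntegral_congr_fun measurableSet_Ioc hz]
    simp
  -- norm integral bounds
  have hB1 : (∫ r in Ioi (0:ℝ), |(f (x ⊔ r • u) - f x) * ((r ^ 2)⁻¹)|)
      ≤ ∫ r in Ioi m, (2 * d * C / Real.sqrt m) * r ^ (-(3/2):ℝ) := by
    rw [hsplit _ (fun r hr => by rw [hF1zero r hr, abs_zero]) hF1i.abs]
    exact setIntegral_mono_on ((hF1i.mono_set (Ioi_subset_Ioi hm.le)).abs) hbound1int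
      measurableSet_Ioi hP1
  have hB2 : (∫ r in Ioi (0:ℝ), |(∑ j, (r • u) j * fderiv ℝ f (x ⊔ r • u) (Pi.single j 1)
      * (if x j < (r • u) j then 1 else 0)) * ((r ^ 2)⁻¹)|)
      ≤ ∫ r in Ioi m, (d * C) * r ^ (-(2:ℝ)) := by
    rw [hsplit _ (fun r hr => by rw [hF2zero r hr, abs_zero]) hF2i.abs]
    exact setIntegral_mono_on ((hF2i.mono_set (Ioi_subset_Ioi hm.le)).abs) hbound2int
      measurableSet_Ioi (fun r hr => hP2 r (hm.trans hr))
  -- integrability of g r * r⁻¹ on (m, ∞)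
  have hG2'i : IntegrableOn (fun r : ℝ => g r * r⁻¹) (Ioi m) volume := by
    apply Integrable.mono' hbound2int ((hgm.mul measurable_inv).aestronglyMeasurable.restrict)
    filter_upwards [ae_restrict_mem measurableSet_Ioi] with r hr
    have hr0 : 0 < r := hm.trans hr
    rw [Real.norm_eq_abs, Pi.mul_apply, abs_mul, abs_inv, abs_of_pos hr0]
    calc |g r| * r⁻¹ ≤ (d * C / r) * r⁻¹ :=
        mul_le_mul_of_nonneg_right (hgb r hr0) (inv_nonneg.2 hr0.le)
      _ = (d * C) * r ^ (-(2:ℝ)) := by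
          rw [← hrpow2 r hr0, sq, mul_inv]
          ring
  -- second FTC application
  have hFTC2 : ∀ b, m ≤ b →
      (∫ r in m..b, ((f (x ⊔ r • u) - f x) * ((r ^ 2)⁻¹) - g r * r⁻¹))
        = -(f (x ⊔ b • u) - f x) * b⁻¹ := by
    intro b hb
    have hder : ∀ r ∈ Ioo m b, HasDerivWithinAt (fun r : ℝ => (f (x ⊔ r • u) - f x) * (-r⁻¹))
        ((f (x ⊔ r • u) - f x) * ((r ^ 2)⁻¹) - g r * r⁻¹) (Ioi r) r := by
      intro r hr
      have hr0 : 0 < r := hm.trans hr.1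
      have h1 : HasDerivWithinAt (fun s : ℝ => f (x ⊔ s • u) - f x) (g r) (Ioi r) r :=
        (hD r hr0).sub_const _
      have h2 : HasDerivAt (fun s : ℝ => -s⁻¹) ((r ^ 2)⁻¹) r := by
        exact (hasDerivAt_inv (ne_of_gt hr0)).neg.congr_deriv (by ring)
      have h3 := h1.mul h2.hasDerivWithinAt
      exact h3.congr_deriv (by ring)
    have hcont : ContinuousOn (fun r : ℝ => (f (x ⊔ r • u) - f x) * (-r⁻¹)) (Icc m b) := by
      apply ContinuousOn.mul (hhc.sub continuous_const).continuousOn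
      apply ContinuousOn.neg
      apply ContinuousOn.inv₀ continuousOn_id
      intro s hs
      exact ne_of_gt (lt_of_lt_of_le hm hs.1)
    have hint : IntervalIntegrable (fun r : ℝ => (f (x ⊔ r • u) - f x) * ((r ^ 2)⁻¹) - g r * r⁻¹)
        volume m b := by
      apply IntervalIntegrable.sub
      · apply ContinuousOn.intervalIntegrable
        apply ContinuousOn.mul (hhc.sub continuous_const).continuousOn
        apply ContinuousOn.inv₀ (continuous_pow 2).continuousOn
        intro s hs
        rw [uIcc_of_le hb] at hs
        exact pow_ne_zero 2 (ne_of_gt (lt_of_lt_of_le hm hs.1))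
      · rw [intervalIntegrable_iff_integrableOn_Ioc_of_le hb]
        exact hG2'i.mono_set Ioc_subset_Ioi_self
    have h5 := intervalIntegral.integral_eq_sub_of_hasDeriv_right_of_le hb hcont hder hint
    rw [h5, hAeq m le_rfl, sub_self, zero_mul, sub_zero]
    ring
  -- limits
  have ht1 : Tendsto (fun b => ∫ r in m..b, (f (x ⊔ r • u) - f x) * ((r ^ 2)⁻¹)) atTop
      (nhds (∫ r in Ioi m, (f (x ⊔ r • u) - f x) * ((r ^ 2)⁻¹))) :=
    intervalIntegral_tendsto_integral_Ioi m (hF1i.mono_set (Ioi_subset_Ioi hm.le)) tendsto_id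
  have ht2 : Tendsto (fun b => ∫ r in m..b, g r * r⁻¹) atTop
      (nhds (∫ r in Ioi m, g r * r⁻¹)) :=
    intervalIntegral_tendsto_integral_Ioi m hG2'i tendsto_id
  have hsubT : Tendsto (fun b => ∫ r in m..b,
        ((f (x ⊔ r • u) - f x) * ((r ^ 2)⁻¹) - g r * r⁻¹)) atTop
      (nhds ((∫ r in Ioi m, (f (x ⊔ r • u) - f x) * ((r ^ 2)⁻¹)) - ∫ r in Ioi m, g r * r⁻¹)) := by
    have hev : ∀ᶠ b in atTop, (∫ r in m..b, (f (x ⊔ r • u) - f x) * ((r ^ 2)⁻¹))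
          - (∫ r in m..b, g r * r⁻¹)
        = ∫ r in m..b, ((f (x ⊔ r • u) - f x) * ((r ^ 2)⁻¹) - g r * r⁻¹) := by
      filter_upwards [eventually_ge_atTop m] with b hb
      rw [intervalIntegral.integral_sub]
      · rw [intervalIntegrable_iff_integrableOn_Ioc_of_le hb]
        exact (hF1i.mono_set (Ioi_subset_Ioi hm.le)).mono_set Ioc_subset_Ioi_self
      · rw [intervalIntegrable_iff_integrableOn_Ioc_of_le hb]
        exact hG2'i.mono_set Ioc_subset_Ioi_self
    exact Filter.Tendsto.congr' hev (ht1.sub ht2)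
  have hRHS : Tendsto (fun b : ℝ => -(f (x ⊔ b • u) - f x) * b⁻¹) atTop (nhds 0) := by
    have hbnd : ∀ᶠ b : ℝ in atTop, ‖-(f (x ⊔ b • u) - f x) * b⁻¹‖
        ≤ (2 * d * C / Real.sqrt m) * b ^ (-(1/2) : ℝ) := by
      filter_upwards [eventually_ge_atTop m] with b hb
      have hb0 : 0 < b := lt_of_lt_of_le hm hb
      rw [Real.norm_eq_abs, abs_mul, abs_neg, abs_inv, abs_of_pos hb0]
      calc |f (x ⊔ b • u) - f x| * b⁻¹
          ≤ (2 * d * C / Real.sqrt m * Real.sqrt b) * b⁻¹ :=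
            mul_le_mul_of_nonneg_right (hlog b hb) (inv_nonneg.2 hb0.le)
        _ = (2 * d * C / Real.sqrt m) * b ^ (-(1/2) : ℝ) := by
            rw [mul_assoc]
            congr 1
            rw [Real.sqrt_eq_rpow, show (b:ℝ)⁻¹ = b ^ (-(1:ℝ)) by
              rw [Real.rpow_neg_one], ← Real.rpow_add hb0]
            norm_num
    have hlim : Tendsto (fun b : ℝ => (2 * d * C / Real.sqrt m) * b ^ (-(1/2) : ℝ))
        atTop (nhds 0) := by
      have h := (tendsto_rpow_neg_atTop (by norm_num : (0:ℝ) < 1/2)).const_mul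
        (2 * (d:ℝ) * C / Real.sqrt m)
      rw [mul_zero] at h
      exact h
    exact squeeze_zero_norm' hbnd hlim
  have hEvEq : ∀ᶠ b in atTop, (∫ r in m..b,
      ((f (x ⊔ r • u) - f x) * ((r ^ 2)⁻¹) - g r * r⁻¹)) = -(f (x ⊔ b • u) - f x) * b⁻¹ := by
    filter_upwards [eventually_ge_atTop m] with b hb using hFTC2 b hb
  have hzero : (∫ r in Ioi m, (f (x ⊔ r • u) - f x) * ((r ^ 2)⁻¹)) - (∫ r in Ioi m, g r * r⁻¹) = 0 :=
    tendsto_nhds_unique hsubT (Filter.Tendsto.congr' (hEvEq.mono fun b hb => hb.symm) hRHS)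
  -- a.e. identification of g r * r⁻¹ with the target integrand
  have hkink : (volume : Measure ℝ) (⋃ j : Fin d, {r : ℝ | r * u j = x j ∧ u j ≠ 0}) = 0 := by
    apply Set.Countable.measure_zero
    apply Set.countable_iUnion
    intro j
    apply Set.Subsingleton.countable
    intro r1 h1 r2 h2
    exact mul_right_cancel₀ h1.2 (h1.1.trans h2.1.symm)
  have hptwise : ∀ r : ℝ, r ∉ (⋃ j : Fin d, {r : ℝ | r * u j = x j ∧ u j ≠ 0}) →
      g r * r⁻¹ = (∑ j, (r • u) j * fderiv ℝ f (x ⊔ r • u) (Pi.single j 1)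
        * (if x j < (r • u) j then 1 else 0)) * ((r ^ 2)⁻¹) := by
    intro r hrk
    simp only [mem_iUnion, mem_setOf_eq, not_exists, not_and] at hrk
    rcases eq_or_ne r 0 with rfl | hr0
    · have : g 0 = 0 := by
        apply Finset.sum_eq_zero
        intro j _
        rw [if_neg]
        rintro ⟨h1, -⟩
        rw [zero_mul] at h1
        exact absurd h1 (not_le.2 (hx j))
      simp [this]
    · rw [hgdef]
      simp only
      rw [Finset.sum_mul, Finset.sum_mul]
      apply Finset.sum_congr rfl
      intro j _
      simp only [Pi.smul_apply, smul_eq_mul]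
      by_cases hlt : x j < r * u j
      · have hne : u j ≠ 0 := by
          intro h0
          rw [h0, mul_zero] at hlt
          exact absurd hlt (not_lt.2 (hx j).le)
        rw [if_pos ⟨hlt.le, hne⟩, if_pos hlt, mul_one]
        field_simp
      · have hcond : ¬(x j ≤ r * u j ∧ u j ≠ 0) := by
          rintro ⟨hle, hne⟩
          exact hrk j (le_antisymm (not_lt.1 hlt) hle) hne
        rw [if_neg hcond, if_neg hlt]
        simp
  have hcongr : (∫ r in Ioi m, g r * r⁻¹)
      = ∫ r in Ioi m, (∑ j, (r • u) j * fderiv ℝ f (x ⊔ r • u) (Pi.single j 1)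
        * (if x j < (r • u) j then 1 else 0)) * ((r ^ 2)⁻¹) := by
    apply integral_congr_ae
    apply ae_restrict_of_ae
    rw [ae_iff]
    apply measure_mono_null ?_ hkink
    intro r hr
    simp only [mem_setOf_eq] at hr
    by_contra hrk
    exact hr (hptwise r hrk)
  have hEqIoi : (∫ r in Ioi (0:ℝ), (f (x ⊔ r • u) - f x) * ((r ^ 2)⁻¹))
      = ∫ r in Ioi (0:ℝ), (∑ j, (r • u) j * fderiv ℝ f (x ⊔ r • u) (Pi.single j 1)
        * (if x j < (r • u) j then 1 else 0)) * ((r ^ 2)⁻¹) := by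
    rw [hsplit _ hF1zero hF1i, hsplit _ hF2zero hF2i]
    rw [← hcongr]
    linarith
  exact ⟨hF1i, hF2i, hEqIoi, hB1, hB2⟩


end Stmt12Aux

open MeasureTheory Filter

theorem stmt12
    {d : ℕ} (hd : 1 ≤ d)
    (N : (Fin d → ℝ) → ℝ)
    (hN_zero : ∀ x : Fin d → ℝ, N x = 0 ↔ x = 0)
    (hN_smul : ∀ (a : ℝ) (x : Fin d → ℝ), N (a • x) = |a| * N x)
    (hN_add : ∀ x y : Fin d → ℝ, N (x + y) ≤ N x + N y)
    (Splus : Set (Fin d → ℝ))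
    (hSplus : Splus = {u : Fin d → ℝ | (∀ j, 0 ≤ u j) ∧ N u = 1})
    (hSsub : Splus ⊆ Set.Icc (0 : Fin d → ℝ) 1)
    (ν : Measure (Fin d → ℝ)) [IsFiniteMeasure ν]
    (hν_supp : ν Splusᶜ = 0)
    (hν_mom : ∀ j : Fin d, ∫ u, u j ∂ν = 1)
    (μ : Measure (Fin d → ℝ))
    (hμ : μ = Measure.map (fun p : ℝ × (Fin d → ℝ) => p.1 • p.2)
        (((volume.restrict (Set.Ioi (0 : ℝ))).withDensity
            (fun r => ENNReal.ofReal ((r ^ 2)⁻¹))).prod ν))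
    (f : (Fin d → ℝ) → ℝ)
    (hf : ContDiffOn ℝ 1 f {x : Fin d → ℝ | ∀ j, 0 < x j})
    (hfC : ∃ C > (0 : ℝ), ∀ x : Fin d → ℝ, (∀ j, 0 < x j) →
        ∀ j, x j * |fderiv ℝ f x (Pi.single j 1)| ≤ C)
    (x : Fin d → ℝ) (hx : ∀ j, 0 < x j) :
    Integrable (fun y => f (x ⊔ y) - f x) μ ∧
    Integrable (fun y => ∑ j, y j * fderiv ℝ f (x ⊔ y) (Pi.single j 1)
        * (if x j < y j then 1 else 0)) μ ∧
    ∫ y, (f (x ⊔ y) - f x) ∂μ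
      = ∫ y, (∑ j, y j * fderiv ℝ f (x ⊔ y) (Pi.single j 1)
          * (if x j < y j then 1 else 0)) ∂μ := by
  classical
  obtain ⟨C, hC0, hC⟩ := hfC
  have hne : Nonempty (Fin d) := ⟨⟨0, hd⟩⟩
  set m : ℝ := Finset.univ.inf' Finset.univ_nonempty x with hmdef
  have hmx : ∀ j, m ≤ x j := fun j => Finset.inf'_le _ (Finset.mem_univ j)
  have hm : 0 < m := by
    rw [hmdef, Finset.lt_inf'_iff]
    exact fun j _ => hx j
  have hU : IsOpen {z : Fin d → ℝ | ∀ j, 0 < z j} := Stmt12Aux.isOpenU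
  -- continuity / measurability of the two integrands on ℝ^d
  have hsupc : Continuous fun y : Fin d → ℝ => x ⊔ y := by
    apply continuous_pi; intro j
    simp only [Pi.sup_apply]
    exact continuous_const.sup (continuous_apply j)
  have hmemy : ∀ y : Fin d → ℝ, x ⊔ y ∈ {z : Fin d → ℝ | ∀ j, 0 < z j} := by
    intro y j
    have h1 : x ≤ x ⊔ y := le_sup_left
    exact lt_of_lt_of_le (hx j) (h1 j)
  have hG1c : Continuous fun y : Fin d → ℝ => f (x ⊔ y) - f x :=
    (hf.continuousOn.comp_continuous hsupc hmemy).sub continuous_const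
  have hdc : Continuous fun y : Fin d → ℝ => fderiv ℝ f (x ⊔ y) :=
    (hf.continuousOn_fderiv_of_isOpen hU le_rfl).comp_continuous hsupc hmemy
  have hG2m : Measurable fun y : Fin d → ℝ => ∑ j, y j * fderiv ℝ f (x ⊔ y) (Pi.single j 1)
      * (if x j < y j then 1 else 0) := by
    apply Finset.measurable_sum
    intro j _
    apply Measurable.mul
    · apply Measurable.mul (measurable_pi_apply j)
      have : Continuous fun y : Fin d → ℝ => fderiv ℝ f (x ⊔ y) (Pi.single j 1) := by
        exact (ContinuousLinearMap.apply ℝ ℝ (Pi.single j (1:ℝ))).continuous.comp hdc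
      exact this.measurable
    · exact Measurable.ite (measurableSet_lt measurable_const (measurable_pi_apply j))
        measurable_const measurable_const
  -- a.e. properties of ν
  have hae : ∀ᵐ u ∂ν, (∀ j, 0 ≤ u j) ∧ ∀ j, u j ≤ 1 := by
    have h1 : ∀ᵐ u ∂ν, u ∈ Splus := by
      rw [MeasureTheory.ae_iff]
      exact hν_supp
    filter_upwards [h1] with u hu
    have h2 := hSsub hu
    rw [Set.mem_Icc] at h2
    exact ⟨fun j => h2.1 j, fun j => h2.2 j⟩
  have hcore := fun (u : Fin d → ℝ) (h0 : ∀ j, 0 ≤ u j) (h1 : ∀ j, u j ≤ 1) =>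
    Stmt12Aux.core hf hC0 hC hx hm hmx h0 h1
  -- the scaling map
  have hφc : Continuous fun p : ℝ × (Fin d → ℝ) => p.1 • p.2 := continuous_fst.smul continuous_snd
  have hφm : AEMeasurable (fun p : ℝ × (Fin d → ℝ) => p.1 • p.2)
      (((volume.restrict (Set.Ioi (0 : ℝ))).withDensity
        (fun r => ENNReal.ofReal ((r ^ 2)⁻¹))).prod ν) := hφc.measurable.aemeasurable
  have hH1 : AEStronglyMeasurable (fun p : ℝ × (Fin d → ℝ) => f (x ⊔ p.1 • p.2) - f x)
      ((((volume.restrict (Set.Ioi (0 : ℝ))).withDensity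
        (fun r => ENNReal.ofReal ((r ^ 2)⁻¹))).prod ν)) :=
    (hG1c.comp hφc).aestronglyMeasurable
  have hH2 : AEStronglyMeasurable (fun p : ℝ × (Fin d → ℝ) =>
      ∑ j, (p.1 • p.2) j * fderiv ℝ f (x ⊔ p.1 • p.2) (Pi.single j 1)
        * (if x j < (p.1 • p.2) j then 1 else 0))
      ((((volume.restrict (Set.Ioi (0 : ℝ))).withDensity
        (fun r => ENNReal.ofReal ((r ^ 2)⁻¹))).prod ν)) :=
    ((hG2m.comp hφc.measurable)).aestronglyMeasurable
  -- integrability over the product measure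
  have hPInt1 : Integrable (fun p : ℝ × (Fin d → ℝ) => f (x ⊔ p.1 • p.2) - f x)
      ((((volume.restrict (Set.Ioi (0 : ℝ))).withDensity
        (fun r => ENNReal.ofReal ((r ^ 2)⁻¹))).prod ν)) := by
    rw [integrable_prod_iff' hH1]
    constructor
    · filter_upwards [hae] with u hu
      exact (Stmt12Aux.wd_integrable _).2 (hcore u hu.1 hu.2).1
    · apply Integrable.mono'
        (integrable_const (∫ r in Set.Ioi m, (2 * d * C / Real.sqrt m) * r ^ (-(3/2):ℝ)))
        (((hG1c.comp hφc).stronglyMeasurable.norm.integral_prod_left').aestronglyMeasurable)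
      filter_upwards [hae] with u hu
      rw [Real.norm_eq_abs, abs_of_nonneg (integral_nonneg (fun r => norm_nonneg _))]
      calc (∫ r, ‖f (x ⊔ r • u) - f x‖
            ∂((volume.restrict (Set.Ioi (0 : ℝ))).withDensity
              (fun r => ENNReal.ofReal ((r ^ 2)⁻¹))))
          = ∫ r in Set.Ioi (0:ℝ), ‖f (x ⊔ r • u) - f x‖ * ((r ^ 2)⁻¹) := Stmt12Aux.wd_int _
        _ = ∫ r in Set.Ioi (0:ℝ), |(f (x ⊔ r • u) - f x) * ((r ^ 2)⁻¹)| := by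
            apply integral_congr_ae
            apply Filter.Eventually.of_forall
            intro r
            simp only [Real.norm_eq_abs, abs_mul]
            rw [abs_of_nonneg (inv_nonneg.2 (sq_nonneg r))]
        _ ≤ _ := (hcore u hu.1 hu.2).2.2.2.1
  have hPInt2 : Integrable (fun p : ℝ × (Fin d → ℝ) =>
      ∑ j, (p.1 • p.2) j * fderiv ℝ f (x ⊔ p.1 • p.2) (Pi.single j 1)
        * (if x j < (p.1 • p.2) j then 1 else 0))
      ((((volume.restrict (Set.Ioi (0 : ℝ))).withDensity
        (fun r => ENNReal.ofReal ((r ^ 2)⁻¹))).prod ν)) := by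
    rw [integrable_prod_iff' hH2]
    constructor
    · filter_upwards [hae] with u hu
      exact (Stmt12Aux.wd_integrable _).2 (hcore u hu.1 hu.2).2.1
    · apply Integrable.mono'
        (integrable_const (∫ r in Set.Ioi m, (d * C) * r ^ (-(2:ℝ))))
        (((hG2m.comp hφc.measurable).stronglyMeasurable.norm.integral_prod_left').aestronglyMeasurable)
      filter_upwards [hae] with u hu
      rw [Real.norm_eq_abs, abs_of_nonneg (integral_nonneg (fun r => norm_nonneg _))]
      calc (∫ r, ‖∑ j, (r • u) j * fderiv ℝ f (x ⊔ r • u) (Pi.single j 1)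
            * (if x j < (r • u) j then 1 else 0)‖
            ∂((volume.restrict (Set.Ioi (0 : ℝ))).withDensity
              (fun r => ENNReal.ofReal ((r ^ 2)⁻¹))))
          = ∫ r in Set.Ioi (0:ℝ), ‖∑ j, (r • u) j * fderiv ℝ f (x ⊔ r • u) (Pi.single j 1)
              * (if x j < (r • u) j then 1 else 0)‖ * ((r ^ 2)⁻¹) := Stmt12Aux.wd_int _
        _ = ∫ r in Set.Ioi (0:ℝ), |(∑ j, (r • u) j * fderiv ℝ f (x ⊔ r • u) (Pi.single j 1)
              * (if x j < (r • u) j then 1 else 0)) * ((r ^ 2)⁻¹)| := by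
            apply integral_congr_ae
            apply Filter.Eventually.of_forall
            intro r
            simp only [Real.norm_eq_abs, abs_mul]
            rw [abs_of_nonneg (inv_nonneg.2 (sq_nonneg r))]
        _ ≤ _ := (hcore u hu.1 hu.2).2.2.2.2
  -- conclude
  have hInt1 : Integrable (fun y => f (x ⊔ y) - f x) μ := by
    rw [hμ]
    rw [integrable_map_measure (hμ ▸ hG1c.aestronglyMeasurable : AEStronglyMeasurable _ _) hφm]
    exact hPInt1
  have hInt2 : Integrable (fun y => ∑ j, y j * fderiv ℝ f (x ⊔ y) (Pi.single j 1)
      * (if x j < y j then 1 else 0)) μ := by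
    rw [hμ]
    rw [integrable_map_measure (hμ ▸ hG2m.aestronglyMeasurable : AEStronglyMeasurable _ _) hφm]
    exact hPInt2
  refine ⟨hInt1, hInt2, ?_⟩
  rw [hμ]
  rw [integral_map hφm (hμ ▸ hG1c.aestronglyMeasurable : AEStronglyMeasurable _ _),
      integral_map hφm (hμ ▸ hG2m.aestronglyMeasurable : AEStronglyMeasurable _ _)]
  rw [integral_prod_symm _ hPInt1, integral_prod_symm _ hPInt2]
  apply integral_congr_ae
  filter_upwards [hae] with u hu
  calc (∫ r, (f (x ⊔ r • u) - f x)
        ∂((volume.restrict (Set.Ioi (0 : ℝ))).withDensity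
          (fun r => ENNReal.ofReal ((r ^ 2)⁻¹))))
      = ∫ r in Set.Ioi (0:ℝ), (f (x ⊔ r • u) - f x) * ((r ^ 2)⁻¹) := Stmt12Aux.wd_int _
    _ = ∫ r in Set.Ioi (0:ℝ), (∑ j, (r • u) j * fderiv ℝ f (x ⊔ r • u) (Pi.single j 1)
          * (if x j < (r • u) j then 1 else 0)) * ((r ^ 2)⁻¹) := (hcore u hu.1 hu.2).2.2.1
    _ = ∫ r, (∑ j, (r • u) j * fderiv ℝ f (x ⊔ r • u) (Pi.single j 1)
          * (if x j < (r • u) j then 1 else 0))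
        ∂((volume.restrict (Set.Ioi (0 : ℝ))).withDensity
          (fun r => ENNReal.ofReal ((r ^ 2)⁻¹))) := (Stmt12Aux.wd_int _).symm
end

section
/- Define D g(x) := ∫_{E₀} (g(x ⊕ y) − g(x)) dμ(y) for bounded measurable g and x ∈ E₀* (the integral is absolutely convergent since μ[0,x]^c < ∞). Then for every bounded measurable f : E₀* → ℝ, every t ≥ 0 and every x ∈ E₀*, one has the commutation rule D(P_t f)(x) = e^{-t} · E[ (D f)(e^{-t} x ⊕ (1−e^{-t}) Z) ], i.e. D P_t f = e^{-t} P_t D f. -/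
open MeasureTheory Filter Set
open scoped ENNReal

noncomputable def rho : Measure ℝ :=
  (volume.restrict (Set.Ioi (0 : ℝ))).withDensity (fun r => ENNReal.ofReal ((r ^ 2)⁻¹))

instance : SFinite rho := by unfold rho; infer_instance

lemma rho_Ioi_lt_top {a : ℝ} (ha : 0 < a) : rho (Set.Ioi a) < ⊤ := by
  have h1 : rho (Set.Ioi a)
      = ∫⁻ r in Set.Ioi a, ENNReal.ofReal ((r ^ 2)⁻¹) ∂(volume.restrict (Set.Ioi (0:ℝ))) := by
    rw [rho, withDensity_apply _ measurableSet_Ioi]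
  rw [h1, Measure.restrict_restrict measurableSet_Ioi,
    Set.Ioi_inter_Ioi, max_eq_left ha.le]
  have hint : IntegrableOn (fun x : ℝ => x ^ (-2 : ℝ)) (Set.Ioi a) :=
    integrableOn_Ioi_rpow_of_lt (by norm_num) ha
  have hb := hint.2
  rw [HasFiniteIntegral] at hb
  refine lt_of_le_of_lt (lintegral_mono_ae ?_) hb
  filter_upwards [ae_restrict_mem measurableSet_Ioi] with r hr
  have hr0 : 0 < r := ha.trans hr
  have : (r:ℝ) ^ (-2 : ℝ) = (r ^ 2)⁻¹ := by
    rw [Real.rpow_neg hr0.le, Real.rpow_two]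
  rw [← this, ← Real.enorm_eq_ofReal (Real.rpow_nonneg hr0.le _)]


lemma map_rho {c : ℝ} (hc : 0 < c) : rho.map (fun r => c * r) = ENNReal.ofReal c • rho := by
  have hmeas : Measurable fun r : ℝ => c * r := measurable_const_mul c
  ext A hA
  rw [Measure.map_apply hmeas hA, Measure.smul_apply, smul_eq_mul]
  -- express both sides as lintegrals over volume
  have happly : ∀ B : Set ℝ, MeasurableSet B →
      rho B = ∫⁻ r, Set.indicator (B ∩ Set.Ioi 0) (fun r => ENNReal.ofReal ((r ^ 2)⁻¹)) r := by
    intro B hB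
    rw [rho, withDensity_apply _ hB, Measure.restrict_restrict hB,
      ← lintegral_indicator (hB.inter measurableSet_Ioi) _]
  have hA' : MeasurableSet ((fun r : ℝ => c * r) ⁻¹' A) := hmeas hA
  rw [happly _ hA', happly _ hA]
  -- substitution r = x / c  i.e. use map_volume_mul_left with a = c⁻¹
  set F : ℝ → ENNReal := Set.indicator ((fun r : ℝ => c * r) ⁻¹' A ∩ Set.Ioi 0) (fun r => ENNReal.ofReal ((r ^ 2)⁻¹)) with hF
  have hFmeas : Measurable F :=
    Measurable.indicator (by fun_prop) (hA'.inter measurableSet_Ioi)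
  have hvol : (volume : Measure ℝ).map (fun x : ℝ => c⁻¹ * x) = ENNReal.ofReal c • volume := by
    rw [Real.map_volume_mul_left (inv_ne_zero hc.ne'), inv_inv, abs_of_pos hc]
  have key : ∫⁻ x, F (c⁻¹ * x) = ENNReal.ofReal c * ∫⁻ r, F r := by
    rw [← lintegral_map hFmeas (measurable_const_mul _), hvol, lintegral_smul_measure, smul_eq_mul]
  have hpt : ∀ x : ℝ, F (c⁻¹ * x)
      = ENNReal.ofReal (c ^ 2) * Set.indicator (A ∩ Set.Ioi 0) (fun r => ENNReal.ofReal ((r ^ 2)⁻¹)) x := by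
    intro x
    rw [hF]
    by_cases hx : x ∈ A ∩ Set.Ioi 0
    · have hx1 : c⁻¹ * x ∈ (fun r : ℝ => c * r) ⁻¹' A ∩ Set.Ioi 0 := by
        constructor
        · simp only [Set.mem_preimage, mul_inv_cancel_left₀ hc.ne']
          exact hx.1
        · exact Set.mem_Ioi.2 (mul_pos (inv_pos.2 hc) hx.2)
      rw [Set.indicator_of_mem hx1, Set.indicator_of_mem hx]
      rw [← ENNReal.ofReal_mul (by positivity)]
      congr 1
      have hx0 : (0:ℝ) < x := hx.2
      field_simp
    · have hx1 : c⁻¹ * x ∉ (fun r : ℝ => c * r) ⁻¹' A ∩ Set.Ioi 0 := by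
        intro hmem
        apply hx
        constructor
        · have := hmem.1
          simpa only [Set.mem_preimage, mul_inv_cancel_left₀ hc.ne'] using this
        · have h2 : 0 < c⁻¹ * x := hmem.2
          have h3 := mul_pos hc h2
          rwa [mul_inv_cancel_left₀ hc.ne'] at h3
      rw [Set.indicator_of_notMem hx1, Set.indicator_of_notMem hx, mul_zero]
  -- combine
  have : ∫⁻ x, F (c⁻¹ * x)
      = ENNReal.ofReal (c ^ 2) * ∫⁻ x, Set.indicator (A ∩ Set.Ioi 0) (fun r => ENNReal.ofReal ((r ^ 2)⁻¹)) x := by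
    simp_rw [hpt]
    rw [lintegral_const_mul _ (Measurable.indicator (by fun_prop) (hA.inter measurableSet_Ioi))]
  rw [this] at key
  -- now key : c² * I_A = c * I_{pre}
  have hc2 : ENNReal.ofReal (c ^ 2) = ENNReal.ofReal c * ENNReal.ofReal c := by
    rw [← ENNReal.ofReal_mul hc.le]; ring_nf
  rw [hc2, mul_assoc] at key
  have hcne : ENNReal.ofReal c ≠ 0 := by simp [hc.le, hc]
  have hctop : ENNReal.ofReal c ≠ ⊤ := ENNReal.ofReal_ne_top
  exact ((ENNReal.mul_right_inj hcne hctop).1 key.symm)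



lemma smul_prod' {α β : Type*} [MeasurableSpace α] [MeasurableSpace β]
    (a : ℝ≥0∞) (μ : Measure α) (ν : Measure β) [SFinite ν] :
    (a • μ).prod ν = a • (μ.prod ν) := by
  ext s hs
  rw [Measure.prod_apply hs, Measure.smul_apply, Measure.prod_apply hs,
    lintegral_smul_measure, smul_eq_mul]

lemma map_mu {d : ℕ} (ν : Measure (Fin d → ℝ)) [IsFiniteMeasure ν]
    (μ : Measure (Fin d → ℝ))
    (hμ : μ = Measure.map (fun p : ℝ × (Fin d → ℝ) => p.1 • p.2) (rho.prod ν))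
    {c : ℝ} (hc : 0 < c) :
    μ.map (fun y => c • y) = ENNReal.ofReal c • μ := by
  have hT : Measurable (fun p : ℝ × (Fin d → ℝ) => p.1 • p.2) :=
    measurable_fst.smul measurable_snd
  have hsc : Measurable (fun y : Fin d → ℝ => c • y) := measurable_const_smul c
  rw [hμ, Measure.map_map hsc hT]
  have hcomp : ((fun y : Fin d → ℝ => c • y) ∘ fun p : ℝ × (Fin d → ℝ) => p.1 • p.2)
      = (fun p : ℝ × (Fin d → ℝ) => p.1 • p.2) ∘ (Prod.map (fun r => c * r) id) := by
    funext p
    simp [Function.comp, Prod.map, smul_smul]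
  rw [hcomp, ← Measure.map_map hT ((measurable_const_mul c).prodMap measurable_id)]
  rw [← Measure.map_prod_map _ _ (measurable_const_mul c) measurable_id,
    Measure.map_id, map_rho hc, smul_prod', Measure.map_smul]

lemma mu_finite {d : ℕ} (Splus : Set (Fin d → ℝ)) (hSsub : Splus ⊆ Set.Icc (0:Fin d → ℝ) 1)
    (ν : Measure (Fin d → ℝ)) [IsFiniteMeasure ν] (hν_supp : ν Splusᶜ = 0)
    (μ : Measure (Fin d → ℝ))
    (hμ : μ = Measure.map (fun p : ℝ × (Fin d → ℝ) => p.1 • p.2) (rho.prod ν))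
    (x : Fin d → ℝ) (hx : ∀ j, 0 < x j) :
    μ {y | ¬ y ≤ x} < ⊤ := by
  have hT : Measurable (fun p : ℝ × (Fin d → ℝ) => p.1 • p.2) :=
    measurable_fst.smul measurable_snd
  have hle : MeasurableSet {y : Fin d → ℝ | y ≤ x} := by
    have : {y : Fin d → ℝ | y ≤ x} = ⋂ j, (fun y : Fin d → ℝ => y j) ⁻¹' Set.Iic (x j) := by
      ext y; simp [Pi.le_def]
    rw [this]
    exact MeasurableSet.iInter fun j => (measurable_pi_apply j) measurableSet_Iic
  have hset : MeasurableSet {y : Fin d → ℝ | ¬ y ≤ x} := hle.compl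
  rw [hμ, Measure.map_apply hT hset]
  have hsub : (fun p : ℝ × (Fin d → ℝ) => p.1 • p.2) ⁻¹' {y | ¬ y ≤ x}
      ⊆ ⋃ j, {p : ℝ × (Fin d → ℝ) | x j < p.1 * p.2 j} := by
    intro p hp
    simp only [Set.mem_preimage, Set.mem_setOf_eq, Pi.le_def, not_forall] at hp
    obtain ⟨j, hj⟩ := hp
    exact Set.mem_iUnion.2 ⟨j, by simpa [Pi.smul_apply, smul_eq_mul] using lt_of_not_ge hj⟩
  refine lt_of_le_of_lt ((measure_mono hsub).trans (measure_iUnion_le _)) ?_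
  rw [tsum_fintype]
  refine ENNReal.sum_lt_top.2 fun j _ => ?_
  have hSmeas : MeasurableSet {p : ℝ × (Fin d → ℝ) | x j < p.1 * p.2 j} :=
    measurableSet_lt measurable_const (measurable_fst.mul ((measurable_pi_apply j).comp measurable_snd))
  rw [Measure.prod_apply_symm hSmeas]
  have hbound : ∀ᵐ u ∂ν, rho ((fun r => (r, u)) ⁻¹' {p : ℝ × (Fin d → ℝ) | x j < p.1 * p.2 j})
      ≤ rho (Set.Ioi (x j)) := by
    have hae : ∀ᵐ u ∂ν, u ∈ Splus := by
      rw [MeasureTheory.ae_iff]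
      exact hν_supp
    filter_upwards [hae] with u hu
    have hu' := hSsub hu
    rw [Set.mem_Icc] at hu'
    have h0 : (0:ℝ) ≤ u j := hu'.1 j
    have h1 : u j ≤ 1 := hu'.2 j
    have hpre : (fun r => (r, u)) ⁻¹' {p : ℝ × (Fin d → ℝ) | x j < p.1 * p.2 j}
        = {r : ℝ | x j < r * u j} := rfl
    rw [hpre]
    have hSm : MeasurableSet {r : ℝ | x j < r * u j} :=
      measurableSet_lt measurable_const (measurable_id.mul_const _)
    have h2 : rho {r : ℝ | x j < r * u j}
        = ∫⁻ r in {r : ℝ | x j < r * u j} ∩ Set.Ioi 0, ENNReal.ofReal ((r ^ 2)⁻¹) := by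
      rw [rho, withDensity_apply _ hSm, Measure.restrict_restrict hSm]
    have h3 : rho (Set.Ioi (x j))
        = ∫⁻ r in Set.Ioi (x j), ENNReal.ofReal ((r ^ 2)⁻¹) := by
      rw [rho, withDensity_apply _ measurableSet_Ioi, Measure.restrict_restrict measurableSet_Ioi,
        Set.Ioi_inter_Ioi, max_eq_left (hx j).le]
    rw [h2, h3]
    refine lintegral_mono_set ?_
    intro r hr
    rcases hr with ⟨hr1, hr2⟩
    have hr0 : (0:ℝ) < r := hr2
    have : r * u j ≤ r := by nlinarith
    exact Set.mem_Ioi.2 (lt_of_lt_of_le hr1 this)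
  refine lt_of_le_of_lt (lintegral_mono_ae hbound) ?_
  rw [lintegral_const]
  exact ENNReal.mul_lt_top (rho_Ioi_lt_top (hx j)) (measure_lt_top ν _)

theorem stmt13
    {d : ℕ} (hd : 1 ≤ d)
    (N : (Fin d → ℝ) → ℝ)
    (hN_zero : ∀ x : Fin d → ℝ, N x = 0 ↔ x = 0)
    (hN_smul : ∀ (a : ℝ) (x : Fin d → ℝ), N (a • x) = |a| * N x)
    (hN_add : ∀ x y : Fin d → ℝ, N (x + y) ≤ N x + N y)
    (Splus : Set (Fin d → ℝ))
    (hSplus : Splus = {u : Fin d → ℝ | (∀ j, 0 ≤ u j) ∧ N u = 1})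
    (hSsub : Splus ⊆ Set.Icc (0 : Fin d → ℝ) 1)
    (ν : Measure (Fin d → ℝ)) [IsFiniteMeasure ν]
    (hν_supp : ν Splusᶜ = 0)
    (hν_mom : ∀ j : Fin d, ∫ u, u j ∂ν = 1)
    (μ : Measure (Fin d → ℝ))
    (hμ : μ = Measure.map (fun p : ℝ × (Fin d → ℝ) => p.1 • p.2)
        (((volume.restrict (Set.Ioi (0 : ℝ))).withDensity
            (fun r => ENNReal.ofReal ((r ^ 2)⁻¹))).prod ν))
    (Ω : Type) [MeasurableSpace Ω] (P : Measure Ω) [IsProbabilityMeasure P]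
    (Z : Ω → (Fin d → ℝ)) (hZ_meas : Measurable Z)
    (hZ_pos : ∀ ω j, 0 < Z ω j)
    (hZ_law : ∀ x : Fin d → ℝ, (∀ j, 0 < x j) →
        P {ω | Z ω ≤ x} = ENNReal.ofReal (Real.exp (-(μ {y | ¬ y ≤ x}).toReal)))
    (f : (Fin d → ℝ) → ℝ) (hf : Measurable f)
    (M : ℝ) (hM : ∀ x : Fin d → ℝ, (∀ j, 0 < x j) → |f x| ≤ M)
    (t : ℝ) (ht : 0 ≤ t) (x : Fin d → ℝ) (hx : ∀ j, 0 < x j) :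
    ∫ y, ((∫ ω, f (Real.exp (-t) • (x ⊔ y) ⊔ (1 - Real.exp (-t)) • Z ω) ∂P)
          - (∫ ω, f (Real.exp (-t) • x ⊔ (1 - Real.exp (-t)) • Z ω) ∂P)) ∂μ
      = Real.exp (-t) *
          ∫ ω, (∫ y, (f ((Real.exp (-t) • x ⊔ (1 - Real.exp (-t)) • Z ω) ⊔ y)
                - f (Real.exp (-t) • x ⊔ (1 - Real.exp (-t)) • Z ω)) ∂μ) ∂P := by
  have hμ' : μ = Measure.map (fun p : ℝ × (Fin d → ℝ) => p.1 • p.2) (rho.prod ν) := hμ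
  haveI : SFinite μ := by rw [hμ']; infer_instance
  set c : ℝ := Real.exp (-t) with hc_def
  have hc : 0 < c := Real.exp_pos _
  set s : ℝ := 1 - c with hs_def
  have hs : 0 ≤ s := by
    rw [hs_def]
    have : c ≤ 1 := Real.exp_le_one_iff.2 (neg_nonpos.2 ht)
    linarith
  -- positivity of the random anchor point
  have hWpos : ∀ ω (j : Fin d), 0 < (c • x ⊔ s • Z ω) j := by
    intro ω j
    have h1 : (c • x ⊔ s • Z ω) j = max (c * x j) (s * Z ω j) := rfl
    rw [h1]
    exact lt_max_of_lt_left (mul_pos hc (hx j))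
  have hsuppos : ∀ (w v : Fin d → ℝ), (∀ j, 0 < w j) → ∀ j, 0 < (w ⊔ v) j := by
    intro w v hw j
    exact lt_max_of_lt_left (hw j)
  have hMnn : 0 ≤ M := le_trans (abs_nonneg _) (hM x hx)
  -- measurability helpers
  have hWm : Measurable (fun ω => c • x ⊔ s • Z ω) := by
    apply measurable_pi_lambda
    intro j
    exact measurable_const.max (((measurable_pi_apply j).comp hZ_meas).const_mul s)
  have hbdd_int : ∀ (h : Ω → (Fin d → ℝ)), Measurable h → (∀ ω j, 0 < h ω j) →
      Integrable (fun ω => f (h ω)) P := by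
    intro h hm hp
    refine Integrable.mono' (integrable_const M) (hf.comp hm).aestronglyMeasurable ?_
    filter_upwards with ω
    rw [Real.norm_eq_abs]
    exact hM _ (hp ω)
  -- the key pointwise identity
  have hid : ∀ (y : Fin d → ℝ) (ω : Ω),
      c • (x ⊔ y) ⊔ s • Z ω = (c • x ⊔ s • Z ω) ⊔ c • y := by
    intro y ω
    funext j
    simp only [Pi.sup_apply, Pi.smul_apply, smul_eq_mul]
    rw [mul_max_of_nonneg _ _ hc.le, max_assoc, max_comm (c * y j) (s * Z ω j), ← max_assoc]
  -- step B : rewrite the integrand of the LHS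
  have hB : ∀ y : Fin d → ℝ,
      ((∫ ω, f (c • (x ⊔ y) ⊔ s • Z ω) ∂P) - (∫ ω, f (c • x ⊔ s • Z ω) ∂P))
        = ∫ ω, (f ((c • x ⊔ s • Z ω) ⊔ c • y) - f (c • x ⊔ s • Z ω)) ∂P := by
    intro y
    have h1 : Integrable (fun ω => f ((c • x ⊔ s • Z ω) ⊔ c • y)) P := by
      refine hbdd_int _ ?_ ?_
      · apply measurable_pi_lambda
        intro j
        exact ((measurable_pi_apply j).comp hWm).max measurable_const
      · intro ω j
        exact hsuppos _ _ (hWpos ω) j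
    have h2 : Integrable (fun ω => f (c • x ⊔ s • Z ω)) P := hbdd_int _ hWm hWpos
    simp_rw [hid y]
    exact (integral_sub h1 h2).symm
  calc ∫ y, ((∫ ω, f (c • (x ⊔ y) ⊔ s • Z ω) ∂P) - (∫ ω, f (c • x ⊔ s • Z ω) ∂P)) ∂μ
      = ∫ y, ∫ ω, (f ((c • x ⊔ s • Z ω) ⊔ c • y) - f (c • x ⊔ s • Z ω)) ∂P ∂μ := by
        exact integral_congr_ae (Filter.Eventually.of_forall hB)
    _ = ∫ ω, ∫ y, (f ((c • x ⊔ s • Z ω) ⊔ c • y) - f (c • x ⊔ s • Z ω)) ∂μ ∂P := by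
        apply integral_integral_swap
        -- integrability on the product measure
        have hGm : Measurable (fun p : (Fin d → ℝ) × Ω =>
            f ((c • x ⊔ s • Z p.2) ⊔ c • p.1) - f (c • x ⊔ s • Z p.2)) := by
          apply Measurable.sub
          · apply hf.comp
            apply measurable_pi_lambda
            intro j
            exact (((measurable_pi_apply j).comp (hWm.comp measurable_snd)).max
              ((measurable_pi_apply j).comp ((measurable_const_smul c).comp measurable_fst)))
          · exact hf.comp (hWm.comp measurable_snd)
        constructor
        · exact hGm.aestronglyMeasurable
        · rw [HasFiniteIntegral]
          have hbound : ∀ p : (Fin d → ℝ) × Ω,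
              (‖f ((c • x ⊔ s • Z p.2) ⊔ c • p.1) - f (c • x ⊔ s • Z p.2)‖₊ : ℝ≥0∞)
                ≤ Set.indicator ({y : Fin d → ℝ | ¬ y ≤ x} ×ˢ Set.univ)
                    (fun _ => ENNReal.ofReal (2 * M)) p := by
            intro ⟨y, ω⟩
            by_cases hy : y ≤ x
            · have hle : c • y ≤ c • x ⊔ s • Z ω := by
                refine le_trans ?_ le_sup_left
                intro j
                exact mul_le_mul_of_nonneg_left (hy j) hc.le
              have : (c • x ⊔ s • Z ω) ⊔ c • y = c • x ⊔ s • Z ω := sup_eq_left.2 hle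
              simp [this]
            · have hmem : (y, ω) ∈ ({y : Fin d → ℝ | ¬ y ≤ x} ×ˢ (Set.univ : Set Ω)) := by
                constructor
                · exact hy
                · trivial
              rw [Set.indicator_of_mem hmem]
              rw [← ENNReal.ofReal_coe_nnreal, coe_nnnorm]
              apply ENNReal.ofReal_le_ofReal
              calc ‖f ((c • x ⊔ s • Z ω) ⊔ c • y) - f (c • x ⊔ s • Z ω)‖
                  ≤ ‖f ((c • x ⊔ s • Z ω) ⊔ c • y)‖ + ‖f (c • x ⊔ s • Z ω)‖ := norm_sub_le _ _
                _ ≤ M + M := by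
                    rw [Real.norm_eq_abs, Real.norm_eq_abs]
                    exact add_le_add (hM _ (hsuppos _ _ (hWpos ω))) (hM _ (hWpos ω))
                _ = 2 * M := by ring
          have hsetc : MeasurableSet {y : Fin d → ℝ | ¬ y ≤ x} := by
            have h0 : {y : Fin d → ℝ | y ≤ x} = ⋂ j, (fun y : Fin d → ℝ => y j) ⁻¹' Set.Iic (x j) := by
              ext y; simp [Pi.le_def]
            have : MeasurableSet {y : Fin d → ℝ | y ≤ x} := by
              rw [h0]
              exact MeasurableSet.iInter fun j => (measurable_pi_apply j) measurableSet_Iic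
            exact this.compl
          refine lt_of_le_of_lt (lintegral_mono hbound) ?_
          rw [lintegral_indicator (hsetc.prod MeasurableSet.univ), setLIntegral_const,
            Measure.prod_prod, measure_univ, mul_one]
          exact ENNReal.mul_lt_top ENNReal.ofReal_lt_top
            (mu_finite Splus hSsub ν hν_supp μ hμ' x hx)
    _ = Real.exp (-t) * ∫ ω, (∫ y, (f ((c • x ⊔ s • Z ω) ⊔ y) - f (c • x ⊔ s • Z ω)) ∂μ) ∂P := by
        have hscale : ∀ w : Fin d → ℝ,
            ∫ y, (f (w ⊔ c • y) - f w) ∂μ = c * ∫ y, (f (w ⊔ y) - f w) ∂μ := by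
          intro w
          have hsupw : Measurable (fun v : Fin d → ℝ => w ⊔ v) := by
            apply measurable_pi_lambda
            intro j
            exact measurable_const.max (measurable_pi_apply j)
          have hh : Measurable (fun v : Fin d → ℝ => f (w ⊔ v) - f w) :=
            (hf.comp hsupw).sub measurable_const
          have hmapm : Measurable (fun y : Fin d → ℝ => c • y) := measurable_const_smul c
          calc ∫ y, (f (w ⊔ c • y) - f w) ∂μ
              = ∫ v, (f (w ⊔ v) - f w) ∂(μ.map (fun y => c • y)) := by
                rw [integral_map hmapm.aemeasurable hh.aestronglyMeasurable]
            _ = ∫ v, (f (w ⊔ v) - f w) ∂(ENNReal.ofReal c • μ) := by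
                rw [map_mu ν μ hμ' hc]
            _ = c * ∫ v, (f (w ⊔ v) - f w) ∂μ := by
                rw [integral_smul_measure, ENNReal.toReal_ofReal hc.le, smul_eq_mul]
        rw [← hc_def, ← integral_const_mul]
        exact integral_congr_ae (Filter.Eventually.of_forall fun ω => hscale _)
end

section
/- Let f, g ∈ C¹(E₀*) be log-Lipschitz. Then for every x ∈ E₀* the integrals below converge absolutely and the pseudo Leibniz rule holds: ∫_{E₀} (f(x⊕y)g(x⊕y) − f(x)g(x)) dμ(y) = g(x) ∫_{E₀} (f(x⊕y) − f(x)) dμ(y) + f(x) ∫_{E₀} (g(x⊕y) − g(x)) dμ(y) + ∫_{E₀} (f(x⊕y) − f(x))(g(x⊕y) − g(x)) dμ(y). -/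
open MeasureTheory Filter Real

lemma isOpen_pos_orthant {d : ℕ} : IsOpen {x : Fin d → ℝ | ∀ j, 0 < x j} := by
  have : {x : Fin d → ℝ | ∀ j, 0 < x j} = ⋂ j, (fun x : Fin d → ℝ => x j) ⁻¹' Set.Ioi 0 := by
    ext x; simp [Set.mem_iInter]
  rw [this]
  exact isOpen_iInter_of_finite fun j => (continuous_apply j).isOpen_preimage _ isOpen_Ioi

lemma logLip_bound {d : ℕ} {f : (Fin d → ℝ) → ℝ} {C : ℝ}
    (hf : ContDiffOn ℝ 1 f {x : Fin d → ℝ | ∀ j, 0 < x j})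
    (hC : ∀ x : Fin d → ℝ, (∀ j, 0 < x j) → ∀ j, x j * |fderiv ℝ f x (Pi.single j 1)| ≤ C)
    {x z : Fin d → ℝ} (hx : ∀ j, 0 < x j) (hz : ∀ j, x j ≤ z j) :
    |f z - f x| ≤ C * ∑ j, Real.log (z j / x j) := by
  set L : Fin d → ℝ := fun j => Real.log (z j / x j) with hL
  have hzpos : ∀ j, 0 < z j := fun j => (hx j).trans_le (hz j)
  have hL0 : ∀ j, 0 ≤ L j := fun j =>
    Real.log_nonneg ((one_le_div (hx j)).2 (hz j))
  set γ : ℝ → (Fin d → ℝ) := fun t j => x j * Real.exp (t * L j) with hγ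
  have γpos : ∀ t j, 0 < γ t j := fun t j => mul_pos (hx j) (Real.exp_pos _)
  have γ0 : γ 0 = x := by funext j; simp [hγ]
  have γ1 : γ 1 = z := by
    funext j
    simp only [hγ, one_mul, hL]
    rw [Real.exp_log (div_pos (hzpos j) (hx j)), mul_div_assoc']
    exact mul_div_cancel_left₀ _ (hx j).ne'
  have hγderiv : ∀ t : ℝ, HasDerivAt γ (fun j => γ t j * L j) t := by
    intro t
    rw [hasDerivAt_pi]
    intro j
    have h1 : HasDerivAt (fun s : ℝ => s * L j) (L j) t := hasDerivAt_mul_const _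
    have h2 := h1.exp
    have h3 := h2.const_mul (x j)
    convert h3 using 1
    · rfl
    · show x j * Real.exp (t * L j) * L j = _; ring
  have hdiff : ∀ t : ℝ, DifferentiableAt ℝ f (γ t) := fun t =>
    (hf.differentiableOn one_ne_zero).differentiableAt (isOpen_pos_orthant.mem_nhds (γpos t))
  have hcomp : ∀ t : ℝ, HasDerivAt (f ∘ γ)
      ((fderiv ℝ f (γ t)) (fun j => γ t j * L j)) t := fun t =>
    (hdiff t).hasFDerivAt.comp_hasDerivAt t (hγderiv t)
  have hbd : ∀ t : ℝ, ‖(fderiv ℝ f (γ t)) (fun j => γ t j * L j)‖ ≤ C * ∑ j, L j := by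
    intro t
    set D := fderiv ℝ f (γ t) with hD
    have hsingle : ∀ i : Fin d, (fun j' => if i = j' then (1:ℝ) else 0) = Pi.single i 1 := by
      intro i; funext j'; simp [Pi.single_apply, eq_comm]
    have hv : (fun j => γ t j * L j) = ∑ i, (γ t i * L i) • (Pi.single i 1 : Fin d → ℝ) := by
      conv_lhs => rw [pi_eq_sum_univ (fun j => γ t j * L j)]
      exact Finset.sum_congr rfl fun i _ => by rw [hsingle i]
    rw [hv, map_sum]
    simp only [_root_.map_smul, smul_eq_mul]
    refine (norm_sum_le _ _).trans ?_
    calc ∑ j, ‖γ t j * L j * D (Pi.single j 1)‖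
        ≤ ∑ j, L j * C := by
          refine Finset.sum_le_sum fun j _ => ?_
          rw [Real.norm_eq_abs, abs_mul, abs_of_nonneg (mul_nonneg (γpos t j).le (hL0 j))]
          calc γ t j * L j * |D (Pi.single j 1)|
              = L j * (γ t j * |D (Pi.single j 1)|) := by ring
            _ ≤ L j * C := by
                exact mul_le_mul_of_nonneg_left (hC (γ t) (γpos t) j) (hL0 j)
      _ = C * ∑ j, L j := by rw [Finset.mul_sum]; exact Finset.sum_congr rfl fun j _ => mul_comm _ _
  have := norm_image_sub_le_of_norm_deriv_le_segment_01'
    (f := f ∘ γ) (f' := fun t => (fderiv ℝ f (γ t)) (fun j => γ t j * L j))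
    (fun t _ => (hcomp t).hasDerivWithinAt) (fun t _ => hbd t)
  simpa [γ0, γ1, Real.norm_eq_abs] using this
open MeasureTheory Filter Real Set

lemma key_integrable {d : ℕ} (Splus : Set (Fin d → ℝ))
    (ν : Measure (Fin d → ℝ)) [IsFiniteMeasure ν] (hν_supp : ν Splusᶜ = 0)
    (F : (Fin d → ℝ) → ℝ) (hF : Continuous F)
    {m A B : ℝ} (hm : 0 < m) (hA : 0 ≤ A) (hB : 0 ≤ B)
    (hzero : ∀ r : ℝ, 0 < r → r ≤ m → ∀ u ∈ Splus, F (r • u) = 0)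
    (hbound : ∀ r : ℝ, 0 < r → ∀ u ∈ Splus,
      |F (r • u)| ≤ A * Real.log (1 + r / m) + B * (Real.log (1 + r / m))^2) :
    Integrable F (Measure.map (fun p : ℝ × (Fin d → ℝ) => p.1 • p.2)
        (((volume.restrict (Set.Ioi (0 : ℝ))).withDensity
            (fun r => ENNReal.ofReal ((r ^ 2)⁻¹))).prod ν)) := by
  set ρ := (volume.restrict (Set.Ioi (0 : ℝ))).withDensity
      (fun r => ENNReal.ofReal ((r ^ 2)⁻¹)) with hρ
  have hT : Continuous (fun p : ℝ × (Fin d → ℝ) => p.1 • p.2) :=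
    continuous_fst.smul continuous_snd
  rw [integrable_map_measure hF.aestronglyMeasurable hT.measurable.aemeasurable]
  set ψ : ℝ → ℝ := fun r => if r ≤ m then 0
      else A * Real.log (1 + r / m) + B * (Real.log (1 + r / m))^2 with hψ
  have hlog0 : ∀ r : ℝ, 0 < r → 0 ≤ Real.log (1 + r / m) := fun r hr =>
    Real.log_nonneg (by nlinarith [div_nonneg hr.le hm.le])
  have hψm : Measurable ψ := by
    refine Measurable.ite measurableSet_Iic measurable_const (Measurable.add ?_ ?_)
    · exact (Real.measurable_log.comp (measurable_const.add (measurable_id.div_const m))).const_mul A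
    · exact ((Real.measurable_log.comp
        (measurable_const.add (measurable_id.div_const m))).pow_const 2).const_mul B
  set K : ℝ := 4 * (2/m) ^ ((4:ℝ)⁻¹) with hKdef
  have hK0 : 0 < K := by positivity
  have hint : Integrable ψ ρ := by
    rw [hρ, integrable_withDensity_iff (f := fun r : ℝ => ENNReal.ofReal ((r ^ 2)⁻¹)) ((measurable_id'.pow_const 2).inv.ennreal_ofReal)
      (Eventually.of_forall fun r => ENNReal.ofReal_lt_top)]
    have hto : ∀ r : ℝ, (ENNReal.ofReal ((r^2)⁻¹)).toReal = (r^2)⁻¹ := fun r =>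
      ENNReal.toReal_ofReal (by positivity)
    simp_rw [hto]
    have hsplit : Set.Ioi (0:ℝ) = Set.Ioc 0 m ∪ Set.Ioi m := (Set.Ioc_union_Ioi_eq_Ioi hm.le).symm
    show IntegrableOn _ _ _
    rw [hsplit, integrableOn_union]
    constructor
    · refine (integrableOn_zero).congr_fun (fun r hr => ?_) measurableSet_Ioc
      simp [hψ, hr.2]
    · have hgi : IntegrableOn
          (fun r => A*K* r ^ (-(7:ℝ)/4) + B*K^2 * r ^ (-(3:ℝ)/2)) (Set.Ioi m) :=
        ((integrableOn_Ioi_rpow_of_lt (by norm_num) hm).const_mul _).add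
          ((integrableOn_Ioi_rpow_of_lt (by norm_num) hm).const_mul _)
      refine hgi.mono' ((hψm.mul ((measurable_id'.pow_const 2).inv)).aestronglyMeasurable) ?_
      filter_upwards [ae_restrict_mem measurableSet_Ioi] with r hr
      have hrm : m < r := hr
      have hr0 : 0 < r := hm.trans hrm
      set t := Real.log (1 + r/m) with ht
      have ht0 : 0 ≤ t := hlog0 r hr0
      have htle : t ≤ K * r ^ ((4:ℝ)⁻¹) := by
        have h1 : t ≤ (1 + r/m) ^ ((4:ℝ)⁻¹) / 4⁻¹ :=
          Real.log_le_rpow_div (by positivity) (by norm_num)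
        have h2 : (1 + r/m) ≤ 2/m * r := by
          have h1m : (1:ℝ) ≤ r/m := (one_le_div hm).2 hrm.le
          calc 1 + r/m ≤ r/m + r/m := by linarith
            _ = 2/m*r := by ring
        have h3 : (1 + r/m) ^ ((4:ℝ)⁻¹) ≤ (2/m*r) ^ ((4:ℝ)⁻¹) :=
          Real.rpow_le_rpow (by positivity) h2 (by norm_num)
        have h4 : (2/m*r) ^ ((4:ℝ)⁻¹) = (2/m)^((4:ℝ)⁻¹) * r ^ ((4:ℝ)⁻¹) :=
          Real.mul_rpow (by positivity) hr0.le
        rw [div_inv_eq_mul] at h1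
        calc t ≤ (1+r/m)^((4:ℝ)⁻¹)*4 := h1
          _ ≤ ((2/m)^((4:ℝ)⁻¹) * r^((4:ℝ)⁻¹)) * 4 :=
            mul_le_mul_of_nonneg_right (h4 ▸ h3) (by norm_num)
          _ = K * r^((4:ℝ)⁻¹) := by rw [hKdef]; ring
      have hrpnn : (0:ℝ) ≤ r ^ ((4:ℝ)⁻¹) := Real.rpow_nonneg hr0.le _
      have hsq : (r ^ ((4:ℝ)⁻¹))^2 = r ^ ((2:ℝ)⁻¹) := by
        rw [← Real.rpow_natCast (r ^ ((4:ℝ)⁻¹)) 2, ← Real.rpow_mul hr0.le]; norm_num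
      have hr2 : ((r:ℝ)^2)⁻¹ = r ^ (-(2:ℝ)) := by
        rw [← Real.rpow_natCast r 2]; exact (Real.rpow_neg hr0.le 2).symm
      have e1 : r ^ ((4:ℝ)⁻¹) * r ^ (-(2:ℝ)) = r ^ (-(7:ℝ)/4) := by
        rw [← Real.rpow_add hr0]; norm_num
      have e2 : r ^ ((2:ℝ)⁻¹) * r ^ (-(2:ℝ)) = r ^ (-(3:ℝ)/2) := by
        rw [← Real.rpow_add hr0]; norm_num
      have hψr : ψ r = A * t + B * t^2 := by
        rw [hψ]; simp [not_le.2 hrm, ht]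
      have hψnn : 0 ≤ ψ r := by
        rw [hψr]; positivity
      rw [Real.norm_eq_abs, abs_mul, abs_of_nonneg hψnn, abs_of_nonneg (by positivity : (0:ℝ) ≤ ((r:ℝ)^2)⁻¹)]
      calc ψ r * (r^2)⁻¹
          ≤ (A*(K*r^((4:ℝ)⁻¹)) + B*(K*r^((4:ℝ)⁻¹))^2) * (r^2)⁻¹ := by
            refine mul_le_mul_of_nonneg_right ?_ (by positivity)
            rw [hψr]
            have hsqle : t^2 ≤ (K*r^((4:ℝ)⁻¹))^2 := by
              have := mul_self_le_mul_self ht0 htle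
              simpa [pow_two] using this
            nlinarith [mul_le_mul_of_nonneg_left htle hA, mul_le_mul_of_nonneg_left hsqle hB]
        _ = A*K*(r^((4:ℝ)⁻¹) * r^(-(2:ℝ))) + B*K^2*((r^((4:ℝ)⁻¹))^2 * r^(-(2:ℝ))) := by
            rw [hr2]; ring
        _ = A*K* r ^ (-(7:ℝ)/4) + B*K^2 * r ^ (-(3:ℝ)/2) := by rw [hsq, e1, e2]
  have hprod : Integrable (fun p : ℝ × (Fin d → ℝ) => ψ p.1) (ρ.prod ν) := by
    have := hint.mul_prod (integrable_const (1:ℝ) (μ := ν))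
    simpa using this
  have hae1 : ∀ᵐ p : ℝ × (Fin d → ℝ) ∂ρ.prod ν, 0 < p.1 := by
    rw [ae_iff]
    have hρ0 : ρ (Set.Ioi (0:ℝ))ᶜ = 0 := by
      rw [hρ, withDensity_apply _ measurableSet_Ioi.compl]
      exact setLIntegral_measure_zero _ _
        (by rw [Measure.restrict_apply measurableSet_Ioi.compl, Set.compl_inter_self]; simp)
    have hset : {p : ℝ × (Fin d → ℝ) | ¬ 0 < p.1} = (Set.Ioi (0:ℝ))ᶜ ×ˢ Set.univ := by
      ext p; simp [Set.mem_prod]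
    rw [hset, Measure.prod_prod, hρ0, zero_mul]
  have hae2 : ∀ᵐ p : ℝ × (Fin d → ℝ) ∂ρ.prod ν, p.2 ∈ Splus := by
    rw [ae_iff]
    have hset : {p : ℝ × (Fin d → ℝ) | ¬ p.2 ∈ Splus} = Set.univ ×ˢ Splusᶜ := by
      ext p; simp [Set.mem_prod]
    rw [hset, Measure.prod_prod, hν_supp, mul_zero]
  refine hprod.mono' (hF.comp hT).aestronglyMeasurable ?_
  filter_upwards [hae1, hae2] with p hp1 hp2
  show ‖F (p.1 • p.2)‖ ≤ ψ p.1
  by_cases h : p.1 ≤ m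
  · rw [hzero p.1 hp1 h p.2 hp2]; simp [hψ, h]
  · have := hbound p.1 hp1 p.2 hp2
    rw [Real.norm_eq_abs]
    simpa [hψ, h] using this

theorem stmt15
    {d : ℕ} (hd : 1 ≤ d)
    (N : (Fin d → ℝ) → ℝ)
    (hN_zero : ∀ x : Fin d → ℝ, N x = 0 ↔ x = 0)
    (hN_smul : ∀ (a : ℝ) (x : Fin d → ℝ), N (a • x) = |a| * N x)
    (hN_add : ∀ x y : Fin d → ℝ, N (x + y) ≤ N x + N y)
    (Splus : Set (Fin d → ℝ))
    (hSplus : Splus = {u : Fin d → ℝ | (∀ j, 0 ≤ u j) ∧ N u = 1})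
    (hSsub : Splus ⊆ Set.Icc (0 : Fin d → ℝ) 1)
    (ν : Measure (Fin d → ℝ)) [IsFiniteMeasure ν]
    (hν_supp : ν Splusᶜ = 0)
    (hν_mom : ∀ j : Fin d, ∫ u, u j ∂ν = 1)
    (μ : Measure (Fin d → ℝ))
    (hμ : μ = Measure.map (fun p : ℝ × (Fin d → ℝ) => p.1 • p.2)
        (((volume.restrict (Set.Ioi (0 : ℝ))).withDensity
            (fun r => ENNReal.ofReal ((r ^ 2)⁻¹))).prod ν))
    (f g : (Fin d → ℝ) → ℝ)
    (hf : ContDiffOn ℝ 1 f {x : Fin d → ℝ | ∀ j, 0 < x j})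
    (hg : ContDiffOn ℝ 1 g {x : Fin d → ℝ | ∀ j, 0 < x j})
    (hfC : ∃ C > (0 : ℝ), ∀ x : Fin d → ℝ, (∀ j, 0 < x j) →
        ∀ j, x j * |fderiv ℝ f x (Pi.single j 1)| ≤ C)
    (hgC : ∃ C > (0 : ℝ), ∀ x : Fin d → ℝ, (∀ j, 0 < x j) →
        ∀ j, x j * |fderiv ℝ g x (Pi.single j 1)| ≤ C)
    (x : Fin d → ℝ) (hx : ∀ j, 0 < x j) :
    Integrable (fun y => f (x ⊔ y) * g (x ⊔ y) - f x * g x) μ ∧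
    Integrable (fun y => f (x ⊔ y) - f x) μ ∧
    Integrable (fun y => g (x ⊔ y) - g x) μ ∧
    Integrable (fun y => (f (x ⊔ y) - f x) * (g (x ⊔ y) - g x)) μ ∧
    ∫ y, (f (x ⊔ y) * g (x ⊔ y) - f x * g x) ∂μ
      = g x * (∫ y, (f (x ⊔ y) - f x) ∂μ) + f x * (∫ y, (g (x ⊔ y) - g x) ∂μ)
        + ∫ y, (f (x ⊔ y) - f x) * (g (x ⊔ y) - g x) ∂μ := by
  subst hμ
  haveI : Nonempty (Fin d) := Fin.pos_iff_nonempty.mp hd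
  obtain ⟨Cf, hCf0, hCf⟩ := hfC
  obtain ⟨Cg, hCg0, hCg⟩ := hgC
  set m : ℝ := Finset.univ.inf' Finset.univ_nonempty x with hmdef
  have hm : 0 < m := (Finset.lt_inf'_iff _).2 fun j _ => hx j
  have hmle : ∀ j, m ≤ x j := fun j => Finset.inf'_le _ (Finset.mem_univ j)
  -- continuity
  have hsupc : Continuous (fun y : Fin d → ℝ => x ⊔ y) :=
    continuous_pi fun j => continuous_const.sup (continuous_apply j)
  have hmem : ∀ y : Fin d → ℝ, (x ⊔ y) ∈ {p : Fin d → ℝ | ∀ j, 0 < p j} := fun y j =>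
    (hx j).trans_le le_sup_left
  have hfc : Continuous (fun y : Fin d → ℝ => f (x ⊔ y)) :=
    (hf.continuousOn).comp_continuous hsupc hmem
  have hgc : Continuous (fun y : Fin d → ℝ => g (x ⊔ y)) :=
    (hg.continuousOn).comp_continuous hsupc hmem
  -- basic facts for r > 0, u ∈ Splus
  have husup : ∀ (r : ℝ), 0 ≤ r → ∀ u ∈ Splus, r ≤ m → x ⊔ r • u = x := by
    intro r hr u hu hrm
    refine sup_eq_left.2 ?_
    intro j
    have hu1 : u j ≤ 1 := (hSsub hu).2 j
    have hu0 : 0 ≤ u j := (hSsub hu).1 j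
    calc (r • u) j = r * u j := rfl
      _ ≤ r * 1 := mul_le_mul_of_nonneg_left hu1 hr
      _ = r := mul_one r
      _ ≤ m := hrm
      _ ≤ x j := hmle j
  have hsumlog : ∀ (r : ℝ), 0 < r → ∀ u ∈ Splus,
      (0 ≤ ∑ j, Real.log ((x ⊔ r • u) j / x j)) ∧
      (∑ j, Real.log ((x ⊔ r • u) j / x j)) ≤ (d : ℝ) * Real.log (1 + r / m) := by
    intro r hr u hu
    have hxz : ∀ j, x j ≤ (x ⊔ r • u) j := fun j => le_sup_left
    have hzpos : ∀ j, 0 < (x ⊔ r • u) j := fun j => (hx j).trans_le (hxz j)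
    have hlog0 : ∀ j, 0 ≤ Real.log ((x ⊔ r • u) j / x j) := fun j =>
      Real.log_nonneg ((one_le_div (hx j)).2 (hxz j))
    constructor
    · exact Finset.sum_nonneg fun j _ => hlog0 j
    · have hb : ∀ j, Real.log ((x ⊔ r • u) j / x j) ≤ Real.log (1 + r / m) := by
        intro j
        have hu1 : u j ≤ 1 := (hSsub hu).2 j
        have hz_le : (x ⊔ r • u) j ≤ x j + r := by
          refine sup_le (by linarith) ?_
          calc r * u j ≤ r * 1 := mul_le_mul_of_nonneg_left hu1 hr.le
            _ = r := mul_one r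
            _ ≤ x j + r := by linarith [hx j]
        have hdiv : (x ⊔ r • u) j / x j ≤ 1 + r / m := by
          rw [div_le_iff₀ (hx j)]
          have h1 : r / x j ≤ r / m := div_le_div_of_nonneg_left hr.le hm (hmle j)
          have : (1 + r / m) * x j = x j + (r / m) * x j := by ring
          rw [this]
          have h2 : r ≤ (r / m) * x j := by
            rw [div_mul_eq_mul_div, le_div_iff₀ hm]
            exact mul_le_mul_of_nonneg_left (hmle j) hr.le
          linarith [hz_le]
        exact Real.log_le_log (div_pos (hzpos j) (hx j)) hdiv
      calc (∑ j, Real.log ((x ⊔ r • u) j / x j))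
          ≤ ∑ _j : Fin d, Real.log (1 + r / m) := Finset.sum_le_sum fun j _ => hb j
        _ = (d : ℝ) * Real.log (1 + r / m) := by
            rw [Finset.sum_const, Finset.card_univ, Fintype.card_fin, nsmul_eq_mul]
  have hfb : ∀ (r : ℝ), 0 < r → ∀ u ∈ Splus,
      |f (x ⊔ r • u) - f x| ≤ Cf * ∑ j, Real.log ((x ⊔ r • u) j / x j) := by
    intro r hr u hu
    exact logLip_bound hf hCf hx (fun j => le_sup_left)
  have hgb : ∀ (r : ℝ), 0 < r → ∀ u ∈ Splus,
      |g (x ⊔ r • u) - g x| ≤ Cg * ∑ j, Real.log ((x ⊔ r • u) j / x j) := by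
    intro r hr u hu
    exact logLip_bound hg hCg hx (fun j => le_sup_left)
  -- the three integrabilities via key_integrable
  have hI1 : Integrable (fun y => f (x ⊔ y) - f x)
      (Measure.map (fun p : ℝ × (Fin d → ℝ) => p.1 • p.2)
        (((volume.restrict (Set.Ioi (0 : ℝ))).withDensity
            (fun r => ENNReal.ofReal ((r ^ 2)⁻¹))).prod ν)) := by
    refine key_integrable Splus ν hν_supp _ (hfc.sub continuous_const) hm
      (A := Cf * d) (B := 0) (by positivity) le_rfl ?_ ?_
    · intro r hr hrm u hu
      rw [husup r hr.le u hu hrm]; ring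
    · intro r hr u hu
      obtain ⟨h0, hle⟩ := hsumlog r hr u hu
      calc |f (x ⊔ r • u) - f x| ≤ Cf * ∑ j, Real.log ((x ⊔ r • u) j / x j) := hfb r hr u hu
        _ ≤ Cf * ((d:ℝ) * Real.log (1 + r / m)) := mul_le_mul_of_nonneg_left hle hCf0.le
        _ = Cf * d * Real.log (1 + r / m) + 0 * (Real.log (1 + r / m))^2 := by ring
  have hI2 : Integrable (fun y => g (x ⊔ y) - g x)
      (Measure.map (fun p : ℝ × (Fin d → ℝ) => p.1 • p.2)
        (((volume.restrict (Set.Ioi (0 : ℝ))).withDensity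
            (fun r => ENNReal.ofReal ((r ^ 2)⁻¹))).prod ν)) := by
    refine key_integrable Splus ν hν_supp _ (hgc.sub continuous_const) hm
      (A := Cg * d) (B := 0) (by positivity) le_rfl ?_ ?_
    · intro r hr hrm u hu
      rw [husup r hr.le u hu hrm]; ring
    · intro r hr u hu
      obtain ⟨h0, hle⟩ := hsumlog r hr u hu
      calc |g (x ⊔ r • u) - g x| ≤ Cg * ∑ j, Real.log ((x ⊔ r • u) j / x j) := hgb r hr u hu
        _ ≤ Cg * ((d:ℝ) * Real.log (1 + r / m)) := mul_le_mul_of_nonneg_left hle hCg0.le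
        _ = Cg * d * Real.log (1 + r / m) + 0 * (Real.log (1 + r / m))^2 := by ring
  have hI3 : Integrable (fun y => (f (x ⊔ y) - f x) * (g (x ⊔ y) - g x))
      (Measure.map (fun p : ℝ × (Fin d → ℝ) => p.1 • p.2)
        (((volume.restrict (Set.Ioi (0 : ℝ))).withDensity
            (fun r => ENNReal.ofReal ((r ^ 2)⁻¹))).prod ν)) := by
    refine key_integrable Splus ν hν_supp _
      ((hfc.sub continuous_const).mul (hgc.sub continuous_const)) hm
      (A := 0) (B := Cf * Cg * (d:ℝ)^2) le_rfl (by positivity) ?_ ?_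
    · intro r hr hrm u hu
      rw [husup r hr.le u hu hrm]; ring
    · intro r hr u hu
      obtain ⟨h0, hle⟩ := hsumlog r hr u hu
      have h1 := hfb r hr u hu
      have h2 := hgb r hr u hu
      have hl0 : 0 ≤ Real.log (1 + r / m) := by
        refine Real.log_nonneg ?_
        have : 0 ≤ r / m := div_nonneg hr.le hm.le
        linarith
      rw [abs_mul]
      calc |f (x ⊔ r • u) - f x| * |g (x ⊔ r • u) - g x|
          ≤ (Cf * ((d:ℝ) * Real.log (1 + r / m))) * (Cg * ((d:ℝ) * Real.log (1 + r / m))) := by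
            refine mul_le_mul (h1.trans (mul_le_mul_of_nonneg_left hle hCf0.le))
              (h2.trans (mul_le_mul_of_nonneg_left hle hCg0.le)) (abs_nonneg _) (by positivity)
        _ = 0 * Real.log (1 + r / m) + Cf * Cg * (d:ℝ)^2 * (Real.log (1 + r / m))^2 := by ring
  have hkey : (fun y => f (x ⊔ y) * g (x ⊔ y) - f x * g x)
      = fun y => (g x * (f (x ⊔ y) - f x) + f x * (g (x ⊔ y) - g x))
          + (f (x ⊔ y) - f x) * (g (x ⊔ y) - g x) := by
    funext y; ring
  have hI0 : Integrable (fun y => f (x ⊔ y) * g (x ⊔ y) - f x * g x)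
      (Measure.map (fun p : ℝ × (Fin d → ℝ) => p.1 • p.2)
        (((volume.restrict (Set.Ioi (0 : ℝ))).withDensity
            (fun r => ENNReal.ofReal ((r ^ 2)⁻¹))).prod ν)) := by
    rw [hkey]
    exact ((hI1.const_mul _).add (hI2.const_mul _)).add hI3
  refine ⟨hI0, hI1, hI2, hI3, ?_⟩
  have hI12 : Integrable (fun y => g x * (f (x ⊔ y) - f x) + f x * (g (x ⊔ y) - g x))
      (Measure.map (fun p : ℝ × (Fin d → ℝ) => p.1 • p.2)
        (((volume.restrict (Set.Ioi (0 : ℝ))).withDensity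
            (fun r => ENNReal.ofReal ((r ^ 2)⁻¹))).prod ν)) :=
    (hI1.const_mul (g x)).add (hI2.const_mul (f x))
  rw [hkey, integral_add hI12 hI3, integral_add (hI1.const_mul (g x)) (hI2.const_mul (f x)),
    integral_const_mul, integral_const_mul]
end
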